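/- arXiv:2206.05177 — 5 statements merged into one kernel-verified Lean document; each statement's English description precedes it below -/
import Mathlib

section
/- The Hecke algebra generators T_i acting on polynomials satisfy the braid relation T_i T_{i+1} T_i = T_{i+1} T_i T_{i+1}, and T_i T_j = T_j T_i whenever |i − j| > 1. -/
/-!
Write `T_i g = heckeStep t x_i x_{i+1} g (K_{i,i+1} g)`, where `heckeStep t u v g g'` is the
rational expression `t g + (t u − v)/(u − v) (g' − g)`. The swaps act on rational functions
by ring automorphisms, which commute with `heckeStep`, so expanding either side of a relation
produces `heckeStep` applied to the images of `f` under the words in the swaps. Those words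
coincide on both sides (the symmetric group satisfies the same relations), and what remains
is an identity of rational functions in `x_i, x_{i+1}, x_{i+2}` with the translates of `f`
as free variables.
-/
noncomputable section

open MvPolynomial

/-- The field of rational functions in the variables `x_1, …, x_N` over `K`. -/
abbrev FF (K : Type*) [Field K] (N : ℕ) := FractionRing (MvPolynomial (Fin N) K)

/-- The variable `x_i` viewed in the fraction field. -/
def XX {K : Type*} [Field K] {N : ℕ} (i : Fin N) : FF K N :=
  algebraMap (MvPolynomial (Fin N) K) (FF K N) (X i)

/-- A scalar `t ∈ K` viewed in the fraction field. -/
def CC (K : Type*) [Field K] (N : ℕ) (t : K) : FF K N :=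
  algebraMap (MvPolynomial (Fin N) K) (FF K N) (C t)

/-- The operator `K_{i,j}` exchanging the variables `x_i` and `x_j`, extended to
rational functions. -/
def swapVars {K : Type*} [Field K] {N : ℕ} (i j : Fin N) : FF K N →+* FF K N :=
  IsFractionRing.lift
    (g := (algebraMap (MvPolynomial (Fin N) K) (FF K N)).comp
      (rename (Equiv.swap i j)).toRingHom)
    (by
      exact (IsFractionRing.injective (MvPolynomial (Fin N) K) (FF K N)).comp
        (rename_injective _ (Equiv.swap i j).injective))

/-- The Hecke algebra generator
`T_i f = t f + ((t x_i − x_{i+1})/(x_i − x_{i+1})) (K_{i,i+1} f − f)`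
(here with general pair of indices `i`, `j` playing the roles of `i`, `i+1`). -/
def TOp {K : Type*} [Field K] {N : ℕ} (t : K) (i j : Fin N) (f : FF K N) : FF K N :=
  CC K N t * f + ((CC K N t * XX i - XX j) / (XX i - XX j)) * (swapVars i j f - f)

section HeckeStep

variable {F : Type*} [Field F]

def heckeStep (t u v g g' : F) : F :=
  t * g + (t * u - v) / (u - v) * (g' - g)

theorem map_heckeStep {F' : Type*} [Field F'] (φ : F →+* F') (t u v g g' : F) :
    φ (heckeStep t u v g g') = heckeStep (φ t) (φ u) (φ v) (φ g) (φ g') := by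
  simp [heckeStep, map_div₀]

theorem heckeStep_comm (t x y z w f f₁ f₂ f₁₂ : F) :
    heckeStep t x y (heckeStep t z w f f₂) (heckeStep t z w f₁ f₁₂)
      = heckeStep t z w (heckeStep t x y f f₁) (heckeStep t x y f₂ f₁₂) := by
  unfold heckeStep
  ring

theorem heckeStep_braid (t x y z f f₁ f₂ f₁₂ f₂₁ f₁₂₁ : F) (hxy : x ≠ y) (hyz : y ≠ z)
    (hxz : x ≠ z) :
    heckeStep t x y (heckeStep t y z (heckeStep t x y f f₁) (heckeStep t x z f₂ f₂₁))
        (heckeStep t x z (heckeStep t y x f₁ f) (heckeStep t y z f₁₂ f₁₂₁))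
      = heckeStep t y z (heckeStep t x y (heckeStep t y z f f₂) (heckeStep t x z f₁ f₁₂))
        (heckeStep t x z (heckeStep t z y f₂ f) (heckeStep t x y f₂₁ f₁₂₁)) := by
  unfold heckeStep
  field_simp
  ring

end HeckeStep

section Swaps

variable {K : Type*} [Field K] {N : ℕ}

def permVars (σ : Equiv.Perm (Fin N)) : FF K N →+* FF K N :=
  IsFractionRing.lift
    (g := (algebraMap (MvPolynomial (Fin N) K) (FF K N)).comp (rename σ).toRingHom)
    ((IsFractionRing.injective (MvPolynomial (Fin N) K) (FF K N)).comp
      (rename_injective _ σ.injective))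

theorem swapVars_eq_permVars (i j : Fin N) :
    (swapVars i j : FF K N →+* FF K N) = permVars (Equiv.swap i j) :=
  rfl

theorem permVars_algebraMap (σ : Equiv.Perm (Fin N)) (p : MvPolynomial (Fin N) K) :
    permVars σ (algebraMap _ (FF K N) p) = algebraMap _ (FF K N) (rename σ p) :=
  IsFractionRing.lift_algebraMap _ p

theorem permVars_one (f : FF K N) : permVars 1 f = f := by
  have : (permVars 1 : FF K N →+* FF K N) = RingHom.id _ :=
    IsFractionRing.ringHom_ext (A := MvPolynomial (Fin N) K) fun p ↦ by
      simp [permVars_algebraMap, Equiv.Perm.coe_one, rename_id]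
  rw [this, RingHom.id_apply]

theorem permVars_mul (σ τ : Equiv.Perm (Fin N)) (f : FF K N) :
    permVars (σ * τ) f = permVars σ (permVars τ f) := by
  have : (permVars (σ * τ) : FF K N →+* FF K N) = (permVars σ).comp (permVars τ) :=
    IsFractionRing.ringHom_ext (A := MvPolynomial (Fin N) K) fun p ↦ by
      simp [permVars_algebraMap, rename_rename, Equiv.Perm.coe_mul]
  rw [this, RingHom.comp_apply]

theorem swapVars_swapVars_self (i j : Fin N) (f : FF K N) :
    swapVars i j (swapVars i j f) = f := by
  rw [swapVars_eq_permVars, ← permVars_mul, Equiv.swap_mul_self, permVars_one]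

theorem swapVars_braid {a b c : Fin N} (hab : a ≠ b) (hbc : b ≠ c) (hac : a ≠ c) (f : FF K N) :
    swapVars a b (swapVars b c (swapVars a b f))
      = swapVars b c (swapVars a b (swapVars b c f)) := by
  simp only [swapVars_eq_permVars, ← permVars_mul]
  suffices h : Equiv.swap a b * (Equiv.swap b c * Equiv.swap a b)
      = Equiv.swap b c * (Equiv.swap a b * Equiv.swap b c) by rw [h]
  ext x
  simp only [Equiv.Perm.mul_apply, Equiv.swap_apply_def]
  split_ifs <;> simp_all

theorem swapVars_comm {a b c d : Fin N} (hac : a ≠ c) (had : a ≠ d) (hbc : b ≠ c)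
    (hbd : b ≠ d) (f : FF K N) :
    swapVars a b (swapVars c d f) = swapVars c d (swapVars a b f) := by
  simp only [swapVars_eq_permVars, ← permVars_mul]
  suffices h : Equiv.swap a b * Equiv.swap c d = Equiv.swap c d * Equiv.swap a b by rw [h]
  have : Equiv.swap (Equiv.swap c d a) (Equiv.swap c d b) = Equiv.swap a b := by
    rw [Equiv.swap_apply_of_ne_of_ne hac had, Equiv.swap_apply_of_ne_of_ne hbc hbd]
  rw [Equiv.swap_apply_apply, mul_inv_eq_iff_eq_mul] at this
  exact this.symm

theorem swapVars_XX (i j k : Fin N) : swapVars i j (XX k : FF K N) = XX (Equiv.swap i j k) := by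
  simp [XX, swapVars_eq_permVars, permVars_algebraMap]

theorem swapVars_CC (i j : Fin N) (t : K) : swapVars i j (CC K N t) = CC K N t := by
  simp [CC, swapVars_eq_permVars, permVars_algebraMap]

theorem XX_injective : Function.Injective (XX : Fin N → FF K N) :=
  (IsFractionRing.injective (MvPolynomial (Fin N) K) (FF K N)).comp (X_injective (R := K))

end Swaps

section Hecke

variable {K : Type*} [Field K] {N : ℕ}

theorem TOp_eq_heckeStep (t : K) (i j : Fin N) (f : FF K N) :
    TOp t i j f = heckeStep (CC K N t) (XX i) (XX j) f (swapVars i j f) :=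
  rfl

theorem TOp_braid (t : K) {a b c : Fin N} (hab : a ≠ b) (hbc : b ≠ c) (hac : a ≠ c)
    (f : FF K N) :
    TOp t a b (TOp t b c (TOp t a b f)) = TOp t b c (TOp t a b (TOp t b c f)) := by
  simp only [TOp_eq_heckeStep, map_heckeStep, swapVars_CC, swapVars_XX, swapVars_swapVars_self,
    Equiv.swap_apply_left, Equiv.swap_apply_right, Equiv.swap_apply_of_ne_of_ne hac.symm hbc.symm,
    Equiv.swap_apply_of_ne_of_ne hab hac, swapVars_braid hab hbc hac f]
  exact heckeStep_braid _ _ _ _ _ _ _ _ _ _ (XX_injective.ne hab) (XX_injective.ne hbc)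
    (XX_injective.ne hac)

theorem TOp_comm (t : K) {a b c d : Fin N} (hac : a ≠ c) (had : a ≠ d) (hbc : b ≠ c)
    (hbd : b ≠ d) (f : FF K N) :
    TOp t a b (TOp t c d f) = TOp t c d (TOp t a b f) := by
  simp only [TOp_eq_heckeStep, map_heckeStep, swapVars_CC, swapVars_XX,
    Equiv.swap_apply_of_ne_of_ne hac had, Equiv.swap_apply_of_ne_of_ne hbc hbd,
    Equiv.swap_apply_of_ne_of_ne hac.symm hbc.symm, Equiv.swap_apply_of_ne_of_ne had.symm hbd.symm,
    swapVars_comm hac had hbc hbd f]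
  exact heckeStep_comm _ _ _ _ _ _ _ _ _

end Hecke

/- STATEMENT 1: The Hecke generators satisfy the braid relation
T_i T_{i+1} T_i = T_{i+1} T_i T_{i+1}, and T_i T_j = T_j T_i whenever |i − j| > 1. -/
theorem stmt1 {K : Type*} [Field K] {N : ℕ} (t : K) :
    (∀ (i : ℕ) (h : i + 2 < N) (f : FF K N),
      TOp t ⟨i, by omega⟩ ⟨i + 1, by omega⟩
        (TOp t ⟨i + 1, by omega⟩ ⟨i + 2, h⟩
          (TOp t ⟨i, by omega⟩ ⟨i + 1, by omega⟩ f)) =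
      TOp t ⟨i + 1, by omega⟩ ⟨i + 2, h⟩
        (TOp t ⟨i, by omega⟩ ⟨i + 1, by omega⟩
          (TOp t ⟨i + 1, by omega⟩ ⟨i + 2, h⟩ f))) ∧
    (∀ (i j : ℕ) (hi : i + 1 < N) (hj : j + 1 < N), 1 < |(i : ℤ) - (j : ℤ)| →
      ∀ f : FF K N,
        TOp t ⟨i, by omega⟩ ⟨i + 1, hi⟩ (TOp t ⟨j, by omega⟩ ⟨j + 1, hj⟩ f) =
        TOp t ⟨j, by omega⟩ ⟨j + 1, hj⟩ (TOp t ⟨i, by omega⟩ ⟨i + 1, hi⟩ f)) := by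
  constructor
  · intro i h f
    apply TOp_braid <;> simp only [ne_eq, Fin.mk.injEq] <;> omega
  · intro i j hi hj hij f
    have := lt_abs.mp hij
    apply TOp_comm <;> simp only [ne_eq, Fin.mk.injEq] <;> omega
end
end

section
/- For each ℓ with 1 ≤ ℓ ≤ m+1, the family of products x^a · m_λ(x_ℓ, x_{ℓ+1}, …), where a ranges over compositions with m parts and λ over partitions, is a basis of the ring R_m of m-symmetric formal power series; in particular the family x^a · m_λ(x_1, x_2, …) (monomial symmetric functions in all variables) is a basis of R_m. -/
noncomputable section

open MvPowerSeries

/-- The monomial symmetric function `m_λ(x_ℓ, x_{ℓ+1}, …)` in the variables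
`x_ℓ, x_{ℓ+1}, …` (variables indexed by `ℕ` starting at `0`), for a partition `λ`
encoded as the multiset of its (positive) parts: the coefficient of a monomial is
`1` exactly when its support lies in `{ℓ, ℓ+1, …}` and its multiset of exponents
is `λ`. -/
def monSym (K : Type*) [CommSemiring K] (ℓ : ℕ) (lam : Multiset ℕ) :
    MvPowerSeries ℕ K :=
  fun d : ℕ →₀ ℕ =>
    if (∀ k ∈ d.support, ℓ ≤ k) ∧ d.support.val.map ⇑d = lam then 1 else 0

/-- The monomial `x^a = x_0^{a_0} ⋯ x_{m-1}^{a_{m-1}}` as a power series. -/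
def xPow (K : Type*) [CommSemiring K] {m : ℕ} (a : Fin m → ℕ) :
    MvPowerSeries ℕ K :=
  ∏ i : Fin m, (X (i : ℕ)) ^ (a i)

/-- Membership in `R_m`: a formal power series of bounded total degree that is
symmetric in the variables `x_m, x_{m+1}, …` (invariant under every permutation
of the variables fixing the first `m` of them). -/
def InRm (K : Type*) [CommSemiring K] (m : ℕ) (f : MvPowerSeries ℕ K) : Prop :=
  (∃ D : ℕ, ∀ d : ℕ →₀ ℕ, D < d.sum (fun _ n => n) → coeff d f = 0) ∧
  ∀ e : Equiv.Perm ℕ, (∀ k : ℕ, k < m → e k = k) →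
    ∀ d : ℕ →₀ ℕ, coeff (d.mapDomain e) f = coeff d f

namespace Stmt5Aux

/-- multiset of nonzero values of a finsupp -/
def M (d : ℕ →₀ ℕ) : Multiset ℕ := d.support.val.map ⇑d

lemma mem_M {d : ℕ →₀ ℕ} {x : ℕ} : x ∈ M d ↔ ∃ k ∈ d.support, d k = x := by
  simp [M]

lemma zero_not_mem_M (d : ℕ →₀ ℕ) : 0 ∉ M d := by
  rw [mem_M]; rintro ⟨k, hk, h⟩; exact (Finsupp.mem_support_iff.mp hk) h

@[simp] lemma M_zero : M (0 : ℕ →₀ ℕ) = 0 := by simp [M]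

lemma M_eq_zero_iff {d : ℕ →₀ ℕ} : M d = 0 ↔ d = 0 := by
  constructor
  · intro h
    ext k
    by_contra hk
    have : d k ∈ M d := mem_M.mpr ⟨k, Finsupp.mem_support_iff.mpr (by simpa using hk), rfl⟩
    simp [h] at this
  · rintro rfl; simp

lemma M_sum (d : ℕ →₀ ℕ) : (M d).sum = d.sum (fun _ n => n) := by
  rw [Finsupp.sum]
  rfl

lemma M_add {u v : ℕ →₀ ℕ} (h : Disjoint u.support v.support) :
    M (u + v) = M u + M v := by
  classical
  have hs : (u + v).support = u.support.disjUnion v.support h := by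
    rw [Finset.disjUnion_eq_union]
    exact Finsupp.support_add_eq h
  have hval : (u.support.disjUnion v.support h).val = u.support.val + v.support.val := rfl
  rw [M, hs, hval, Multiset.map_add]
  congr 1
  · refine Multiset.map_congr rfl ?_
    intro k hk
    have hv : v k = 0 := Finsupp.notMem_support_iff.mp
      (Finset.disjoint_left.mp h hk)
    simp [hv]
  · refine Multiset.map_congr rfl ?_
    intro k hk
    have hu : u k = 0 := Finsupp.notMem_support_iff.mp
      (Finset.disjoint_right.mp h hk)
    simp [hu]

lemma M_embDomain (f : ℕ ↪ ℕ) (d : ℕ →₀ ℕ) : M (Finsupp.embDomain f d) = M d := by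
  rw [M, Finsupp.support_embDomain, Finset.map_val, Multiset.map_map, M]
  refine Multiset.map_congr rfl ?_
  intro k _
  simp [Function.comp, Finsupp.embDomain_apply]

lemma M_single {s x : ℕ} (hx : x ≠ 0) : M (Finsupp.single s x) = {x} := by
  rw [M, Finsupp.support_single_ne_zero _ hx]
  simp

/-- a sum-zero multiset of nonzero naturals is empty -/
lemma multiset_eq_zero_of_sum_zero {s : Multiset ℕ} (h0 : 0 ∉ s) (hs : s.sum = 0) :
    s = 0 := by
  by_contra h
  obtain ⟨x, hx⟩ := Multiset.exists_mem_of_ne_zero h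
  have : x ≤ s.sum := Multiset.single_le_sum (fun y _ => Nat.zero_le y) x hx
  rw [hs, Nat.le_zero] at this
  exact h0 (this ▸ hx)


/-- a composition with m parts as a finsupp on ℕ -/
def toF {m : ℕ} (a : Fin m → ℕ) : ℕ →₀ ℕ := ∑ i : Fin m, Finsupp.single (i : ℕ) (a i)

lemma toF_apply {m : ℕ} (a : Fin m → ℕ) (k : ℕ) :
    toF a k = if h : k < m then a ⟨k, h⟩ else 0 := by
  classical
  rw [toF, Finset.sum_apply']
  split_ifs with h
  · rw [Finset.sum_eq_single (⟨k, h⟩ : Fin m)]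
    · simp
    · intro i _ hi
      exact Finsupp.single_eq_of_ne' (by simpa using fun hik => hi (Fin.ext hik))
    · simp
  · refine Finset.sum_eq_zero fun i _ => ?_
    exact Finsupp.single_eq_of_ne' (fun hik => h (hik ▸ i.isLt))

lemma toF_apply_ge {m : ℕ} (a : Fin m → ℕ) {k : ℕ} (h : m ≤ k) : toF a k = 0 := by
  rw [toF_apply]; simp [Nat.not_lt.mpr h]

lemma toF_apply_fin {m : ℕ} (a : Fin m → ℕ) (i : Fin m) : toF a (i : ℕ) = a i := by
  rw [toF_apply]; simp

lemma toF_add {m : ℕ} (a b : Fin m → ℕ) : toF (a + b) = toF a + toF b := by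
  rw [toF, toF, toF, ← Finset.sum_add_distrib]
  exact Finset.sum_congr rfl fun i _ => by simp [Finsupp.single_add]

lemma toF_eq_zero_iff {m : ℕ} {a : Fin m → ℕ} : toF a = 0 ↔ a = 0 := by
  constructor
  · intro h; funext i
    have := Finsupp.ext_iff.mp h (i : ℕ)
    simpa [toF_apply_fin] using this
  · rintro rfl; rw [toF]; simp

lemma toF_support_lt {m : ℕ} (a : Fin m → ℕ) {k : ℕ} (hk : k ∈ (toF a).support) : k < m := by
  by_contra h
  exact Finsupp.mem_support_iff.mp hk (toF_apply_ge a (Nat.le_of_not_lt h))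

lemma prod_monomial {K : Type*} [CommSemiring K] {ι : Type*} (s : Finset ι) (g : ι → (ℕ →₀ ℕ)) :
    (∏ i ∈ s, monomial (g i) (1 : K)) = monomial (∑ i ∈ s, g i) 1 := by
  classical
  induction s using Finset.induction with
  | empty => simp
  | insert _ _ h ih => rw [Finset.prod_insert h, Finset.sum_insert h, ih, monomial_mul_monomial, one_mul]

lemma xPow_eq {K : Type*} [CommSemiring K] {m : ℕ} (a : Fin m → ℕ) :
    xPow K a = monomial (toF a) 1 := by
  rw [xPow, toF, ← prod_monomial]
  exact Finset.prod_congr rfl fun i _ => X_pow_eq _ _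

lemma coeff_monSym {K : Type*} [CommSemiring K] (ℓ : ℕ) (lam : Multiset ℕ) (d : ℕ →₀ ℕ) :
    coeff d (monSym K ℓ lam) =
      if (∀ k ∈ d.support, ℓ ≤ k) ∧ M d = lam then 1 else 0 := by
  rw [coeff_apply]; rfl

lemma coeff_B {K : Type*} [CommSemiring K] {m : ℕ} (ℓ : ℕ) (a : Fin m → ℕ)
    (lam : Multiset ℕ) (d : ℕ →₀ ℕ) :
    coeff d (xPow K a * monSym K ℓ lam) =
      if toF a ≤ d ∧ (∀ k ∈ (d - toF a).support, ℓ ≤ k) ∧ M (d - toF a) = lam then 1 else 0 := by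
  rw [xPow_eq, coeff_monomial_mul, coeff_monSym]
  by_cases h : toF a ≤ d
  · rw [if_pos h]
    by_cases h2 : (∀ k ∈ (d - toF a).support, ℓ ≤ k) ∧ M (d - toF a) = lam
    · rw [if_pos h2, if_pos ⟨h, h2⟩, one_mul]
    · rw [if_neg h2, if_neg (fun hc => h2 hc.2), mul_zero]
  · rw [if_neg h, if_neg (fun hc => h hc.1)]

/-- place the entries of a list at consecutive positions starting at `s` -/
def tailF : ℕ → List ℕ → (ℕ →₀ ℕ)
  | _, [] => 0
  | s, x :: xs => Finsupp.single s x + tailF (s + 1) xs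

lemma tailF_support {s : ℕ} {l : List ℕ} {k : ℕ} (hk : k ∈ (tailF s l).support) : s ≤ k := by
  induction l generalizing s with
  | nil => simp [tailF] at hk
  | cons x xs ih =>
    rw [tailF] at hk
    rcases Finset.mem_union.mp (Finsupp.support_add hk) with h | h
    · exact le_of_eq (Finset.mem_singleton.mp (Finsupp.support_single_subset h)).symm
    · exact Nat.le_of_succ_le (ih h)

lemma M_tailF {l : List ℕ} (h : ∀ x ∈ l, x ≠ 0) : ∀ s : ℕ, M (tailF s l) = ↑l := by
  induction l with
  | nil => intro s; rw [show tailF s [] = 0 from rfl]; simp [M]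
  | cons x xs ih =>
    intro s
    have hd : Disjoint (Finsupp.single s x).support (tailF (s + 1) xs).support := by
      rw [Finset.disjoint_left]
      intro k hk hk2
      have h1 : k = s := Finset.mem_singleton.mp (Finsupp.support_single_subset hk)
      have h2 := tailF_support hk2
      omega
    rw [tailF, M_add hd, M_single (h x List.mem_cons_self),
      ih (fun y hy => h y (List.mem_cons_of_mem x hy)) (s + 1)]
    rw [← Multiset.cons_coe, ← Multiset.singleton_add]

/-- canonical monomial attached to a pair (a, λ) -/
def Dmon {m : ℕ} (a : Fin m → ℕ) (lam : Multiset ℕ) : ℕ →₀ ℕ :=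
  toF a + tailF m lam.toList

lemma tailF_lam_support {m : ℕ} (lam : Multiset ℕ) {k : ℕ}
    (hk : k ∈ (tailF m lam.toList).support) : m ≤ k := tailF_support hk

lemma M_tailF_lam {m : ℕ} {lam : Multiset ℕ} (h0 : 0 ∉ lam) :
    M (tailF m lam.toList) = lam := by
  rw [M_tailF (fun x hx => fun hz => h0 (by rw [← hz]; exact (Multiset.mem_toList).mp hx)) m,
    Multiset.coe_toList]

lemma Dmon_sub {m : ℕ} (a : Fin m → ℕ) (lam : Multiset ℕ) :
    Dmon a lam - toF a = tailF m lam.toList := by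
  rw [Dmon, add_tsub_cancel_left]

lemma M_cons_erase {u : ℕ →₀ ℕ} {a : ℕ} (ha : a ∈ u.support) :
    M u = u a ::ₘ M (u.erase a) := by
  rw [M, M, Finsupp.support_erase]
  have h1 : u.support.val = a ::ₘ (u.support.erase a).val := by
    rw [Finset.erase_val]
    exact (Multiset.cons_erase ha).symm
  rw [h1, Multiset.map_cons]
  congr 1
  refine Multiset.map_congr rfl ?_
  intro k hk
  have hk' : k ∈ u.support.erase a := hk
  exact (Finsupp.erase_ne (Finset.ne_of_mem_erase hk')).symm

lemma exists_perm (m : ℕ) : ∀ n : ℕ, ∀ u v : ℕ →₀ ℕ, u.support.card ≤ n →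
    (∀ k ∈ u.support, m ≤ k) → (∀ k ∈ v.support, m ≤ k) → M u = M v →
    ∃ e : Equiv.Perm ℕ, (∀ k, k < m → e k = k) ∧ Finsupp.mapDomain ⇑e u = v := by
  have base : ∀ u v : ℕ →₀ ℕ, u = 0 → M u = M v →
      ∃ e : Equiv.Perm ℕ, (∀ k, k < m → e k = k) ∧ Finsupp.mapDomain ⇑e u = v := by
    rintro u v rfl hM
    have : v = 0 := M_eq_zero_iff.mp (by rw [← hM, M_zero])
    subst this
    exact ⟨1, fun k _ => rfl, by simp⟩
  intro n
  induction n with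
  | zero =>
    intro u v hcard _ _ hM
    refine base u v ?_ hM
    exact Finsupp.support_eq_empty.mp (Finset.card_eq_zero.mp (Nat.le_zero.mp hcard))
  | succ n ih =>
    intro u v hcard hu hv hM
    by_cases hu0 : u = 0
    · exact base u v hu0 hM
    · obtain ⟨a, ha⟩ := Finset.Nonempty.exists_mem (Finsupp.support_nonempty_iff.mpr hu0)
      have hma : m ≤ a := hu a ha
      have hMa : u a ∈ M v := by rw [← hM]; exact mem_M.mpr ⟨a, ha, rfl⟩
      obtain ⟨b, hb, hvb⟩ := mem_M.mp hMa
      have hmb : m ≤ b := hv b hb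
      have hMu : M u = u a ::ₘ M (u.erase a) := M_cons_erase ha
      have hMv : M v = v b ::ₘ M (v.erase b) := M_cons_erase hb
      have hM' : M (u.erase a) = M (v.erase b) := by
        have h2 : u a ::ₘ M (u.erase a) = u a ::ₘ M (v.erase b) := by
          rw [← hMu, hM, hMv, hvb]
        exact (Multiset.cons_inj_right _).mp h2
      have hcard' : (u.erase a).support.card ≤ n := by
        rw [Finsupp.support_erase]
        have := Finset.card_erase_of_mem ha
        omega
      have hu'supp : ∀ k ∈ (u.erase a).support, m ≤ k := fun k hk =>
        hu k (by rw [Finsupp.support_erase] at hk; exact Finset.mem_of_mem_erase hk)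
      have hv'supp : ∀ k ∈ (v.erase b).support, m ≤ k := fun k hk =>
        hv k (by rw [Finsupp.support_erase] at hk; exact Finset.mem_of_mem_erase hk)
      obtain ⟨e', he'fix, he'map⟩ := ih (u.erase a) (v.erase b) hcard' hu'supp hv'supp hM'
      have hcm : m ≤ e' a := by
        by_contra h
        have h1 : e' (e' a) = e' a := he'fix (e' a) (Nat.lt_of_not_le h)
        have h2 : e' a = a := e'.injective h1
        omega
      have hcv' : e' a ∉ (v.erase b).support := by
        have hemb : Finsupp.mapDomain ⇑e' (u.erase a)
            = Finsupp.embDomain ⟨⇑e', e'.injective⟩ (u.erase a) :=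
          by rw [Finsupp.embDomain_eq_mapDomain]; rfl
        rw [← he'map, hemb, Finsupp.support_embDomain]
        intro hmem
        obtain ⟨x, hx, hxe⟩ := Finset.mem_map.mp hmem
        have : x = a := e'.injective hxe
        subst this
        rw [Finsupp.support_erase] at hx
        exact Finset.notMem_erase _ _ hx
      have hbv' : b ∉ (v.erase b).support := by
        rw [Finsupp.support_erase]; exact Finset.notMem_erase _ _
      refine ⟨e'.trans (Equiv.swap (e' a) b), ?_, ?_⟩
      · intro k hk
        have h1 : e' k = k := he'fix k hk
        have hkc : k ≠ e' a := by omega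
        have hkb : k ≠ b := by omega
        show Equiv.swap (e' a) b (e' k) = k
        rw [h1, Equiv.swap_apply_of_ne_of_ne hkc hkb]
      · have hcoe : ⇑(e'.trans (Equiv.swap (e' a) b)) = ⇑(Equiv.swap (e' a) b) ∘ ⇑e' := rfl
        have hu_decomp : u = u.erase a + Finsupp.single a (u a) :=
          (Finsupp.erase_add_single a u).symm
        rw [hcoe, Finsupp.mapDomain_comp]
        conv_lhs => rw [hu_decomp]
        rw [Finsupp.mapDomain_add, he'map, Finsupp.mapDomain_single,
          Finsupp.mapDomain_add, Finsupp.mapDomain_single]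
        have h1 : Finsupp.mapDomain (⇑(Equiv.swap (e' a) b)) (v.erase b) = v.erase b := by
          have h2 := Finsupp.mapDomain_congr (v := v.erase b)
            (f := ⇑(Equiv.swap (e' a) b)) (g := id) (fun x hx =>
              Equiv.swap_apply_of_ne_of_ne (fun h => hcv' (h ▸ hx)) (fun h => hbv' (h ▸ hx)))
          rw [h2, Finsupp.mapDomain_id]
        rw [h1, Equiv.swap_apply_left, ← hvb]
        exact Finsupp.erase_add_single b v

lemma le_finsupp_iff {u d : ℕ →₀ ℕ} : u ≤ d ↔ ∀ k, u k ≤ d k := Finsupp.le_def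

/-- the first m values of d, as a composition -/
def headC (m : ℕ) (d : ℕ →₀ ℕ) : Fin m → ℕ := fun i => d (i : ℕ)

/-- the tail of d: positions ≥ m -/
def tl (m : ℕ) (d : ℕ →₀ ℕ) : ℕ →₀ ℕ := d - toF (headC m d)

lemma toF_head_le (m : ℕ) (d : ℕ →₀ ℕ) : toF (headC m d) ≤ d := by
  rw [le_finsupp_iff]
  intro k
  rw [toF_apply]
  split_ifs with h
  · exact le_rfl
  · exact Nat.zero_le _

lemma tl_apply (m : ℕ) (d : ℕ →₀ ℕ) (k : ℕ) :
    tl m d k = if k < m then 0 else d k := by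
  rw [tl, Finsupp.tsub_apply, toF_apply]
  split_ifs with h
  · exact Nat.sub_self _
  · rfl

lemma tl_support {m : ℕ} {d : ℕ →₀ ℕ} {k : ℕ} (hk : k ∈ (tl m d).support) : m ≤ k := by
  by_contra h
  exact Finsupp.mem_support_iff.mp hk (by rw [tl_apply]; simp [Nat.lt_of_not_le h])

lemma head_tl_decomp (m : ℕ) (d : ℕ →₀ ℕ) : d = toF (headC m d) + tl m d := by
  rw [tl]
  exact (add_tsub_cancel_of_le (toF_head_le m d)).symm

lemma sum_add_finsupp (u v : ℕ →₀ ℕ) :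
    (u + v).sum (fun _ n => n) = u.sum (fun _ n => n) + v.sum (fun _ n => n) :=
  Finsupp.sum_add_index' (fun _ => rfl) (fun _ _ _ => rfl)

section perm

variable {e : Equiv.Perm ℕ} {m : ℕ} (he : ∀ k, k < m → e k = k)
include he

lemma symm_fix {k : ℕ} (hk : k < m) : e.symm k = k := by
  have := he k hk
  conv_lhs => rw [← this]
  exact e.symm_apply_apply k

lemma symm_ge {k : ℕ} (hk : m ≤ k) : m ≤ e.symm k := by
  by_contra h
  have h1 : e (e.symm k) = e.symm k := he _ (Nat.lt_of_not_le h)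
  rw [e.apply_symm_apply] at h1
  omega

lemma apply_ge_iff {ℓ : ℕ} (hℓ : ℓ ≤ m) {k : ℕ} : ℓ ≤ e k ↔ ℓ ≤ k := by
  constructor
  · intro h
    by_contra hc
    have : e k = k := he k (by omega)
    omega
  · intro h
    by_contra hc
    have h1 : e (e k) = e k := he (e k) (by omega)
    have : e k = k := e.injective h1
    omega

lemma mapDomain_toF_le_iff {d : ℕ →₀ ℕ} (a : Fin m → ℕ) :
    toF a ≤ Finsupp.mapDomain ⇑e d ↔ toF a ≤ d := by
  rw [le_finsupp_iff, le_finsupp_iff]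
  constructor <;> intro h k
  · rw [toF_apply]
    split_ifs with hkm
    · have h1 := h k
      rwa [Finsupp.mapDomain_equiv_apply, symm_fix he hkm, toF_apply, dif_pos hkm] at h1
    · exact Nat.zero_le _
  · rw [Finsupp.mapDomain_equiv_apply, toF_apply]
    split_ifs with hkm
    · rw [symm_fix he hkm]
      have h1 := h k
      rwa [toF_apply, dif_pos hkm] at h1
    · exact Nat.zero_le _

lemma mapDomain_sub_toF {d : ℕ →₀ ℕ} (a : Fin m → ℕ) :
    Finsupp.mapDomain ⇑e d - toF a = Finsupp.mapDomain ⇑e (d - toF a) := by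
  ext k
  rw [Finsupp.tsub_apply, Finsupp.mapDomain_equiv_apply, Finsupp.mapDomain_equiv_apply,
    Finsupp.tsub_apply]
  congr 1
  rw [toF_apply, toF_apply]
  by_cases hkm : k < m
  · rw [symm_fix he hkm]
  · rw [dif_neg hkm, dif_neg (by have := symm_ge he (Nat.le_of_not_lt hkm); omega)]

lemma mapDomain_supp_ge_iff {w : ℕ →₀ ℕ} {ℓ : ℕ} (hℓ : ℓ ≤ m) :
    (∀ k ∈ (Finsupp.mapDomain ⇑e w).support, ℓ ≤ k) ↔ (∀ k ∈ w.support, ℓ ≤ k) := by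
  have hemb : Finsupp.mapDomain ⇑e w = Finsupp.embDomain ⟨⇑e, e.injective⟩ w := by
    rw [Finsupp.embDomain_eq_mapDomain]; rfl
  rw [hemb, Finsupp.support_embDomain]
  constructor
  · intro h k hk
    have h1 := h (e k) (Finset.mem_map.mpr ⟨k, hk, rfl⟩)
    exact (apply_ge_iff he hℓ).mp h1
  · intro h k hk
    obtain ⟨x, hx, hxe⟩ := Finset.mem_map.mp hk
    rw [← hxe]
    exact (apply_ge_iff he hℓ).mpr (h x hx)

omit he in
lemma M_mapDomain (w : ℕ →₀ ℕ) : M (Finsupp.mapDomain ⇑e w) = M w := by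
  have hemb : Finsupp.mapDomain ⇑e w = Finsupp.embDomain ⟨⇑e, e.injective⟩ w := by
    rw [Finsupp.embDomain_eq_mapDomain]; rfl
  rw [hemb, M_embDomain]

end perm

lemma B_mem_Rm {K : Type*} [Field K] {m ℓ : ℕ} (hℓ : ℓ ≤ m) (a : Fin m → ℕ)
    (lam : Multiset ℕ) : InRm K m (xPow K a * monSym K ℓ lam) := by
  constructor
  · refine ⟨(toF a).sum (fun _ n => n) + lam.sum, fun d hd => ?_⟩
    rw [coeff_B]
    by_cases h : toF a ≤ d ∧ (∀ k ∈ (d - toF a).support, ℓ ≤ k) ∧ M (d - toF a) = lam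
    · exfalso
      obtain ⟨h1, _, h3⟩ := h
      have hd2 : d = toF a + (d - toF a) := (add_tsub_cancel_of_le h1).symm
      have h4 : (d - toF a).sum (fun _ n => n) = lam.sum := by rw [← M_sum, h3]
      rw [hd2, sum_add_finsupp, h4] at hd
      omega
    · rw [if_neg h]
  · intro e he d
    rw [coeff_B, coeff_B]
    refine if_congr ?_ rfl rfl
    rw [mapDomain_sub_toF he a, mapDomain_toF_le_iff he a,
      mapDomain_supp_ge_iff he hℓ, M_mapDomain]

/-- R_m as a submodule -/
def RmMod (K : Type*) [Field K] (m : ℕ) : Submodule K (MvPowerSeries ℕ K) where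
  carrier := {f | InRm K m f}
  zero_mem' := by
    refine ⟨⟨0, fun d _ => by simp⟩, fun e he d => by simp⟩
  add_mem' := by
    rintro f g ⟨⟨Df, hDf⟩, hf⟩ ⟨⟨Dg, hDg⟩, hg⟩
    refine ⟨⟨max Df Dg, fun d hd => ?_⟩, fun e he d => ?_⟩
    · rw [map_add, hDf d (by omega), hDg d (by omega), add_zero]
    · rw [map_add, map_add, hf e he d, hg e he d]
  smul_mem' := by
    rintro c f ⟨⟨Df, hDf⟩, hf⟩
    refine ⟨⟨Df, fun d hd => ?_⟩, fun e he d => ?_⟩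
    · rw [map_smul, hDf d hd, smul_zero]
    · rw [map_smul, map_smul, hf e he d]

lemma tailF_lam_apply_lt {m : ℕ} (lam : Multiset ℕ) {k : ℕ} (hk : k < m) :
    tailF m lam.toList k = 0 := by
  by_contra h
  have := tailF_lam_support lam (Finsupp.mem_support_iff.mpr h)
  omega

lemma disjoint_toF_tail {m : ℕ} (c : Fin m → ℕ) (lam : Multiset ℕ) :
    Disjoint (toF c).support (tailF m lam.toList).support := by
  rw [Finset.disjoint_left]
  intro k hk hk2
  have h1 := toF_support_lt c hk
  have h2 := tailF_lam_support lam hk2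
  omega

lemma coeff_B_Dmon_self {K : Type*} [Field K] {m ℓ : ℕ} (hℓ : ℓ ≤ m) (a : Fin m → ℕ)
    {lam : Multiset ℕ} (h0 : 0 ∉ lam) :
    coeff (Dmon a lam) (xPow K a * monSym K ℓ lam) = 1 := by
  rw [coeff_B, if_pos]
  refine ⟨?_, ?_, ?_⟩
  · rw [Dmon]; exact le_add_of_nonneg_right zero_le
  · rw [Dmon_sub]
    intro k hk
    exact le_trans hℓ (tailF_lam_support lam hk)
  · rw [Dmon_sub, M_tailF_lam h0]

lemma triang {K : Type*} [Field K] {m ℓ : ℕ} (hℓ : ℓ ≤ m) (a a' : Fin m → ℕ)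
    {lam : Multiset ℕ} (lam' : Multiset ℕ) (h0 : 0 ∉ lam)
    (hc : coeff (Dmon a lam) (xPow K a' * monSym K ℓ lam') ≠ 0) :
    lam.sum ≤ lam'.sum ∧ (lam'.sum ≤ lam.sum → a' = a ∧ lam' = lam) := by
  rw [coeff_B] at hc
  by_cases h : toF a' ≤ Dmon a lam ∧ (∀ k ∈ (Dmon a lam - toF a').support, ℓ ≤ k) ∧
      M (Dmon a lam - toF a') = lam'
  swap
  · exact absurd (if_neg h) hc
  obtain ⟨h1, _, h3⟩ := h
  have hle : ∀ i : Fin m, a' i ≤ a i := by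
    intro i
    have := le_finsupp_iff.mp h1 (i : ℕ)
    rw [Dmon, Finsupp.add_apply, toF_apply_fin, toF_apply_fin,
      tailF_lam_apply_lt lam i.isLt, add_zero] at this
    exact this
  set c : Fin m → ℕ := fun i => a i - a' i with hc_def
  have hkey : Dmon a lam - toF a' = toF c + tailF m lam.toList := by
    ext k
    rw [Finsupp.tsub_apply, Dmon, Finsupp.add_apply, Finsupp.add_apply]
    by_cases hkm : k < m
    · rw [tailF_lam_apply_lt lam hkm, toF_apply, toF_apply, toF_apply,
        dif_pos hkm, dif_pos hkm, dif_pos hkm]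
      have := hle ⟨k, hkm⟩
      simp only [hc_def]
      omega
    · rw [toF_apply, toF_apply, toF_apply, dif_neg hkm, dif_neg hkm, dif_neg hkm]
      omega
  have hM : lam' = M (toF c) + lam := by
    rw [← h3, hkey, M_add (disjoint_toF_tail c lam), M_tailF_lam h0]
  have hsum : lam'.sum = (M (toF c)).sum + lam.sum := by
    rw [hM, Multiset.sum_add]
  refine ⟨by omega, fun hle' => ?_⟩
  have hzero : (M (toF c)).sum = 0 := by omega
  have hMc : M (toF c) = 0 := multiset_eq_zero_of_sum_zero (zero_not_mem_M _) hzero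
  have hc0 : c = 0 := by
    have := toF_eq_zero_iff.mp (M_eq_zero_iff.mp hMc)
    exact this
  constructor
  · funext i
    have h1 := hle i
    have h2 : a i - a' i = 0 := congrFun hc0 i
    omega
  · rw [hM, hMc, zero_add]

lemma lin_indep {K : Type*} [Field K] {m ℓ : ℕ} (hℓ : ℓ ≤ m) :
    LinearIndependent K (fun p : (Fin m → ℕ) × {lam : Multiset ℕ // 0 ∉ lam} =>
      xPow K p.1 * monSym K ℓ p.2.1) := by
  rw [linearIndependent_iff]
  intro l hl
  by_contra hne
  have hsupp : l.support.Nonempty := Finsupp.support_nonempty_iff.mpr hne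
  obtain ⟨p, hp, hmax⟩ := Finset.exists_max_image l.support (fun p => p.2.1.sum) hsupp
  have h0 := congrArg (coeff (Dmon p.1 p.2.1)) hl
  rw [map_zero, Finsupp.linearCombination_apply, Finsupp.sum, map_sum] at h0
  rw [Finset.sum_eq_single p] at h0
  · rw [map_smul, coeff_B_Dmon_self hℓ p.1 p.2.2, smul_eq_mul, mul_one] at h0
    exact (Finsupp.mem_support_iff.mp hp) h0
  · intro q hq hqp
    rw [map_smul, smul_eq_mul]
    by_cases hcz : coeff (Dmon p.1 p.2.1) (xPow K q.1 * monSym K ℓ q.2.1) = 0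
    · rw [hcz, mul_zero]
    · exfalso
      obtain ⟨hsum, heq⟩ := triang hℓ p.1 q.1 q.2.1 p.2.2 hcz
      have hmq := hmax q hq
      obtain ⟨ha, hlam⟩ := heq (by omega)
      exact hqp (Prod.ext ha (Subtype.ext hlam))
  · intro hpn
    exact absurd hp hpn

/-- the finite set of "head corrections" -/
def Sb (m ℓ : ℕ) (lam : Multiset ℕ) : Finset (Fin m → ℕ) :=
  (Fintype.piFinset (fun _ : Fin m => Finset.range (lam.sum + 1))).filter
    (fun b => (∀ i : Fin m, (i : ℕ) < ℓ → b i = 0) ∧ M (toF b) ≤ lam)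

lemma expand {K : Type*} [Field K] {m ℓ : ℕ} (hℓ : ℓ ≤ m) (a : Fin m → ℕ)
    (lam : Multiset ℕ) :
    xPow K a * monSym K ℓ lam =
      ∑ b ∈ Sb m ℓ lam, xPow K (a + b) * monSym K m (lam - M (toF b)) := by
  ext d
  rw [map_sum, coeff_B]
  by_cases h1 : toF a ≤ d
  swap
  · rw [if_neg (fun hc => h1 hc.1)]
    refine (Finset.sum_eq_zero fun b _ => ?_).symm
    rw [coeff_B, if_neg]
    rintro ⟨hc, -, -⟩
    apply h1
    refine le_trans ?_ hc
    rw [toF_add]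
    exact le_add_of_nonneg_right zero_le
  · set v := d - toF a with hv
    set b₀ : Fin m → ℕ := headC m v with hb₀
    have hb₀v : ∀ i : Fin m, b₀ i = v (i : ℕ) := fun i => rfl
    have hdecomp : v = toF b₀ + tl m v := head_tl_decomp m v
    have hsub : ∀ b : Fin m → ℕ, d - toF (a + b) = v - toF b := by
      intro b
      ext k
      rw [toF_add, Finsupp.tsub_apply, Finsupp.tsub_apply, Finsupp.tsub_apply,
        Finsupp.add_apply]
      omega
    have hCb : ∀ b : Fin m → ℕ,
        (toF (a + b) ≤ d ∧ (∀ k ∈ (d - toF (a + b)).support, m ≤ k) ∧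
          M (d - toF (a + b)) = lam - M (toF b)) → b = b₀ := by
      intro b ⟨hc1, hc2, _⟩
      funext i
      have hb_le : a i + b i ≤ d i := by
        have := le_finsupp_iff.mp hc1 (i : ℕ)
        rwa [toF_add, Finsupp.add_apply, toF_apply_fin, toF_apply_fin] at this
      have hzero : (d - toF (a + b)) (i : ℕ) = 0 := by
        by_contra hz
        have := hc2 (i : ℕ) (Finsupp.mem_support_iff.mpr hz)
        omega
      rw [hsub b, Finsupp.tsub_apply, toF_apply_fin] at hzero
      have hvi : v (i : ℕ) = d (i : ℕ) - toF a (i : ℕ) := Finsupp.tsub_apply _ _ _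
      rw [toF_apply_fin] at hvi
      rw [hb₀v]
      omega
    have hCb₀ : ∀ b : Fin m → ℕ, b = b₀ →
        ((toF (a + b) ≤ d ∧ (∀ k ∈ (d - toF (a + b)).support, m ≤ k) ∧
          M (d - toF (a + b)) = lam - M (toF b)) ↔ M (tl m v) = lam - M (toF b₀)) := by
      rintro b rfl
      have ht : d - toF (a + b₀) = tl m v := by
        rw [hsub b₀, tl]
      constructor
      · rintro ⟨-, -, h3⟩
        rwa [ht] at h3
      · intro hM
        refine ⟨?_, ?_, ?_⟩
        · rw [le_finsupp_iff]
          intro k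
          rw [toF_add, Finsupp.add_apply, toF_apply, toF_apply]
          by_cases hkm : k < m
          · rw [dif_pos hkm, dif_pos hkm]
            have h5 : b₀ ⟨k, hkm⟩ = v k := hb₀v ⟨k, hkm⟩
            have h6 : v k = d k - toF a k := Finsupp.tsub_apply _ _ _
            have h7 := le_finsupp_iff.mp h1 k
            have h8 : toF a k = a ⟨k, hkm⟩ := by rw [toF_apply, dif_pos hkm]
            omega
          · rw [dif_neg hkm, dif_neg hkm]
            omega
        · rw [ht]
          exact fun k hk => tl_support hk
        · rwa [ht]
    -- now compute the sum
    have hsum : (∑ b ∈ Sb m ℓ lam, coeff d (xPow K (a + b) * monSym K m (lam - M (toF b)))) =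
        if b₀ ∈ Sb m ℓ lam ∧ M (tl m v) = lam - M (toF b₀) then 1 else 0 := by
      by_cases hb : b₀ ∈ Sb m ℓ lam
      · rw [Finset.sum_eq_single_of_mem b₀ hb]
        · rw [coeff_B]
          have hiff := hCb₀ b₀ rfl
          by_cases hMt : M (tl m v) = lam - M (toF b₀)
          · rw [if_pos (hiff.mpr hMt), if_pos ⟨hb, hMt⟩]
          · rw [if_neg (fun hc => hMt (hiff.mp hc)), if_neg (fun hc => hMt hc.2)]
        · intro b _ hbne
          rw [coeff_B, if_neg]
          intro hc
          exact hbne (hCb b hc)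
      · rw [if_neg (fun hc => hb hc.1)]
        refine Finset.sum_eq_zero fun b hbs => ?_
        rw [coeff_B, if_neg]
        intro hc
        exact hb ((hCb b hc) ▸ hbs)
    rw [hsum]
    -- final equivalence
    congr 1
    rw [eq_iff_iff]
    constructor
    · rintro ⟨-, h2, h3⟩
      have hM : M (toF b₀) + M (tl m v) = lam := by
        rw [← M_add, ← hdecomp, h3]
        · rw [Finset.disjoint_left]
          intro k hk hk2
          have := toF_support_lt b₀ hk
          have := tl_support hk2
          omega
      have hMle : M (toF b₀) ≤ lam := by
        rw [← hM]; exact le_add_right le_rfl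
      refine ⟨?_, ?_⟩
      · rw [Sb, Finset.mem_filter]
        refine ⟨?_, ?_, hMle⟩
        · rw [Fintype.mem_piFinset]
          intro i
          rw [Finset.mem_range]
          by_cases hbz : b₀ i = 0
          · omega
          · have hmem : b₀ i ∈ M (toF b₀) := by
              rw [mem_M]
              exact ⟨(i : ℕ), Finsupp.mem_support_iff.mpr
                (by rw [toF_apply_fin]; exact hbz), toF_apply_fin b₀ i⟩
            have := Multiset.single_le_sum (fun y _ => Nat.zero_le y) _
              (Multiset.mem_of_le hMle hmem)
            omega
        · intro i hi
          rw [hb₀v]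
          by_contra hz
          have := h2 (i : ℕ) (Finsupp.mem_support_iff.mpr hz)
          omega
      · rw [← hM, add_tsub_cancel_left]
    · rintro ⟨hb, hM⟩
      rw [Sb, Finset.mem_filter] at hb
      obtain ⟨-, hbℓ, hble⟩ := hb
      have hMv : M v = lam := by
        rw [hdecomp, M_add, hM, add_tsub_cancel_of_le hble]
        rw [Finset.disjoint_left]
        intro k hk hk2
        have := toF_support_lt b₀ hk
        have := tl_support hk2
        omega
      refine ⟨h1, ?_, hMv⟩
      intro k hk
      by_contra hkl
      have hkm : k < m := by omega
      have hvk : v k ≠ 0 := Finsupp.mem_support_iff.mp hk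
      have hb5 : b₀ ⟨k, hkm⟩ = v k := hb₀v ⟨k, hkm⟩
      have := hbℓ ⟨k, hkm⟩ (by simpa using Nat.lt_of_not_le hkl)
      omega

lemma Bm_mem_span {K : Type*} [Field K] {m ℓ : ℕ} (hℓ : ℓ ≤ m) :
    ∀ n : ℕ, ∀ lam : Multiset ℕ, lam.sum ≤ n → 0 ∉ lam → ∀ a : Fin m → ℕ,
      xPow K a * monSym K m lam ∈ Submodule.span K (Set.range
        (fun p : (Fin m → ℕ) × {lam : Multiset ℕ // 0 ∉ lam} =>
          xPow K p.1 * monSym K ℓ p.2.1)) := by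
  intro n
  induction n using Nat.strong_induction_on with
  | _ n ih =>
    intro lam hsum h0 a
    have htoF0 : toF (0 : Fin m → ℕ) = 0 := toF_eq_zero_iff.mpr rfl
    have h0Sb : (0 : Fin m → ℕ) ∈ Sb m ℓ lam := by
      rw [Sb, Finset.mem_filter]
      refine ⟨?_, fun i _ => rfl, ?_⟩
      · rw [Fintype.mem_piFinset]
        intro i
        rw [Finset.mem_range]
        have : (0 : Fin m → ℕ) i = 0 := rfl
        omega
      · rw [htoF0, M_zero]
        exact Multiset.zero_le _
    have hexp := expand (K := K) hℓ a lam
    rw [← Finset.add_sum_erase _ _ h0Sb] at hexp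
    have hterm0 : xPow K (a + 0) * monSym K m (lam - M (toF (0 : Fin m → ℕ))) =
        xPow K a * monSym K m lam := by
      rw [add_zero, htoF0, M_zero, tsub_zero]
    rw [hterm0] at hexp
    have hkey : xPow K a * monSym K m lam = xPow K a * monSym K ℓ lam -
        ∑ b ∈ (Sb m ℓ lam).erase 0, xPow K (a + b) * monSym K m (lam - M (toF b)) :=
      eq_sub_of_add_eq hexp.symm
    rw [hkey]
    refine Submodule.sub_mem _ ?_ (Submodule.sum_mem _ ?_)
    · exact Submodule.subset_span ⟨(a, ⟨lam, h0⟩), rfl⟩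
    · intro b hb
      rw [Finset.mem_erase] at hb
      obtain ⟨hbne, hbS⟩ := hb
      rw [Sb, Finset.mem_filter] at hbS
      obtain ⟨-, -, hble⟩ := hbS
      have hMb : M (toF b) ≠ 0 := fun h => hbne (toF_eq_zero_iff.mp (M_eq_zero_iff.mp h))
      have hMbpos : 1 ≤ (M (toF b)).sum := by
        by_contra h
        exact hMb (multiset_eq_zero_of_sum_zero (zero_not_mem_M _) (by omega))
      have hsum2 : (lam - M (toF b)).sum + (M (toF b)).sum = lam.sum := by
        rw [← Multiset.sum_add, tsub_add_cancel_of_le hble]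
      have h0' : 0 ∉ lam - M (toF b) := fun h => h0 (Multiset.mem_of_le tsub_le_self h)
      exact ih ((lam - M (toF b)).sum) (by omega) _ le_rfl h0' (a + b)

lemma apply_le_sum (d : ℕ →₀ ℕ) (k : ℕ) : d k ≤ d.sum (fun _ n => n) := by
  by_cases h : d k = 0
  · omega
  · exact Finset.single_le_sum (f := fun j => d j) (fun _ _ => Nat.zero_le _)
      (Finsupp.mem_support_iff.mpr h)

lemma coeff_Bm {K : Type*} [Field K] {m : ℕ} (a : Fin m → ℕ) (lam : Multiset ℕ)
    (d : ℕ →₀ ℕ) :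
    coeff d (xPow K a * monSym K m lam) =
      if a = headC m d ∧ lam = M (tl m d) then 1 else 0 := by
  rw [coeff_B]
  refine if_congr ?_ rfl rfl
  constructor
  · rintro ⟨h1, h2, h3⟩
    have ha : a = headC m d := by
      funext i
      have hle := le_finsupp_iff.mp h1 (i : ℕ)
      rw [toF_apply_fin] at hle
      have hz : (d - toF a) (i : ℕ) = 0 := by
        by_contra hz
        have := h2 (i : ℕ) (Finsupp.mem_support_iff.mpr hz)
        omega
      rw [Finsupp.tsub_apply, toF_apply_fin] at hz
      show a i = d (i : ℕ)
      omega
    subst ha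
    exact ⟨rfl, h3.symm⟩
  · rintro ⟨rfl, rfl⟩
    exact ⟨toF_head_le m d, fun k hk => tl_support hk, rfl⟩

lemma Dmon_head_sum {m : ℕ} (d : ℕ →₀ ℕ) :
    (Dmon (headC m d) (M (tl m d))).sum (fun _ n => n) = d.sum (fun _ n => n) := by
  rw [Dmon, sum_add_finsupp, ← M_sum (tailF m (M (tl m d)).toList),
    M_tailF_lam (zero_not_mem_M _), M_sum, ← sum_add_finsupp, ← head_tl_decomp]

lemma coeff_Dmon_eq {K : Type*} [Field K] {m : ℕ} {f : MvPowerSeries ℕ K}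
    (hsym : ∀ e : Equiv.Perm ℕ, (∀ k : ℕ, k < m → e k = k) →
      ∀ d : ℕ →₀ ℕ, coeff (d.mapDomain e) f = coeff d f) (d : ℕ →₀ ℕ) :
    coeff (Dmon (headC m d) (M (tl m d))) f = coeff d f := by
  obtain ⟨e, he, hemap⟩ := exists_perm m (tailF m (M (tl m d)).toList).support.card
    (tailF m (M (tl m d)).toList) (tl m d) le_rfl
    (fun k hk => tailF_lam_support _ hk) (fun k hk => tl_support hk)
    (by rw [M_tailF_lam (zero_not_mem_M _)])
  have hmap : Finsupp.mapDomain ⇑e (Dmon (headC m d) (M (tl m d))) = d := by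
    rw [Dmon, Finsupp.mapDomain_add, hemap]
    have hfix : Finsupp.mapDomain ⇑e (toF (headC m d)) = toF (headC m d) := by
      have h2 := Finsupp.mapDomain_congr (v := toF (headC m d)) (f := ⇑e) (g := id)
        (fun x hx => he x (toF_support_lt _ hx))
      rw [h2, Finsupp.mapDomain_id]
    rw [hfix, ← head_tl_decomp]
  have := hsym e he (Dmon (headC m d) (M (tl m d)))
  rw [hmap] at this
  exact this.symm

lemma mem_span_of_InRm {K : Type*} [Field K] {m : ℕ} (f : MvPowerSeries ℕ K)
    (hf : InRm K m f) :
    f ∈ Submodule.span K (Set.range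
      (fun p : (Fin m → ℕ) × {lam : Multiset ℕ // 0 ∉ lam} =>
        xPow K p.1 * monSym K m p.2.1)) := by
  classical
  obtain ⟨⟨D, hD⟩, hsym⟩ := hf
  set A : Finset (Fin m → ℕ) := Fintype.piFinset (fun _ : Fin m => Finset.range (D + 1))
    with hA
  set Λ : Finset (Multiset ℕ) :=
    (Finset.range (D + 1)).biUnion
      (fun n => Finset.univ.image (fun q : n.Partition => q.parts)) with hΛ
  have hΛ0 : ∀ lam ∈ Λ, (0 : ℕ) ∉ lam := by
    intro lam hlam
    rw [hΛ, Finset.mem_biUnion] at hlam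
    obtain ⟨n, -, hlam⟩ := hlam
    obtain ⟨q, -, rfl⟩ := Finset.mem_image.mp hlam
    intro h
    exact (Nat.lt_irrefl 0) (q.parts_pos h)
  have hrep : f = ∑ q ∈ A ×ˢ Λ,
      (coeff (Dmon q.1 q.2) f) • (xPow K q.1 * monSym K m q.2) := by
    ext d
    rw [map_sum]
    have hterm : ∀ q ∈ A ×ˢ Λ, q ≠ (headC m d, M (tl m d)) →
        coeff d ((coeff (Dmon q.1 q.2) f) • (xPow K q.1 * monSym K m q.2)) = 0 := by
      intro q _ hq
      rw [map_smul, coeff_Bm, smul_eq_mul]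
      rw [if_neg, mul_zero]
      rintro ⟨h1, h2⟩
      exact hq (Prod.ext h1 h2)
    by_cases hd : d.sum (fun _ n => n) ≤ D
    · have hmem : (headC m d, M (tl m d)) ∈ A ×ˢ Λ := by
        rw [Finset.mem_product]
        constructor
        · show headC m d ∈ A
          rw [hA, Fintype.mem_piFinset]
          intro i
          rw [Finset.mem_range]
          have h1 := apply_le_sum d (i : ℕ)
          have h2 : headC m d i = d (i : ℕ) := rfl
          omega
        · show M (tl m d) ∈ Λ
          rw [hΛ, Finset.mem_biUnion]
          have hsum : (M (tl m d)).sum ≤ D := by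
            rw [M_sum]
            have h3 := sum_add_finsupp (toF (headC m d)) (tl m d)
            rw [← head_tl_decomp] at h3
            omega
          refine ⟨(M (tl m d)).sum, Finset.mem_range.mpr (by omega), ?_⟩
          refine Finset.mem_image.mpr ⟨⟨M (tl m d), ?_, rfl⟩, Finset.mem_univ _, rfl⟩
          intro i hi
          exact Nat.pos_of_ne_zero (fun h => (zero_not_mem_M (tl m d)) (h ▸ hi))
      rw [Finset.sum_eq_single_of_mem _ hmem hterm, map_smul, coeff_Bm, if_pos ⟨rfl, rfl⟩,
        smul_eq_mul, mul_one]
      exact (coeff_Dmon_eq hsym d).symm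
    · rw [hD d (by omega)]
      refine (Finset.sum_eq_zero fun q hq => ?_).symm
      by_cases hqd : q = (headC m d, M (tl m d))
      · subst hqd
        rw [map_smul, smul_eq_mul]
        have : coeff (Dmon (headC m d) (M (tl m d))) f = 0 := by
          apply hD
          rw [Dmon_head_sum]
          omega
        rw [this, zero_mul]
      · exact hterm q hq hqd
  rw [hrep]
  refine Submodule.sum_mem _ fun q hq => ?_
  have hq2 : q.2 ∈ Λ := (Finset.mem_product.mp hq).2
  exact Submodule.smul_mem _ _
    (Submodule.subset_span ⟨(q.1, ⟨q.2, hΛ0 q.2 hq2⟩), rfl⟩)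

end Stmt5Aux

/- STATEMENT 5: For each ℓ ≤ m (0-indexed; the paper's ℓ ∈ {1,…,m+1}), the family
x^a · m_λ(x_ℓ, x_{ℓ+1}, …), with a a composition with m parts and λ a partition,
is a basis of R_m; in particular (ℓ = 0) the family x^a · m_λ(x) in all the
variables is a basis of R_m. -/
theorem stmt5 (K : Type*) [Field K] (m ℓ : ℕ) (hℓ : ℓ ≤ m) :
    LinearIndependent K
      (fun p : (Fin m → ℕ) × {lam : Multiset ℕ // 0 ∉ lam} =>
        xPow K p.1 * monSym K ℓ p.2.1) ∧
    ∀ f : MvPowerSeries ℕ K,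
      f ∈ Submodule.span K (Set.range
        (fun p : (Fin m → ℕ) × {lam : Multiset ℕ // 0 ∉ lam} =>
          xPow K p.1 * monSym K ℓ p.2.1)) ↔ InRm K m f := by
  refine ⟨Stmt5Aux.lin_indep hℓ, fun f => ⟨?_, ?_⟩⟩
  · intro hf
    have hle : Submodule.span K (Set.range
        (fun p : (Fin m → ℕ) × {lam : Multiset ℕ // 0 ∉ lam} =>
          xPow K p.1 * monSym K ℓ p.2.1)) ≤ Stmt5Aux.RmMod K m := by
      rw [Submodule.span_le]
      rintro x ⟨p, rfl⟩
      exact Stmt5Aux.B_mem_Rm hℓ p.1 p.2.1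
    exact hle hf
  · intro hf
    have h1 := Stmt5Aux.mem_span_of_InRm f hf
    have h2 : Submodule.span K (Set.range
        (fun p : (Fin m → ℕ) × {lam : Multiset ℕ // 0 ∉ lam} =>
          xPow K p.1 * monSym K m p.2.1)) ≤ Submodule.span K (Set.range
        (fun p : (Fin m → ℕ) × {lam : Multiset ℕ // 0 ∉ lam} =>
          xPow K p.1 * monSym K ℓ p.2.1)) := by
      rw [Submodule.span_le]
      rintro x ⟨p, rfl⟩
      exact Stmt5Aux.Bm_mem_span hℓ p.2.1.sum p.2.1 le_rfl p.2.2 p.1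
    exact h2 h1

end
end

section
/- Let T be a skew tableau which contains the letter b at the top of each of its last ℓ columns, and let T' be the skew tableau obtained by removing these ℓ occurrences of b. Then the reading word of T is plactically equivalent (Knuth equivalent) to the concatenation of the reading word of T' with b^ℓ. -/
/-- An elementary Knuth (plactic) relation on words. -/
inductive KnuthStep : List ℕ → List ℕ → Prop
  | rel1 (u v : List ℕ) (x y z : ℕ) (h1 : x < y) (h2 : y ≤ z) :
      KnuthStep (u ++ [y, z, x] ++ v) (u ++ [y, x, z] ++ v)
  | rel2 (u v : List ℕ) (x y z : ℕ) (h1 : x ≤ y) (h2 : y < z) :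
      KnuthStep (u ++ [x, z, y] ++ v) (u ++ [z, x, y] ++ v)

/-- Plactic (Knuth) equivalence: the equivalence relation generated by the
elementary Knuth relations. -/
def KnuthEquiv : List ℕ → List ℕ → Prop := Relation.EqvGen KnuthStep

/-- `(r, c)` is a cell of the skew diagram `out/inn` (rows and columns 0-indexed,
English convention: row `r` has cells in columns `inn r ≤ c < out r`). -/
def IsCell (out inn : ℕ → ℕ) (r c : ℕ) : Prop := inn r ≤ c ∧ c < out r

instance (out inn : ℕ → ℕ) (r c : ℕ) : Decidable (IsCell out inn r c) :=
  inferInstanceAs (Decidable (_ ∧ _))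

/-- Skew-tableau conditions for a filling `T` of the skew diagram `out/inn`:
rows weakly increase (left to right) and columns strictly increase (top to
bottom). -/
def IsSkewTab (out inn : ℕ → ℕ) (T : ℕ → ℕ → ℕ) : Prop :=
  (∀ r c, IsCell out inn r c → IsCell out inn r (c + 1) → T r c ≤ T r (c + 1)) ∧
  (∀ r c, IsCell out inn r c → IsCell out inn (r + 1) c → T r c < T (r + 1) c)

/-- The cell `(r, c)` is the top cell of column `c` of the skew diagram. -/
def ColTop (out inn : ℕ → ℕ) (c r : ℕ) : Prop :=
  IsCell out inn r c ∧ ∀ r' : ℕ, r' < r → ¬ IsCell out inn r' c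

instance (out inn : ℕ → ℕ) (c r : ℕ) : Decidable (ColTop out inn c r) :=
  inferInstanceAs (Decidable (_ ∧ _))

/-- The reading word of a skew tableau with `n` rows: rows read from bottom to
top, each row from left to right. -/
def readingWord (out inn : ℕ → ℕ) (T : ℕ → ℕ → ℕ) (n : ℕ) : List ℕ :=
  ((List.range n).reverse).flatMap fun r =>
    (List.range' (inn r) (out r - inn r)).map (T r)

/-- The reading word of the tableau obtained by removing, in each of the last
`ℓ` columns (columns `out 0 − ℓ, …, out 0 − 1`), the top cell of that column. -/
def readingWordRemoved (out inn : ℕ → ℕ) (T : ℕ → ℕ → ℕ) (n ℓ : ℕ) : List ℕ :=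
  ((List.range n).reverse).flatMap fun r =>
    (((List.range' (inn r) (out r - inn r)).filter
      (fun c => ¬ (out 0 - ℓ ≤ c ∧ ColTop out inn c r))).map (T r))

namespace S8


theorem ke_refl (w : List ℕ) : KnuthEquiv w w := Relation.EqvGen.refl w

theorem ke_symm {w w' : List ℕ} (h : KnuthEquiv w w') : KnuthEquiv w' w :=
  Relation.EqvGen.symm _ _ h

theorem ke_trans {w₁ w₂ w₃ : List ℕ} (h : KnuthEquiv w₁ w₂) (h' : KnuthEquiv w₂ w₃) :
    KnuthEquiv w₁ w₃ := Relation.EqvGen.trans _ _ _ h h'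

theorem ke_step {w w' : List ℕ} (h : KnuthStep w w') : KnuthEquiv w w' :=
  Relation.EqvGen.rel _ _ h

theorem knuthStep_append_left (x : List ℕ) {w w' : List ℕ} (h : KnuthStep w w') :
    KnuthStep (x ++ w) (x ++ w') := by
  cases h with
  | rel1 u v a c d h1 h2 =>
      have := KnuthStep.rel1 (x ++ u) v a c d h1 h2
      simpa [List.append_assoc] using this
  | rel2 u v a c d h1 h2 =>
      have := KnuthStep.rel2 (x ++ u) v a c d h1 h2
      simpa [List.append_assoc] using this

theorem knuthStep_append_right (x : List ℕ) {w w' : List ℕ} (h : KnuthStep w w') :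
    KnuthStep (w ++ x) (w' ++ x) := by
  cases h with
  | rel1 u v a c d h1 h2 =>
      have := KnuthStep.rel1 u (v ++ x) a c d h1 h2
      simpa [List.append_assoc] using this
  | rel2 u v a c d h1 h2 =>
      have := KnuthStep.rel2 u (v ++ x) a c d h1 h2
      simpa [List.append_assoc] using this

theorem ke_append_left (x : List ℕ) {w w' : List ℕ} (h : KnuthEquiv w w') :
    KnuthEquiv (x ++ w) (x ++ w') := by
  induction h with
  | rel _ _ h => exact ke_step (knuthStep_append_left x h)
  | refl _ => exact ke_refl _
  | symm _ _ _ ih => exact ke_symm ih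
  | trans _ _ _ _ _ ih1 ih2 => exact ke_trans ih1 ih2

theorem ke_append_right (x : List ℕ) {w w' : List ℕ} (h : KnuthEquiv w w') :
    KnuthEquiv (w ++ x) (w' ++ x) := by
  induction h with
  | rel _ _ h => exact ke_step (knuthStep_append_right x h)
  | refl _ => exact ke_refl _
  | symm _ _ _ ih => exact ke_symm ih
  | trans _ _ _ _ _ ih1 ih2 => exact ke_trans ih1 ih2

/-- move `w` left across a sorted block `R`, with pivot `y` in front. -/
theorem moveW {y w : ℕ} (R V : List ℕ) (hR : R.Pairwise (· ≤ ·))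
    (hyR : ∀ r ∈ R, y ≤ r) (hw : w < y) :
    KnuthEquiv ([y] ++ R ++ [w] ++ V) ([y, w] ++ R ++ V) := by
  induction R generalizing y with
  | nil => exact ke_refl _
  | cons r R' ih =>
      have hR' : R'.Pairwise (· ≤ ·) := hR.of_cons
      have hrR' : ∀ x ∈ R', r ≤ x := fun x hx => (List.pairwise_cons.mp hR).1 x hx
      have hwr : w < r := lt_of_lt_of_le hw (hyR r (by simp))
      have step1 : KnuthEquiv ([y] ++ (r :: R') ++ [w] ++ V) ([y] ++ ([r, w] ++ R' ++ V)) := by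
        have := ih hR' hrR' hwr
        have h2 := ke_append_left [y] this
        simpa [List.append_assoc] using h2
      have step2 : KnuthStep ([] ++ [y, r, w] ++ (R' ++ V)) ([] ++ [y, w, r] ++ (R' ++ V)) :=
        KnuthStep.rel1 [] (R' ++ V) w y r hw (hyR r (by simp))
      have step2' : KnuthEquiv ([y] ++ ([r, w] ++ R' ++ V)) ([y, w] ++ (r :: R') ++ V) := by
        have := ke_step step2
        simpa [List.append_assoc] using this
      exact ke_trans step1 step2'

/-- commute a strictly decreasing block `C` (all `< z`) left across a sorted block `R`
(all `≥ z`), with pivot `z` in front. -/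
theorem blockComm {z : ℕ} (C R V : List ℕ) (hC : C.Pairwise (· > ·))
    (hCz : ∀ x ∈ C, x < z) (hR : R.Pairwise (· ≤ ·)) (hzR : ∀ r ∈ R, z ≤ r) :
    KnuthEquiv ([z] ++ R ++ C ++ V) ([z] ++ C ++ R ++ V) := by
  induction C generalizing z with
  | nil => simpa using ke_refl ([z] ++ R ++ V)
  | cons w C' ih =>
      have h1 : KnuthEquiv ([z] ++ R ++ [w] ++ (C' ++ V)) ([z, w] ++ R ++ (C' ++ V)) :=
        moveW R (C' ++ V) hR hzR (hCz w (by simp))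
      have h2 : KnuthEquiv ([w] ++ R ++ C' ++ V) ([w] ++ C' ++ R ++ V) :=
        ih hC.of_cons (fun x hx => (List.pairwise_cons.mp hC).1 x hx)
          (fun r hr => le_of_lt (lt_of_lt_of_le (hCz w (by simp)) (hzR r hr)))
      have h2' := ke_append_left [z] h2
      have h1' : KnuthEquiv ([z] ++ R ++ (w :: C') ++ V) ([z] ++ ([w] ++ R ++ C' ++ V)) := by
        simpa [List.append_assoc] using h1
      have h2'' : KnuthEquiv ([z] ++ ([w] ++ R ++ C' ++ V)) ([z] ++ (w :: C') ++ R ++ V) := by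
        simpa [List.append_assoc] using h2'
      exact ke_trans h1' h2''


theorem repshift {b : ℕ} (j : ℕ) (X : List ℕ) :
    b :: (List.replicate j b ++ X) = List.replicate j b ++ (b :: X) := by
  induction j with
  | zero => rfl
  | succ j ih => simp [List.replicate_succ, ih]

/-- pull a `b` left across a strictly decreasing block `D`,
with a companion `y < min D`, `b ≤ y` staying behind. -/
theorem crossL {b : ℕ} (D : List ℕ) (hD : D.Pairwise (· > ·)) :
    ∀ (y : ℕ) (V : List ℕ), b ≤ y → (∀ x ∈ D, y < x) →
    KnuthEquiv (D ++ [b, y] ++ V) ([b] ++ D ++ [y] ++ V) := by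
  induction D using List.reverseRecOn with
  | nil => intro y V _ _; exact ke_refl _
  | append_singleton D'' w ih =>
      intro y V hby hyD
      have hw : y < w := hyD w (by simp)
      have hD'' : D''.Pairwise (· > ·) := hD.sublist (by simp)
      have hwD'' : ∀ x ∈ D'', w < x := by
        have := List.pairwise_append.mp hD
        exact fun x hx => this.2.2 x hx w (by simp)
      have s1 : KnuthEquiv (D'' ++ [w] ++ [b, y] ++ V) (D'' ++ [b, w] ++ ([y] ++ V)) := by
        have st : KnuthStep (D'' ++ [b, w, y] ++ V) (D'' ++ [w, b, y] ++ V) :=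
          KnuthStep.rel2 D'' V b y w hby hw
        have := ke_symm (ke_step st)
        simpa [List.append_assoc] using this
      have s2 : KnuthEquiv (D'' ++ [b, w] ++ ([y] ++ V)) ([b] ++ (D'' ++ [w]) ++ [y] ++ V) := by
        have := ih hD'' w ([y] ++ V) (le_of_lt (lt_of_le_of_lt hby hw)) hwD''
        simpa [List.append_assoc] using this
      exact ke_trans s1 s2

/-- `rep j` = `j` copies of `b`. -/
theorem pull {b : ℕ} (D : List ℕ) (hD : D.Pairwise (· > ·)) (hbD : ∀ x ∈ D, b < x) :
    ∀ j, KnuthEquiv (D ++ List.replicate (j + 1) b) (List.replicate j b ++ D ++ [b]) := by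
  intro j
  induction j with
  | zero => simpa using ke_refl (D ++ [b])
  | succ j ih =>
      have c1 : KnuthEquiv (D ++ [b, b] ++ List.replicate j b)
          ([b] ++ D ++ [b] ++ List.replicate j b) := crossL D hD b (List.replicate j b) le_rfl hbD
      have c1' : KnuthEquiv (D ++ List.replicate (j + 2) b)
          ([b] ++ (D ++ List.replicate (j + 1) b)) := by
        simpa [List.append_assoc, List.replicate_succ] using c1
      have c2 := ke_append_left [b] ih
      have : KnuthEquiv (D ++ List.replicate (j + 2) b)
          ([b] ++ (List.replicate j b ++ D ++ [b])) := ke_trans c1' c2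
      simpa [List.append_assoc, List.replicate_succ] using this

theorem push {b : ℕ} (D : List ℕ) (hD : D.Pairwise (· > ·)) (hbD : ∀ x ∈ D, b < x) :
    ∀ j (V : List ℕ), KnuthEquiv (List.replicate j b ++ D ++ [b] ++ V)
      (D ++ List.replicate (j + 1) b ++ V) := by
  intro j
  induction j with
  | zero => intro V; simpa [List.replicate_succ] using ke_refl (D ++ [b] ++ V)
  | succ j ih =>
      intro V
      have c1 : KnuthEquiv ([b] ++ D ++ [b] ++ V) (D ++ [b, b] ++ V) :=
        ke_symm (crossL D hD b V le_rfl hbD)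
      have c1' := ke_append_left (List.replicate j b) c1
      have c2 := ih ([b] ++ V)
      have h1 : KnuthEquiv (List.replicate (j + 1) b ++ D ++ [b] ++ V)
          (List.replicate j b ++ D ++ [b] ++ ([b] ++ V)) := by
        simpa [List.append_assoc, List.replicate_succ, repshift] using c1'
      have h2 : KnuthEquiv (List.replicate j b ++ D ++ [b] ++ ([b] ++ V))
          (D ++ List.replicate (j + 2) b ++ V) := by
        simpa [List.append_assoc, List.replicate_succ, repshift] using c2
      exact ke_trans h1 h2

theorem travcol {b : ℕ} (Ds : List (List ℕ))
    (h : ∀ D ∈ Ds, D.Pairwise (· > ·) ∧ ∀ x ∈ D, b < x) :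
    ∀ j, Ds.length ≤ j →
      KnuthEquiv ([b] ++ Ds.flatten ++ List.replicate j b)
        (Ds.flatten ++ List.replicate (j + 1) b) := by
  induction Ds using List.reverseRecOn with
  | nil =>
      intro j _
      simpa [List.replicate_succ] using ke_refl (b :: List.replicate j b)
  | append_singleton Ds' D ih =>
      intro j hj
      have hj1 : 1 ≤ j := le_trans (by simp) hj
      obtain ⟨j', rfl⟩ : ∃ j', j = j' + 1 := ⟨j - 1, (Nat.succ_pred_eq_of_pos hj1).symm⟩
      have hD : D.Pairwise (· > ·) ∧ ∀ x ∈ D, b < x := h D (by simp)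
      have hDs' : ∀ D' ∈ Ds', D'.Pairwise (· > ·) ∧ ∀ x ∈ D', b < x :=
        fun D' hD' => h D' (by simp [hD'])
      have e1 : KnuthEquiv ([b] ++ (Ds' ++ [D]).flatten ++ List.replicate (j' + 1) b)
          (([b] ++ Ds'.flatten ++ List.replicate j' b) ++ (D ++ [b])) := by
        have := ke_append_left ([b] ++ Ds'.flatten) (pull D hD.1 hD.2 j')
        simpa [List.append_assoc] using this
      have e2 : KnuthEquiv (([b] ++ Ds'.flatten ++ List.replicate j' b) ++ (D ++ [b]))
          ((Ds'.flatten ++ List.replicate (j' + 1) b) ++ (D ++ [b])) := by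
        have hlen : Ds'.length ≤ j' := by
          have := hj; simp at this; omega
        exact ke_append_right (D ++ [b]) (ih hDs' j' hlen)
      have e3 : KnuthEquiv ((Ds'.flatten ++ List.replicate (j' + 1) b) ++ (D ++ [b]))
          ((Ds' ++ [D]).flatten ++ List.replicate (j' + 1 + 1) b) := by
        have := ke_append_left Ds'.flatten (push D hD.1 hD.2 (j' + 1) [])
        simpa [List.append_assoc] using this
      exact ke_trans e1 (ke_trans e2 e3)

theorem extract {b : ℕ} {ι : Type} (D : ι → List ℕ) (cs : List ι)
    (h : ∀ c ∈ cs, (D c).Pairwise (· > ·) ∧ ∀ x ∈ D c, b < x) :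
    KnuthEquiv (cs.flatMap (fun c => D c ++ [b]))
      (cs.flatMap D ++ List.replicate cs.length b) := by
  induction cs with
  | nil => exact ke_refl _
  | cons c cs' ih =>
      have h1 := ke_append_left (D c ++ [b]) (ih (fun c' hc' => h c' (by simp [hc'])))
      have h2 : KnuthEquiv ([b] ++ (cs'.map D).flatten ++ List.replicate cs'.length b)
          ((cs'.map D).flatten ++ List.replicate (cs'.length + 1) b) := by
        refine travcol (cs'.map D) ?_ cs'.length (by simp)
        intro D' hD'
        obtain ⟨c', hc', rfl⟩ := List.mem_map.mp hD'
        exact h c' (by simp [hc'])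
      have h2' := ke_append_left (D c) h2
      have e1 : (c :: cs').flatMap (fun c => D c ++ [b]) =
          (D c ++ [b]) ++ cs'.flatMap (fun c => D c ++ [b]) := by simp
      have e2 : (D c ++ [b]) ++ (cs'.flatMap D ++ List.replicate cs'.length b) =
          D c ++ ([b] ++ (cs'.map D).flatten ++ List.replicate cs'.length b) := by
        simp [List.append_assoc, List.flatMap_def]
      have e3 : D c ++ ((cs'.map D).flatten ++ List.replicate (cs'.length + 1) b) =
          (c :: cs').flatMap D ++ List.replicate (c :: cs').length b := by
        simp [List.append_assoc, List.flatMap_def]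
      rw [e1]
      refine ke_trans h1 ?_
      rw [e2]
      refine ke_trans h2' ?_
      rw [e3]
      exact ke_refl _

/-! ### Tableau definitions -/

def Fw (out inn : ℕ → ℕ) (T : ℕ → ℕ → ℕ) (a n : ℕ) : List ℕ :=
  ((List.range n).reverse).flatMap fun r =>
    (((List.range' (inn r) (out r - inn r)).filter
      (fun c => ¬ (a ≤ c ∧ ColTop out inn c r))).map (T r))

def colW (out inn : ℕ → ℕ) (T : ℕ → ℕ → ℕ) (a γ n : ℕ) : List ℕ :=
  ((List.range n).reverse).filterMap fun r =>
    if IsCell out inn r γ ∧ ¬ (a ≤ γ ∧ ColTop out inn γ r) then some (T r γ) else none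

def innP (out inn : ℕ → ℕ) (γ : ℕ) : ℕ → ℕ := fun r => max (inn r) (min (γ + 1) (out r))

def innK (out inn : ℕ → ℕ) (k : ℕ) : ℕ → ℕ := fun r => max (inn r) (min k (out r))

theorem fmCongr {α β : Type} {f g : α → Option β} :
    ∀ (l : List α), (∀ x ∈ l, f x = g x) → l.filterMap f = l.filterMap g := by
  intro l h
  induction l with
  | nil => rfl
  | cons x t ih =>
      rw [List.filterMap_cons, List.filterMap_cons, h x (by simp), ih (fun y hy => h y (by simp [hy]))]

theorem pairwise_filterMap {α β : Type} (f : α → Option β) {R : α → α → Prop}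
    {S : β → β → Prop} {l : List α} (hl : l.Pairwise R)
    (h : ∀ x y, R x y → ∀ c, f x = some c → ∀ d, f y = some d → S c d) :
    (l.filterMap f).Pairwise S := by
  induction l with
  | nil => simp
  | cons x t ih =>
      rw [List.filterMap_cons]
      cases hf : f x with
      | none => exact ih hl.of_cons
      | some c =>
          refine List.pairwise_cons.mpr ⟨?_, ih hl.of_cons⟩
          intro d hd
          obtain ⟨y, hy, hfy⟩ := List.mem_filterMap.mp hd
          exact h x y ((List.pairwise_cons.mp hl).1 y hy) c hf d hfy

section Tab

variable {out inn : ℕ → ℕ} {T : ℕ → ℕ → ℕ}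

theorem mem_row_iff {r c : ℕ} :
    c ∈ List.range' (inn r) (out r - inn r) ↔ IsCell out inn r c := by
  rw [List.mem_range'_1]
  unfold IsCell
  omega

theorem rowLE (hT : IsSkewTab out inn T) {r c c' : ℕ}
    (h : IsCell out inn r c) (h' : IsCell out inn r c') (hle : c ≤ c') :
    T r c ≤ T r c' := by
  have key : ∀ d, IsCell out inn r (c + d) → T r c ≤ T r (c + d) := by
    intro d
    induction d with
    | zero => intro _; exact le_rfl
    | succ d ih =>
        intro h'
        have hmid : IsCell out inn r (c + d) := ⟨by have := h.1; omega, by have := h'.2; omega⟩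
        exact le_trans (ih hmid) (hT.1 r (c + d) hmid h')
  have e : c' = c + (c' - c) := by omega
  rw [e] at h' ⊢
  exact key _ h'

theorem colLT (hout : ∀ i j : ℕ, i ≤ j → out j ≤ out i)
    (hinn : ∀ i j : ℕ, i ≤ j → inn j ≤ inn i) (hT : IsSkewTab out inn T)
    {r r' c : ℕ} (h : IsCell out inn r c) (h' : IsCell out inn r' c) (hlt : r < r') :
    T r c < T r' c := by
  have key : ∀ d, IsCell out inn (r + d + 1) c → T r c < T (r + d + 1) c := by
    intro d
    induction d with
    | zero => intro h'; exact hT.2 r c h h'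
    | succ d ih =>
        intro h'
        have hmid : IsCell out inn (r + d + 1) c :=
          ⟨le_trans (hinn r (r + d + 1) (by omega)) h.1,
           lt_of_lt_of_le h'.2 (hout (r + d + 1) (r + d + 2) (by omega))⟩
        exact lt_trans (ih hmid) (hT.2 (r + d + 1) c hmid h')
  have e : r' = r + (r' - r - 1) + 1 := by omega
  rw [e] at h' ⊢
  exact key _ h'

theorem top_le_row {c rt r : ℕ} (ht : ColTop out inn c rt) (h : IsCell out inn r c) :
    rt ≤ r := by
  by_contra hc
  exact ht.2 r (by omega) h

end Tab

section Tab2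

variable {out inn : ℕ → ℕ} {T : ℕ → ℕ → ℕ}

theorem cell_innP {γ c r' : ℕ} (hc : γ + 1 ≤ c) :
    IsCell out (innP out inn γ) r' c ↔ IsCell out inn r' c := by
  unfold IsCell innP; omega

theorem coltop_innP {γ c r : ℕ} (hc : γ + 1 ≤ c) :
    ColTop out (innP out inn γ) c r ↔ ColTop out inn c r := by
  unfold ColTop
  constructor
  · rintro ⟨h1, h2⟩
    exact ⟨(cell_innP hc).mp h1, fun r' hr' hcell => h2 r' hr' ((cell_innP hc).mpr hcell)⟩
  · rintro ⟨h1, h2⟩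
    exact ⟨(cell_innP hc).mpr h1, fun r' hr' hcell => h2 r' hr' ((cell_innP hc).mp hcell)⟩

theorem Fw_congr {inn1 inn2 : ℕ → ℕ} {a n : ℕ}
    (h : ∀ r < n, (((List.range' (inn1 r) (out r - inn1 r)).filter
        (fun c => ¬ (a ≤ c ∧ ColTop out inn1 c r))).map (T r)) =
      (((List.range' (inn2 r) (out r - inn2 r)).filter
        (fun c => ¬ (a ≤ c ∧ ColTop out inn2 c r))).map (T r))) :
    Fw out inn1 T a n = Fw out inn2 T a n := by
  unfold Fw
  rw [List.flatMap_def, List.flatMap_def]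
  congr 1
  apply List.map_congr_left
  intro r hr
  exact h r (by simpa using hr)

/-- the filtered row of `innP γ` agrees with that of `inn` when the row starts
beyond `γ`. -/
theorem row_innP_eq {γ r a : ℕ} (hsub : ∀ r, inn r ≤ out r)
    (hge : γ + 1 ≤ inn r ∨ out r ≤ inn r) :
    (((List.range' (innP out inn γ r) (out r - innP out inn γ r)).filter
        (fun c => ¬ (a ≤ c ∧ ColTop out (innP out inn γ) c r))).map (T r)) =
      (((List.range' (inn r) (out r - inn r)).filter
        (fun c => ¬ (a ≤ c ∧ ColTop out inn c r))).map (T r)) := by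
  rcases hge with hge | hge
  · have hP : innP out inn γ r = inn r := by unfold innP; omega
    rw [hP]
    congr 1
    apply List.filter_congr
    intro c hc
    have hc' : γ + 1 ≤ c := le_trans hge (List.mem_range'_1.mp hc).1
    simp only [decide_eq_decide]
    rw [coltop_innP hc']
  · have h1 : out r - inn r = 0 := by omega
    have h2 : out r - innP out inn γ r = 0 := by unfold innP; omega
    rw [h1, h2]
    simp

end Tab2

section Peel

variable {out inn : ℕ → ℕ} {T : ℕ → ℕ → ℕ}

theorem peel (a γ n : ℕ)
    (hout : ∀ i j : ℕ, i ≤ j → out j ≤ out i)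
    (hinn : ∀ i j : ℕ, i ≤ j → inn j ≤ inn i)
    (hsub : ∀ r, inn r ≤ out r)
    (hT : IsSkewTab out inn T)
    (Hγ : ∀ r, inn r < out r → γ ≤ inn r) :
    KnuthEquiv (Fw out inn T a n) (colW out inn T a γ n ++ Fw out (innP out inn γ) T a n) := by
  induction n with
  | zero => simpa [Fw, colW] using ke_refl ([] : List ℕ)
  | succ n ih =>
      have hFsucc : ∀ (inn' : ℕ → ℕ), Fw out inn' T a (n+1) =
          (((List.range' (inn' n) (out n - inn' n)).filter
            (fun c => ¬ (a ≤ c ∧ ColTop out inn' c n))).map (T n)) ++ Fw out inn' T a n := by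
        intro inn'
        unfold Fw
        rw [List.range_succ, List.reverse_append]
        simp
      have hCsucc : colW out inn T a γ (n+1) =
          (if IsCell out inn n γ ∧ ¬ (a ≤ γ ∧ ColTop out inn γ n) then [T n γ] else []) ++
            colW out inn T a γ n := by
        unfold colW
        rw [List.range_succ, List.reverse_append]
        simp only [List.reverse_singleton, List.singleton_append, List.filterMap_cons]
        split <;> simp_all
      by_cases hE : out n ≤ inn n
      · have h1 : out n - inn n = 0 := by omega
        have h2 : out n - innP out inn γ n = 0 := by unfold innP; omega
        have h3 : ¬ (IsCell out inn n γ ∧ ¬ (a ≤ γ ∧ ColTop out inn γ n)) := by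
          rintro ⟨hcell, -⟩
          have := hcell.1; have := hcell.2; omega
        rw [hFsucc inn, hFsucc (innP out inn γ), hCsucc, h1, h2, if_neg h3]
        simpa using ih
      · push_neg at hE
        have hγn : γ ≤ inn n := Hγ n hE
        by_cases hglt : γ < inn n
        · -- column γ is empty; nothing changes
          have hcol : colW out inn T a γ (n+1) = [] := by
            apply List.filterMap_eq_nil_iff.mpr
            intro r hr
            rw [if_neg]
            rintro ⟨hcell, -⟩
            have hrn : r ≤ n := by simpa [Nat.lt_succ_iff] using hr
            have := hinn r n hrn
            have := hcell.1
            omega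
          have hFeq : Fw out (innP out inn γ) T a (n+1) = Fw out inn T a (n+1) :=
            Fw_congr (fun r hr => row_innP_eq hsub (by
              by_cases hre : out r ≤ inn r
              · exact Or.inr hre
              · left
                have := Hγ r (by omega)
                have := hinn r n (by omega)
                omega))
          rw [hcol, hFeq]
          simpa using ke_refl (Fw out inn T a (n+1))
        · -- γ = inn n
          have hγeq : γ = inn n := by omega
          have hcelln : IsCell out inn n γ := ⟨by omega, by omega⟩
          set z := T n γ with hz
          set m := out n - (γ + 1) with hm
          have hrow : List.range' (inn n) (out n - inn n) = γ :: List.range' (γ + 1) m := by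
            rw [← hγeq, show out n - γ = m + 1 by omega] at *
            rw [← hγeq]
            exact List.range'_succ (s := γ) (n := m) (step := 1)
          have hinnPn : innP out inn γ n = γ + 1 := by unfold innP; omega
          set tail := ((List.range' (γ + 1) m).filter
            (fun c => ¬ (a ≤ c ∧ ColTop out inn c n))).map (T n) with htail
          have hrowP : (((List.range' (innP out inn γ n) (out n - innP out inn γ n)).filter
              (fun c => ¬ (a ≤ c ∧ ColTop out (innP out inn γ) c n))).map (T n)) = tail := by
            rw [hinnPn, show out n - (γ + 1) = m from rfl]
            congr 1
            apply List.filter_congr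
            intro c hc
            have hc' : γ + 1 ≤ c := (List.mem_range'_1.mp hc).1
            simp only [decide_eq_decide]
            rw [coltop_innP hc']
          have hFP : Fw out (innP out inn γ) T a (n+1) = tail ++ Fw out (innP out inn γ) T a n := by
            rw [hFsucc (innP out inn γ), hrowP]
          by_cases hrem : a ≤ γ ∧ ColTop out inn γ n
          · -- the bottom cell of column γ is removed ; no cells above it
            have hcol1 : colW out inn T a γ (n+1) = colW out inn T a γ n := by
              rw [hCsucc, if_neg (by tauto)]
              simp
            have hcoln : colW out inn T a γ n = [] := by
              apply List.filterMap_eq_nil_iff.mpr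
              intro r hr
              rw [if_neg]
              rintro ⟨hcell, -⟩
              exact hrem.2.2 r (by simpa [Nat.lt_succ_iff, List.mem_range] using hr) hcell
            have hrowz : (((List.range' (inn n) (out n - inn n)).filter
                (fun c => ¬ (a ≤ c ∧ ColTop out inn c n))).map (T n)) = tail := by
              rw [hrow, List.filter_cons, if_neg (by simpa using hrem)]
            rw [hFsucc inn, hrowz, hFP, hcol1, hcoln]
            simpa using ke_append_left tail (by simpa [hcoln] using ih)
          · -- the bottom cell of column γ is kept
            have hcond : IsCell out inn n γ ∧ ¬ (a ≤ γ ∧ ColTop out inn γ n) := ⟨hcelln, hrem⟩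
            have hcol1 : colW out inn T a γ (n+1) = z :: colW out inn T a γ n := by
              rw [hCsucc, if_pos hcond]; rfl
            have hrowz : (((List.range' (inn n) (out n - inn n)).filter
                (fun c => ¬ (a ≤ c ∧ ColTop out inn c n))).map (T n)) = z :: tail := by
              rw [hrow, List.filter_cons, if_pos (by simp only [decide_eq_true_eq]; exact hrem)]
              rfl
            -- facts about `Cup`
            set Cup := colW out inn T a γ n with hCup
            have hCupMem : ∀ w ∈ Cup, ∃ r, r < n ∧ IsCell out inn r γ ∧ w = T r γ := by
              intro w hw
              obtain ⟨r, hr, hfr⟩ := List.mem_filterMap.mp hw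
              by_cases hco : IsCell out inn r γ ∧ ¬ (a ≤ γ ∧ ColTop out inn γ r)
              · rw [if_pos hco] at hfr
                exact ⟨r, by simpa [Nat.lt_succ_iff, List.mem_range] using hr, hco.1,
                  (Option.some_inj.mp hfr).symm⟩
              · rw [if_neg hco] at hfr; cases hfr
            have hCupLT : ∀ w ∈ Cup, w < z := by
              intro w hw
              obtain ⟨r, hrn, hcell, rfl⟩ := hCupMem w hw
              exact colLT hout hinn hT hcell hcelln hrn
            have hCupPW : Cup.Pairwise (· > ·) := by
              apply pairwise_filterMap
              · exact List.pairwise_reverse.mpr (by simpa using List.pairwise_lt_range (n := n))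
              · intro x y hxy c hc d hd
                by_cases hcx : IsCell out inn x γ ∧ ¬ (a ≤ γ ∧ ColTop out inn γ x)
                · by_cases hcy : IsCell out inn y γ ∧ ¬ (a ≤ γ ∧ ColTop out inn γ y)
                  · rw [if_pos hcx] at hc; rw [if_pos hcy] at hd
                    cases hc; cases hd
                    exact colLT hout hinn hT hcy.1 hcx.1 hxy
                  · rw [if_neg hcy] at hd; cases hd
                · rw [if_neg hcx] at hc; cases hc
            -- facts about `tail`
            have hmemcell : ∀ c ∈ List.range' (γ + 1) m, IsCell out inn n c := by
              intro c hc
              have := List.mem_range'_1.mp hc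
              exact ⟨by omega, by omega⟩
            have htailPW : tail.Pairwise (· ≤ ·) := by
              rw [htail, List.pairwise_map]
              apply List.Pairwise.filter
              refine List.Pairwise.imp_of_mem ?_ (List.pairwise_lt_range' (s := γ+1) (n := m))
              intro c c' hc hc' hlt
              exact rowLE hT (hmemcell c hc) (hmemcell c' hc') (le_of_lt hlt)
            have htailGE : ∀ x ∈ tail, z ≤ x := by
              intro x hx
              rw [htail] at hx
              obtain ⟨c, hcf, rfl⟩ := List.mem_map.mp hx
              have hc0 := (List.mem_filter.mp hcf).1
              exact rowLE hT hcelln (hmemcell c hc0) (by have := (List.mem_range'_1.mp hc0).1; omega)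
            -- assemble
            have A : KnuthEquiv (Fw out inn T a (n+1))
                ([z] ++ tail ++ (Cup ++ Fw out (innP out inn γ) T a n)) := by
              rw [hFsucc inn, hrowz]
              have := ke_append_left (z :: tail) ih
              simpa [List.append_assoc] using this
            have B := blockComm Cup tail (Fw out (innP out inn γ) T a n) hCupPW hCupLT htailPW htailGE
            have A2 : KnuthEquiv (Fw out inn T a (n+1))
                ([z] ++ Cup ++ tail ++ Fw out (innP out inn γ) T a n) := by
              refine ke_trans A ?_
              simpa [List.append_assoc] using B
            rw [hcol1, hFP]
            simpa [List.append_assoc] using A2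

end Peel

section RowCol

variable {out inn : ℕ → ℕ} {T : ℕ → ℕ → ℕ}

theorem innP_innK (k : ℕ) : innP out (innK out inn k) k = innK out inn (k+1) :=
  funext fun r => by unfold innP innK; omega

theorem innK_zero : innK out inn 0 = inn :=
  funext fun r => by unfold innK; omega

theorem cell_innK_imp {k r c : ℕ} (h : IsCell out (innK out inn k) r c) :
    IsCell out inn r c := by
  unfold IsCell innK at *; omega

theorem cell_innK_at {k r : ℕ} :
    IsCell out (innK out inn k) r k ↔ IsCell out inn r k := by
  unfold IsCell innK; omega

theorem coltop_innK_at {k r : ℕ} :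
    ColTop out (innK out inn k) k r ↔ ColTop out inn k r := by
  unfold ColTop
  constructor
  · rintro ⟨h1, h2⟩
    exact ⟨cell_innK_at.mp h1, fun r' hr' hcell => h2 r' hr' (cell_innK_at.mpr hcell)⟩
  · rintro ⟨h1, h2⟩
    exact ⟨cell_innK_at.mpr h1, fun r' hr' hcell => h2 r' hr' (cell_innK_at.mp hcell)⟩

theorem colW_innK (a k n : ℕ) :
    colW out (innK out inn k) T a k n = colW out inn T a k n := by
  apply fmCongr
  intro r _
  refine if_congr ?_ rfl rfl
  rw [cell_innK_at, coltop_innK_at]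

theorem rowcol_aux (a n : ℕ)
    (hout : ∀ i j : ℕ, i ≤ j → out j ≤ out i)
    (hinn : ∀ i j : ℕ, i ≤ j → inn j ≤ inn i)
    (hsub : ∀ r, inn r ≤ out r)
    (hT : IsSkewTab out inn T) :
    ∀ (m k : ℕ),
      KnuthEquiv (Fw out (innK out inn k) T a n)
        ((List.range' k m).flatMap (fun γ => colW out inn T a γ n) ++
          Fw out (innK out inn (k + m)) T a n) := by
  intro m
  induction m with
  | zero => intro k; simpa using ke_refl (Fw out (innK out inn k) T a n)
  | succ m ih =>
      intro k
      have hinnK : ∀ i j : ℕ, i ≤ j → innK out inn k j ≤ innK out inn k i := by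
        intro i j h
        have h1 := hinn i j h; have h2 := hout i j h
        unfold innK; omega
      have hsubK : ∀ r, innK out inn k r ≤ out r := by
        intro r; have := hsub r; unfold innK; omega
      have hTK : IsSkewTab out (innK out inn k) T :=
        ⟨fun r c h h' => hT.1 r c (cell_innK_imp h) (cell_innK_imp h'),
         fun r c h h' => hT.2 r c (cell_innK_imp h) (cell_innK_imp h')⟩
      have HγK : ∀ r, innK out inn k r < out r → k ≤ innK out inn k r := by
        intro r h; unfold innK at *; omega
      have h1 := peel (out := out) (inn := innK out inn k) (T := T) a k n
        hout hinnK hsubK hTK HγK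
      rw [innP_innK, colW_innK] at h1
      have h2 := ih (k+1)
      have h3 := ke_append_left (colW out inn T a k n) h2
      refine ke_trans h1 (ke_trans h3 ?_)
      rw [List.range'_succ]
      have e : k + 1 + m = k + (m + 1) := by omega
      rw [e]
      simpa [List.append_assoc] using
        ke_refl (colW out inn T a k n ++
          ((List.range' (k+1) m).flatMap (fun γ => colW out inn T a γ n) ++
            Fw out (innK out inn (k + (m+1))) T a n))

theorem Fw_top_nil (a n : ℕ)
    (hout : ∀ i j : ℕ, i ≤ j → out j ≤ out i)
    (hsub : ∀ r, inn r ≤ out r) :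
    Fw out (innK out inn (out 0)) T a n = [] := by
  unfold Fw
  apply List.flatMap_eq_nil_iff.mpr
  intro r _
  have h1 := hout 0 r (Nat.zero_le r)
  have h2 := hsub r
  have : out r - innK out inn (out 0) r = 0 := by unfold innK; omega
  rw [this]
  simp

theorem rowcol (a n : ℕ)
    (hout : ∀ i j : ℕ, i ≤ j → out j ≤ out i)
    (hinn : ∀ i j : ℕ, i ≤ j → inn j ≤ inn i)
    (hsub : ∀ r, inn r ≤ out r)
    (hT : IsSkewTab out inn T) :
    KnuthEquiv (Fw out inn T a n)
      ((List.range' 0 (out 0)).flatMap (fun γ => colW out inn T a γ n)) := by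
  have h := rowcol_aux a n hout hinn hsub hT (out 0) 0
  rw [innK_zero] at h
  rw [show 0 + out 0 = out 0 from by omega] at h
  rw [Fw_top_nil a n hout hsub, List.append_nil] at h
  exact h

end RowCol

section Final

variable {out inn : ℕ → ℕ} {T : ℕ → ℕ → ℕ}

theorem fbCongr {α β : Type} {f g : α → List β} :
    ∀ (l : List α), (∀ x ∈ l, f x = g x) → l.flatMap f = l.flatMap g := by
  intro l h
  induction l with
  | nil => rfl
  | cons x t ih => simp only [List.flatMap_cons, h x (by simp),
      ih (fun y hy => h y (by simp [hy]))]

theorem colW_lt {a a' c n : ℕ} (h : c < a) (h' : c < a') :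
    colW out inn T a c n = colW out inn T a' c n := by
  apply fmCongr
  intro r _
  refine if_congr (and_congr_right fun _ => ?_) rfl rfl
  constructor <;> intro _ hx <;> exact absurd hx.1 (by omega)

theorem colW_split {b : ℕ} (a c n : ℕ)
    (hrows : ∀ r, n ≤ r → out r = 0)
    (hc1 : a ≤ c) (hc2 : c < out 0) {rt : ℕ}
    (hTop : ColTop out inn c rt) (hb : T rt c = b) :
    colW out inn T (out 0) c n = colW out inn T a c n ++ [b] := by
  have hrtn : rt < n := by
    by_contra h
    push_neg at h
    have := hTop.1.2
    rw [hrows rt h] at this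
    omega
  have hrev : (List.range n).reverse =
      (List.range' (rt+1) (n - (rt+1))).reverse ++ (rt :: (List.range rt).reverse) := by
    have e0 := List.range'_append (s := 0) (m := rt+1) (n := n-(rt+1)) (step := 1)
    simp only [Nat.zero_add, Nat.one_mul] at e0
    have e0' : rt + 1 + (n - (rt+1)) = n := by omega
    rw [e0'] at e0
    have e1 : List.range n = List.range (rt+1) ++ List.range' (rt+1) (n - (rt+1)) := by
      rw [List.range_eq_range', List.range_eq_range' (n := rt+1), ← e0]
    rw [e1, List.reverse_append, List.range_succ, List.reverse_append]
    simp
  unfold colW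
  rw [hrev, List.filterMap_append, List.filterMap_append]
  have hB : ∀ (X : ℕ), ((rt :: (List.range rt).reverse).filterMap
      (fun r => if IsCell out inn r c ∧ ¬ (X ≤ c ∧ ColTop out inn c r)
        then some (T r c) else none)) =
      (if IsCell out inn rt c ∧ ¬ (X ≤ c ∧ ColTop out inn c rt) then [T rt c] else []) := by
    intro X
    rw [List.filterMap_cons]
    have hnil : ((List.range rt).reverse).filterMap
        (fun r => if IsCell out inn r c ∧ ¬ (X ≤ c ∧ ColTop out inn c r)
          then some (T r c) else none) = [] := by
      apply List.filterMap_eq_nil_iff.mpr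
      intro r hr
      rw [if_neg]
      rintro ⟨h1, -⟩
      exact hTop.2 r (by simpa using hr) h1
    by_cases hco : IsCell out inn rt c ∧ ¬ (X ≤ c ∧ ColTop out inn c rt)
    · simp only [if_pos hco, hnil]
    · simp only [if_neg hco, hnil]
  have hA : ((List.range' (rt+1) (n - (rt+1))).reverse).filterMap
      (fun r => if IsCell out inn r c ∧ ¬ (out 0 ≤ c ∧ ColTop out inn c r)
        then some (T r c) else none) =
      ((List.range' (rt+1) (n - (rt+1))).reverse).filterMap
      (fun r => if IsCell out inn r c ∧ ¬ (a ≤ c ∧ ColTop out inn c r)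
        then some (T r c) else none) := by
    apply fmCongr
    intro r hr
    have hrgt : rt < r := by
      have := (List.mem_range'_1.mp (List.mem_reverse.mp hr)).1
      omega
    refine if_congr (and_congr_right fun _ => ?_) rfl rfl
    constructor
    · intro _ hx
      exact hx.2.2 rt hrgt hTop.1
    · intro _ hx
      omega
  rw [hA, hB (out 0), hB a]
  rw [if_pos ⟨hTop.1, fun hx => by omega⟩, if_neg (fun hx => hx.2 ⟨hc1, hTop⟩)]
  simp [hb]

theorem colW_mem {a c n : ℕ} {w : ℕ} (hw : w ∈ colW out inn T a c n) :
    ∃ r, r < n ∧ IsCell out inn r c ∧ ¬ (a ≤ c ∧ ColTop out inn c r) ∧ w = T r c := by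
  obtain ⟨r, hr, hfr⟩ := List.mem_filterMap.mp hw
  by_cases hco : IsCell out inn r c ∧ ¬ (a ≤ c ∧ ColTop out inn c r)
  · rw [if_pos hco] at hfr
    exact ⟨r, by simpa [Nat.lt_succ_iff, List.mem_range] using hr, hco.1, hco.2,
      (Option.some_inj.mp hfr).symm⟩
  · rw [if_neg hco] at hfr; cases hfr

theorem colW_gt_b {b : ℕ} (a c n : ℕ)
    (hout : ∀ i j : ℕ, i ≤ j → out j ≤ out i)
    (hinn : ∀ i j : ℕ, i ≤ j → inn j ≤ inn i)
    (hT : IsSkewTab out inn T)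
    (hc1 : a ≤ c) {rt : ℕ}
    (hTop : ColTop out inn c rt) (hb : T rt c = b) :
    ∀ x ∈ colW out inn T a c n, b < x := by
  intro x hx
  obtain ⟨r, hrn, hcell, hnot, rfl⟩ := colW_mem hx
  have hne : r ≠ rt := by
    rintro rfl
    exact hnot ⟨hc1, hTop⟩
  have hge : rt ≤ r := top_le_row hTop hcell
  have := colLT hout hinn hT hTop.1 hcell (by omega)
  omega

theorem colW_pairwise (a c n : ℕ)
    (hout : ∀ i j : ℕ, i ≤ j → out j ≤ out i)
    (hinn : ∀ i j : ℕ, i ≤ j → inn j ≤ inn i)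
    (hT : IsSkewTab out inn T) :
    (colW out inn T a c n).Pairwise (· > ·) := by
  apply pairwise_filterMap
  · exact List.pairwise_reverse.mpr (by simpa using List.pairwise_lt_range (n := n))
  · intro x y hxy c' hc d hd
    by_cases hcx : IsCell out inn x c ∧ ¬ (a ≤ c ∧ ColTop out inn c x)
    · by_cases hcy : IsCell out inn y c ∧ ¬ (a ≤ c ∧ ColTop out inn c y)
      · rw [if_pos hcx] at hc; rw [if_pos hcy] at hd
        cases hc; cases hd
        exact colLT hout hinn hT hcy.1 hcx.1 hxy
      · rw [if_neg hcy] at hd; cases hd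
    · rw [if_neg hcx] at hc; cases hc

theorem readingWord_eq (n : ℕ)
    (hout : ∀ i j : ℕ, i ≤ j → out j ≤ out i) :
    readingWord out inn T n = Fw out inn T (out 0) n := by
  unfold readingWord Fw
  rw [List.flatMap_def, List.flatMap_def]
  congr 1
  apply List.map_congr_left
  intro r _
  rw [List.filter_eq_self.mpr]
  intro c hc
  have h0 := (List.mem_range'_1.mp hc).1
  have h1 := (List.mem_range'_1.mp hc).2
  have h2 := hout 0 r (Nat.zero_le r)
  simp only [decide_eq_true_eq]
  rintro ⟨hx, -⟩
  omega

end Final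

end S8

/- STATEMENT 8: Let T be a skew tableau containing the letter b at the top of
each of its last ℓ columns, and let T' be obtained by removing these ℓ letters.
Then the reading word of T is Knuth equivalent to (reading word of T') ++ b^ℓ. -/
theorem stmt8 (out inn : ℕ → ℕ) (T : ℕ → ℕ → ℕ) (n ℓ b : ℕ)
    (hout : ∀ i j : ℕ, i ≤ j → out j ≤ out i)
    (hinn : ∀ i j : ℕ, i ≤ j → inn j ≤ inn i)
    (hsub : ∀ r, inn r ≤ out r)
    (hrows : ∀ r, n ≤ r → out r = 0)
    (hT : IsSkewTab out inn T)
    (hℓ : ℓ ≤ out 0)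
    (htop : ∀ c : ℕ, out 0 - ℓ ≤ c → c < out 0 →
      ∃ r : ℕ, ColTop out inn c r ∧ T r c = b) :
    KnuthEquiv (readingWord out inn T n)
      (readingWordRemoved out inn T n ℓ ++ List.replicate ℓ b) := by
  set a := out 0 - ℓ with ha
  have hrwr : readingWordRemoved out inn T n ℓ = S8.Fw out inn T a n := rfl
  have k1 : KnuthEquiv (readingWord out inn T n)
      ((List.range' 0 (out 0)).flatMap (fun γ => S8.colW out inn T (out 0) γ n)) := by
    rw [S8.readingWord_eq n hout]
    exact S8.rowcol (out 0) n hout hinn hsub hT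
  have hsplitr : List.range' 0 (out 0) = List.range' 0 a ++ List.range' a ℓ := by
    have e0 := List.range'_append (s := 0) (m := a) (n := ℓ) (step := 1)
    simp only [Nat.zero_add, Nat.one_mul] at e0
    rw [show out 0 = a + ℓ from by omega, ← e0]
  have eK : ∀ c ∈ List.range' 0 a,
      S8.colW out inn T (out 0) c n = S8.colW out inn T a c n := by
    intro c hc
    have hm := List.mem_range'_1.mp hc
    exact S8.colW_lt (by omega) (by omega)
  have eD : ∀ c ∈ List.range' a ℓ,
      S8.colW out inn T (out 0) c n = S8.colW out inn T a c n ++ [b] := by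
    intro c hc
    have hm := List.mem_range'_1.mp hc
    have hc1 : a ≤ c := hm.1
    have hc2 : c < out 0 := by omega
    obtain ⟨rt, hTop, hb⟩ := htop c hc1 hc2
    exact S8.colW_split a c n hrows hc1 hc2 hTop hb
  have e_cw : (List.range' 0 (out 0)).flatMap (fun γ => S8.colW out inn T (out 0) γ n)
      = (List.range' 0 a).flatMap (fun γ => S8.colW out inn T a γ n)
        ++ (List.range' a ℓ).flatMap (fun c => S8.colW out inn T a c n ++ [b]) := by
    rw [hsplitr, List.flatMap_append, S8.fbCongr _ eK, S8.fbCongr _ eD]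
  have hprops : ∀ c ∈ List.range' a ℓ,
      (S8.colW out inn T a c n).Pairwise (· > ·) ∧
        ∀ x ∈ S8.colW out inn T a c n, b < x := by
    intro c hc
    have hm := List.mem_range'_1.mp hc
    obtain ⟨rt, hTop, hb⟩ := htop c hm.1 (by omega)
    exact ⟨S8.colW_pairwise a c n hout hinn hT,
      S8.colW_gt_b a c n hout hinn hT hm.1 hTop hb⟩
  have k2 := S8.extract (b := b) (fun c => S8.colW out inn T a c n) (List.range' a ℓ) hprops
  rw [List.length_range'] at k2
  have k2' := S8.ke_append_left
    ((List.range' 0 a).flatMap (fun γ => S8.colW out inn T a γ n)) k2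
  have k3 := S8.ke_symm (S8.rowcol (out := out) (inn := inn) (T := T) a n hout hinn hsub hT)
  have k3' := S8.ke_append_right (List.replicate ℓ b) k3
  refine S8.ke_trans k1 ?_
  rw [e_cw]
  refine S8.ke_trans k2' ?_
  have eback : (List.range' 0 a).flatMap (fun γ => S8.colW out inn T a γ n) ++
      ((List.range' a ℓ).flatMap (fun c => S8.colW out inn T a c n) ++ List.replicate ℓ b) =
      ((List.range' 0 (out 0)).flatMap (fun γ => S8.colW out inn T a γ n)) ++
        List.replicate ℓ b := by
    rw [hsplitr, List.flatMap_append, List.append_assoc]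
  rw [eback, hrwr]
  exact k3'
end

section
/- For m-partitions Λ = (a; λ) and Ω = (b; μ) with Λ dominant (a_1 ≥ ⋯ ≥ a_m), the map 𝔟 is a bijection between the set of skew tableaux of shape μ/λ in which letter ī appears a_i − b_i times, always within the first a_i columns, and the set of skew tableaux of shape (a ∪ λ)/μ in which letter i appears b_i times, always within the first a_i columns. -/
/-- A skew tableau of shape `out/inn` in the barred letters `1̄ > 2̄ > ⋯ > m̄`
(the entry `v ∈ {1,…,m}` records the bar-index, so the barred order is the
reverse of the order on the indices): entries are `0` outside the diagram, rows
weakly increase and columns strictly increase in the barred order. -/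
def IsBarTab (m : ℕ) (out inn : ℕ → ℕ) (T : ℕ → ℕ → ℕ) : Prop :=
  (∀ r c, ¬ IsCell out inn r c → T r c = 0) ∧
  (∀ r c, IsCell out inn r c → 1 ≤ T r c ∧ T r c ≤ m) ∧
  (∀ r c, IsCell out inn r c → IsCell out inn r (c + 1) → T r (c + 1) ≤ T r c) ∧
  (∀ r c, IsCell out inn r c → IsCell out inn (r + 1) c → T (r + 1) c < T r c)

/-- A skew tableau of shape `out/inn` in the letters `1 < 2 < ⋯ < m`: entries
are `0` outside the diagram, rows weakly increase and columns strictly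
increase. -/
def IsLetTab (m : ℕ) (out inn : ℕ → ℕ) (T : ℕ → ℕ → ℕ) : Prop :=
  (∀ r c, ¬ IsCell out inn r c → T r c = 0) ∧
  (∀ r c, IsCell out inn r c → 1 ≤ T r c ∧ T r c ≤ m) ∧
  (∀ r c, IsCell out inn r c → IsCell out inn r (c + 1) → T r c ≤ T r (c + 1)) ∧
  (∀ r c, IsCell out inn r c → IsCell out inn (r + 1) c → T r c < T (r + 1) c)

/-- The set `S̄_{ΛΩ}`: skew tableaux of shape `μ/λ` in which the letter `ī`
appears `a_i − b_i` times (i.e. `#occurrences + b_i = a_i`), always within the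
first `a_i` columns. -/
def SBar (m : ℕ) (a b : Fin m → ℕ) (mu lam : ℕ → ℕ) : Set (ℕ → ℕ → ℕ) :=
  {T | IsBarTab m mu lam T ∧ ∀ i : Fin m,
    ({p : ℕ × ℕ | IsCell mu lam p.1 p.2 ∧ T p.1 p.2 = i.val + 1}.ncard + b i = a i) ∧
    (∀ r c : ℕ, IsCell mu lam r c → T r c = i.val + 1 → c < a i)}

/-- The set `S_{ΛΩ}`: skew tableaux of shape `(a ∪ λ)/μ` (the outer shape `ν`
being the sorted union `a ∪ λ`) in which the letter `i` appears `b_i` times,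
always within the first `a_i` columns. -/
def STabSet (m : ℕ) (a b : Fin m → ℕ) (nu mu : ℕ → ℕ) : Set (ℕ → ℕ → ℕ) :=
  {T | IsLetTab m nu mu T ∧ ∀ i : Fin m,
    ({p : ℕ × ℕ | IsCell nu mu p.1 p.2 ∧ T p.1 p.2 = i.val + 1}.ncard = b i) ∧
    (∀ r c : ℕ, IsCell nu mu r c → T r c = i.val + 1 → c < a i)}

/-- `ν` is the partition `a ∪ λ` obtained by sorting the concatenation of the
composition `a` and the partition `λ`: `ν` is a partition and, for every
positive value `v`, the number of parts of `ν` equal to `v` is the number of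
entries of `a` equal to `v` plus the number of parts of `λ` equal to `v`. -/
def IsSortedUnion {m : ℕ} (a : Fin m → ℕ) (lam : ℕ → ℕ) (nu : ℕ → ℕ) : Prop :=
  Antitone nu ∧ (∃ n : ℕ, ∀ k : ℕ, n ≤ k → nu k = 0) ∧
  ∀ v : ℕ, 0 < v →
    {k : ℕ | nu k = v}.ncard = {i : Fin m | a i = v}.ncard + {k : ℕ | lam k = v}.ncard

/-- The defining compatibility of the map `𝔟`: for every `i` and every column
`c` within the first `a_i` columns, the letter `i` appears in column `c` of `T`
if and only if the letter `ī` does not appear in column `c` of `T̄`. -/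
def Compat (m : ℕ) (a : Fin m → ℕ) (nu mu lam : ℕ → ℕ)
    (Tb T : ℕ → ℕ → ℕ) : Prop :=
  ∀ (i : Fin m) (c : ℕ), c < a i →
    ((∃ r : ℕ, IsCell nu mu r c ∧ T r c = i.val + 1) ↔
      ¬ ∃ r : ℕ, IsCell mu lam r c ∧ Tb r c = i.val + 1)

/- STATEMENT 9: For m-partitions Λ = (a; λ) and Ω = (b; μ) of the same degree
with Λ dominant, the map 𝔟 is a bijection between S̄_{ΛΩ} and S_{ΛΩ}: every
T̄ ∈ S̄_{ΛΩ} corresponds to a unique T ∈ S_{ΛΩ} compatible with it, and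
conversely. -/


namespace SAux
open Finset

lemma le_of_lt_imp {x y : ℕ} (h : ∀ r, r < x → r < y) : x ≤ y := by
  by_contra hc
  push_neg at hc
  exact absurd (h y hc) (lt_irrefl y)

lemma lower_iff (S : Finset ℕ) (hlow : ∀ x ∈ S, ∀ y, y ≤ x → y ∈ S) :
    ∀ r, r ∈ S ↔ r < S.card := by
  rcases S.eq_empty_or_nonempty with h | h
  · subst h; simp
  · have hmax := S.max'_mem h
    have hS : ∀ r, r ∈ S ↔ r < S.max' h + 1 := fun r =>
      ⟨fun hr => Nat.lt_succ_of_le (S.le_max' r hr),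
       fun hr => hlow _ hmax r (Nat.lt_succ_iff.mp hr)⟩
    have hcard : S.card = S.max' h + 1 := by
      have hr : S = Finset.range (S.max' h + 1) := by
        ext r; simp only [mem_range]; exact hS r
      conv_lhs => rw [hr]
      rw [card_range]
    intro r; rw [hS r, hcard]

lemma lower_Icc (S : Finset ℕ) (h1 : ∀ w ∈ S, 1 ≤ w)
    (hlow : ∀ w ∈ S, ∀ w', 1 ≤ w' → w' ≤ w → w' ∈ S) :
    ∀ w, w ∈ S ↔ 1 ≤ w ∧ w ≤ S.card := by
  rcases S.eq_empty_or_nonempty with h | h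
  · subst h; simp; omega
  · have hmax := S.max'_mem h
    have hS : ∀ w, w ∈ S ↔ 1 ≤ w ∧ w ≤ S.max' h := fun w =>
      ⟨fun hw => ⟨h1 w hw, S.le_max' w hw⟩, fun hw => hlow _ hmax w hw.1 hw.2⟩
    have hcard : S.card = S.max' h := by
      have hr : S = Finset.Icc 1 (S.max' h) := by
        ext w; simp only [mem_Icc]; exact hS w
      conv_lhs => rw [hr]
      rw [Nat.card_Icc]; omega
    intro w; rw [hS w, hcard]

/-- Column counts. -/
def conjF (f : ℕ → ℕ) (N c : ℕ) : ℕ := ((Finset.range N).filter fun r => c < f r).card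

lemma conjF_spec {f : ℕ → ℕ} {N : ℕ} (h0 : ∀ r, N ≤ r → f r = 0) (hanti : Antitone f)
    (c : ℕ) : ∀ r, c < f r ↔ r < conjF f N c := by
  have hlow : ∀ x ∈ (Finset.range N).filter (fun r => c < f r),
      ∀ y, y ≤ x → y ∈ (Finset.range N).filter (fun r => c < f r) := by
    intro x hx y hy
    simp only [mem_filter, mem_range] at *
    exact ⟨lt_of_le_of_lt hy hx.1, lt_of_lt_of_le hx.2 (hanti hy)⟩
  intro r
  rw [conjF, ← lower_iff _ hlow r]
  simp only [mem_filter, mem_range]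
  constructor
  · intro hr
    refine ⟨?_, hr⟩
    by_contra hN
    rw [h0 r (by omega)] at hr; omega
  · exact fun h => h.2

lemma conjF_anti {f : ℕ → ℕ} {N : ℕ} (h0 : ∀ r, N ≤ r → f r = 0) (hanti : Antitone f)
    {c c' : ℕ} (h : c ≤ c') : conjF f N c' ≤ conjF f N c := by
  apply le_of_lt_imp
  intro r hr
  rw [← conjF_spec h0 hanti] at hr ⊢
  omega

lemma conjF_mono_fun {f g : ℕ → ℕ} {N : ℕ} (h0f : ∀ r, N ≤ r → f r = 0)
    (hfa : Antitone f) (h0g : ∀ r, N ≤ r → g r = 0) (hga : Antitone g)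
    (h : ∀ r, f r ≤ g r) (c : ℕ) : conjF f N c ≤ conjF g N c := by
  apply le_of_lt_imp
  intro r hr
  rw [← conjF_spec h0f hfa] at hr
  rw [← conjF_spec h0g hga]
  exact lt_of_lt_of_le hr (h r)

lemma cell_iff {out inn : ℕ → ℕ} {N : ℕ} (hout0 : ∀ r, N ≤ r → out r = 0)
    (houta : Antitone out) (hinn0 : ∀ r, N ≤ r → inn r = 0) (hinna : Antitone inn)
    (r c : ℕ) : IsCell out inn r c ↔ conjF inn N c ≤ r ∧ r < conjF out N c := by
  unfold IsCell
  rw [← conjF_spec hout0 houta c r]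
  have : inn r ≤ c ↔ conjF inn N c ≤ r := by
    rw [← Nat.not_lt, ← Nat.not_lt, conjF_spec hinn0 hinna c r]
  rw [this]

end SAux
namespace SAux
open Finset

lemma cell_mid_col {out inn : ℕ → ℕ} (hinna : Antitone inn) (houta : Antitone out)
    {r r' r'' c : ℕ} (h1 : IsCell out inn r c) (h2 : IsCell out inn r'' c)
    (hl : r ≤ r') (hr : r' ≤ r'') : IsCell out inn r' c :=
  ⟨le_trans (hinna hl) h1.1, lt_of_lt_of_le h2.2 (houta hr)⟩

lemma cell_mid_row {out inn : ℕ → ℕ} {r c c' c'' : ℕ}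
    (h1 : IsCell out inn r c) (h2 : IsCell out inn r c'')
    (hl : c ≤ c') (hr : c' ≤ c'') : IsCell out inn r c' :=
  ⟨le_trans h1.1 hl, lt_of_le_of_lt hr h2.2⟩

lemma letTab_col_strict {m : ℕ} {out inn : ℕ → ℕ} {T : ℕ → ℕ → ℕ}
    (hT : IsLetTab m out inn T) (hinna : Antitone inn) (houta : Antitone out)
    {r r' c : ℕ} (h1 : IsCell out inn r c) (h2 : IsCell out inn r' c)
    (h : r < r') : T r c < T r' c := by
  have key : ∀ k, IsCell out inn (r + k + 1) c → T r c < T (r + k + 1) c := by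
    intro k
    induction k with
    | zero => intro h2; exact hT.2.2.2 r c h1 h2
    | succ n ih =>
      intro h2
      have hE : r + (n + 1) + 1 = (r + n + 1) + 1 := by omega
      rw [hE] at h2 ⊢
      have hmid : IsCell out inn (r + n + 1) c :=
        cell_mid_col hinna houta h1 h2 (by omega) (by omega)
      have h3 := hT.2.2.2 (r + n + 1) c hmid h2
      have h' := ih hmid
      omega
  obtain ⟨k, rfl⟩ : ∃ k, r' = r + k + 1 := ⟨r' - r - 1, by omega⟩
  exact key _ h2

lemma letTab_row_mono {m : ℕ} {out inn : ℕ → ℕ} {T : ℕ → ℕ → ℕ}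
    (hT : IsLetTab m out inn T)
    {r c c' : ℕ} (h1 : IsCell out inn r c) (h2 : IsCell out inn r c')
    (h : c ≤ c') : T r c ≤ T r c' := by
  have key : ∀ k, IsCell out inn r (c + k) → T r c ≤ T r (c + k) := by
    intro k
    induction k with
    | zero => intro _; rfl
    | succ n ih =>
      intro h2
      have hE : c + (n + 1) = (c + n) + 1 := by omega
      rw [hE] at h2 ⊢
      have hmid : IsCell out inn r (c + n) :=
        cell_mid_row h1 h2 (by omega) (by omega)
      have h3 := hT.2.2.1 r (c + n) hmid h2
      have h' := ih hmid
      omega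
  obtain ⟨k, rfl⟩ : ∃ k, c' = c + k := ⟨c' - c, by omega⟩
  exact key _ h2

lemma barTab_col_strict {m : ℕ} {out inn : ℕ → ℕ} {T : ℕ → ℕ → ℕ}
    (hT : IsBarTab m out inn T) (hinna : Antitone inn) (houta : Antitone out)
    {r r' c : ℕ} (h1 : IsCell out inn r c) (h2 : IsCell out inn r' c)
    (h : r < r') : T r' c < T r c := by
  have key : ∀ k, IsCell out inn (r + k + 1) c → T (r + k + 1) c < T r c := by
    intro k
    induction k with
    | zero => intro h2; exact hT.2.2.2 r c h1 h2
    | succ n ih =>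
      intro h2
      have hE : r + (n + 1) + 1 = (r + n + 1) + 1 := by omega
      rw [hE] at h2 ⊢
      have hmid : IsCell out inn (r + n + 1) c :=
        cell_mid_col hinna houta h1 h2 (by omega) (by omega)
      have h3 := hT.2.2.2 (r + n + 1) c hmid h2
      have h' := ih hmid
      omega
  obtain ⟨k, rfl⟩ : ∃ k, r' = r + k + 1 := ⟨r' - r - 1, by omega⟩
  exact key _ h2

lemma barTab_row_mono {m : ℕ} {out inn : ℕ → ℕ} {T : ℕ → ℕ → ℕ}
    (hT : IsBarTab m out inn T)
    {r c c' : ℕ} (h1 : IsCell out inn r c) (h2 : IsCell out inn r c')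
    (h : c ≤ c') : T r c' ≤ T r c := by
  have key : ∀ k, IsCell out inn r (c + k) → T r (c + k) ≤ T r c := by
    intro k
    induction k with
    | zero => intro _; rfl
    | succ n ih =>
      intro h2
      have hE : c + (n + 1) = (c + n) + 1 := by omega
      rw [hE] at h2 ⊢
      have hmid : IsCell out inn r (c + n) :=
        cell_mid_row h1 h2 (by omega) (by omega)
      have h3 := hT.2.2.1 r (c + n) hmid h2
      have h' := ih hmid
      omega
  obtain ⟨k, rfl⟩ : ∃ k, c' = c + k := ⟨c' - c, by omega⟩
  exact key _ h2

end SAux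
namespace SAux
open Finset

lemma sort_getD_mem {s : Finset ℕ} {j : ℕ} (h : j < s.card) :
    (s.sort (· ≤ ·)).getD j 0 ∈ s := by
  have hl : j < (s.sort (· ≤ ·)).length := by rw [Finset.length_sort]; exact h
  rw [List.getD_eq_getElem _ _ hl]
  exact (Finset.mem_sort _).1 (List.getElem_mem _)

lemma sort_getD_lt {s : Finset ℕ} {i j : ℕ} (hij : i < j) (h : j < s.card) :
    (s.sort (· ≤ ·)).getD i 0 < (s.sort (· ≤ ·)).getD j 0 := by
  have hl : j < (s.sort (· ≤ ·)).length := by rw [Finset.length_sort]; exact h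
  have hi : i < (s.sort (· ≤ ·)).length := lt_trans hij hl
  rw [List.getD_eq_getElem _ _ hl, List.getD_eq_getElem _ _ hi]
  have := (Finset.sortedLT_sort s).strictMono_get
    (Fin.mk_lt_mk.mpr hij : (⟨i, hi⟩ : Fin _) < ⟨j, hl⟩)
  simpa [List.get_eq_getElem] using this

lemma sort_exists_getD {s : Finset ℕ} {w : ℕ} (h : w ∈ s) :
    ∃ j, j < s.card ∧ (s.sort (· ≤ ·)).getD j 0 = w := by
  have hw : w ∈ s.sort (· ≤ ·) := (Finset.mem_sort _).2 h
  obtain ⟨⟨j, hj⟩, hget⟩ := List.mem_iff_get.1 hw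
  refine ⟨j, by rwa [Finset.length_sort] at hj, ?_⟩
  rw [List.getD_eq_getElem _ _ hj]
  simpa [List.get_eq_getElem] using hget

lemma sorted_le_of_counts (A B : Finset ℕ) (d j : ℕ) (hj : j < A.card) (hjd : j + d < B.card)
    (H : ∀ v, (B.filter (· ≤ v)).card ≤ (A.filter (· ≤ v)).card + d) :
    (A.sort (· ≤ ·)).getD j 0 ≤ (B.sort (· ≤ ·)).getD (j + d) 0 := by
  set y := (B.sort (· ≤ ·)).getD (j + d) 0 with hy
  have h1 : j + d + 1 ≤ (B.filter (· ≤ y)).card := by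
    have hmaps : ∀ k ∈ range (j + d + 1), (B.sort (· ≤ ·)).getD k 0 ∈ B.filter (· ≤ y) := by
      intro k hk; rw [mem_range] at hk
      have hkc : k < B.card := by omega
      refine mem_filter.2 ⟨sort_getD_mem hkc, ?_⟩
      rcases Nat.lt_or_ge k (j + d) with h | h
      · exact le_of_lt (sort_getD_lt h hjd)
      · have hkk : k = j + d := by omega
        rw [hkk]
    have hinj : Set.InjOn (fun k => (B.sort (· ≤ ·)).getD k 0) (range (j + d + 1)) := by
      intro x hx x' hx' hxy
      simp only [coe_range, Set.mem_Iio] at hx hx'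
      by_contra hne
      rcases Nat.lt_or_ge x x' with h | h
      · exact absurd hxy (Nat.ne_of_lt (sort_getD_lt h (by omega)))
      · have : x' < x := by omega
        exact absurd hxy.symm (Nat.ne_of_lt (sort_getD_lt this (by omega)))
    calc j + d + 1 = (range (j + d + 1)).card := (card_range _).symm
      _ ≤ (B.filter (· ≤ y)).card := Finset.card_le_card_of_injOn _ hmaps hinj
  have h2 : j + 1 ≤ (A.filter (· ≤ y)).card := by have := H y; omega
  by_contra hcon
  push_neg at hcon
  have hle : (A.filter (· ≤ y)).card ≤ j := by
    have hsub : A.filter (· ≤ y) ⊆ (range j).image (fun k => (A.sort (· ≤ ·)).getD k 0) := by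
      intro w hw
      obtain ⟨k, hk, hkw⟩ := sort_exists_getD (mem_filter.1 hw).1
      have hwy := (mem_filter.1 hw).2
      have hkj : k < j := by
        by_contra hge
        push_neg at hge
        have hh : (A.sort (· ≤ ·)).getD j 0 ≤ (A.sort (· ≤ ·)).getD k 0 := by
          rcases eq_or_lt_of_le hge with h | h
          · rw [h]
          · exact le_of_lt (sort_getD_lt h hk)
        omega
      exact mem_image.2 ⟨k, mem_range.2 hkj, hkw⟩
    calc (A.filter (· ≤ y)).card ≤ _ := card_le_card hsub
      _ ≤ (range j).card := card_image_le
      _ = j := card_range _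
  omega

lemma card_filter_lt_eq_sum_fibers {β : Type*} (s : Finset β) (g : β → ℕ) (V c : ℕ)
    (hbd : ∀ x ∈ s, g x ≤ V) :
    (s.filter fun x => c < g x).card = ∑ v ∈ Ioc c V, (s.filter fun x => g x = v).card := by
  rw [Finset.card_eq_sum_card_fiberwise (f := g) (t := Ioc c V)
    (fun x hx => by rw [mem_coe, mem_filter] at hx; rw [mem_coe, mem_Ioc]; exact ⟨hx.2, hbd x hx.1⟩)]
  apply Finset.sum_congr rfl
  intro v hv
  rw [mem_Ioc] at hv
  congr 1
  rw [Finset.filter_filter]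
  apply Finset.filter_congr
  intro x _
  constructor
  · exact fun h => h.2
  · intro h; exact ⟨by omega, h⟩

lemma sum_card_filter_lt {β : Type*} (s : Finset β) (g : β → ℕ) (V : ℕ)
    (hbd : ∀ x ∈ s, g x ≤ V) :
    ∑ c ∈ range V, (s.filter fun x => c < g x).card = ∑ x ∈ s, g x := by
  have hc : ∀ c : ℕ, (s.filter fun x => c < g x).card = ∑ x ∈ s, ite (c < g x) 1 0 :=
    fun c => Finset.card_filter _ _
  simp_rw [hc]
  rw [Finset.sum_comm]
  apply Finset.sum_congr rfl
  intro x hx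
  rw [← Finset.card_filter]
  have : (range V).filter (fun c => c < g x) = range (g x) := by
    ext c
    simp only [mem_filter, mem_range]
    have := hbd x hx
    omega
  rw [this, card_range]

lemma Icc_one_eq_map (m : ℕ) :
    Finset.Icc 1 m = (range m).map ⟨fun j => j + 1, add_left_injective 1⟩ := by
  ext w
  simp only [mem_Icc, mem_map, mem_range, Function.Embedding.coeFn_mk]
  constructor
  · intro h; exact ⟨w - 1, by omega, by omega⟩
  · rintro ⟨j, hj, rfl⟩; omega

end SAux
namespace SAux
open Finset

def cellsF (out inn : ℕ → ℕ) (N : ℕ) : Finset (ℕ × ℕ) :=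
  (range N).biUnion fun r => ({r} : Finset ℕ) ×ˢ Finset.Ico (inn r) (out r)

lemma mem_cellsF {out inn : ℕ → ℕ} {N : ℕ} (h0 : ∀ r, N ≤ r → out r = 0) (p : ℕ × ℕ) :
    p ∈ cellsF out inn N ↔ IsCell out inn p.1 p.2 := by
  obtain ⟨r, c⟩ := p
  simp only [cellsF, mem_biUnion, mem_range, mem_product, mem_singleton, mem_Ico]
  constructor
  · rintro ⟨r', _, rfl, hc⟩
    exact ⟨hc.1, hc.2⟩
  · intro h
    have hrN : r < N := by
      by_contra hge
      push_neg at hge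
      have := h0 r hge
      have := h.2
      omega
    exact ⟨r, hrN, rfl, h.1, h.2⟩

lemma cells_set_eq {out inn : ℕ → ℕ} {N : ℕ} (h0 : ∀ r, N ≤ r → out r = 0) :
    {p : ℕ × ℕ | IsCell out inn p.1 p.2} = ↑(cellsF out inn N) := by
  ext p
  simp only [Set.mem_setOf_eq, mem_coe, mem_cellsF h0]

lemma card_cellsF {out inn : ℕ → ℕ} {N : ℕ} :
    (cellsF out inn N).card = ∑ r ∈ range N, (out r - inn r) := by
  rw [cellsF, Finset.card_biUnion]
  · apply Finset.sum_congr rfl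
    intro r _
    rw [Finset.card_product, card_singleton, Nat.card_Ico, one_mul]
  · intro r _ r' _ hne
    rw [Function.onFun, Finset.disjoint_left]
    intro p hp hp'
    rw [mem_product, mem_singleton] at hp hp'
    exact hne (hp.1 ▸ hp'.1)

lemma card_cellsF_fiber {m : ℕ} {out inn : ℕ → ℕ} {N : ℕ} {T : ℕ → ℕ → ℕ}
    (h0 : ∀ r, N ≤ r → out r = 0)
    (hT : ∀ r c, IsCell out inn r c → 1 ≤ T r c ∧ T r c ≤ m) :
    (cellsF out inn N).card
      = ∑ w ∈ Finset.Icc 1 m, ((cellsF out inn N).filter fun p => T p.1 p.2 = w).card :=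
  Finset.card_eq_sum_card_fiberwise (fun p hp => by
    rw [mem_coe, mem_cellsF h0] at hp
    rw [mem_coe, mem_Icc]
    exact hT _ _ hp)

lemma occ_set_eq {out inn : ℕ → ℕ} {N : ℕ} {T : ℕ → ℕ → ℕ}
    (h0 : ∀ r, N ≤ r → out r = 0) (w : ℕ) :
    {p : ℕ × ℕ | IsCell out inn p.1 p.2 ∧ T p.1 p.2 = w}
      = ↑((cellsF out inn N).filter fun p => T p.1 p.2 = w) := by
  ext p
  simp only [Set.mem_setOf_eq, mem_coe, mem_filter, mem_cellsF h0]

lemma injOn_Ico_of_strictmono {f : ℕ → ℕ} {x y : ℕ}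
    (hmono : ∀ r r', r ∈ Finset.Ico x y → r' ∈ Finset.Ico x y → r < r' → f r ≠ f r') :
    Set.InjOn f (Finset.Ico x y : Finset ℕ) := by
  intro r hr r' hr' heq
  by_contra hne
  rcases Nat.lt_or_ge r r' with h | h
  · exact absurd heq (hmono r r' (by simpa using hr) (by simpa using hr') h)
  · have hlt : r' < r := by omega
    exact absurd heq.symm (hmono r' r (by simpa using hr') (by simpa using hr) hlt)

lemma card_image_Ico {f : ℕ → ℕ} {x y : ℕ}
    (hmono : ∀ r r', r ∈ Finset.Ico x y → r' ∈ Finset.Ico x y → r < r' → f r ≠ f r') :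
    ((Finset.Ico x y).image f).card = y - x := by
  rw [Finset.card_image_of_injOn (injOn_Ico_of_strictmono hmono), Nat.card_Ico]

lemma card_image_filter_Ico {f : ℕ → ℕ} {x y : ℕ} (P : ℕ → Prop) [DecidablePred P]
    (hmono : ∀ r r', r ∈ Finset.Ico x y → r' ∈ Finset.Ico x y → r < r' → f r ≠ f r') :
    (((Finset.Ico x y).image f).filter P).card = ((Finset.Ico x y).filter fun r => P (f r)).card := by
  rw [Finset.filter_image]
  exact Finset.card_image_of_injOn
    ((injOn_Ico_of_strictmono hmono).mono
      (Finset.coe_subset.2 (Finset.filter_subset _ _)))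

end SAux
namespace SAux
open Finset

instance (out inn : ℕ → ℕ) (r c : ℕ) : Decidable (IsCell out inn r c) :=
  inferInstanceAs (Decidable (inn r ≤ c ∧ c < out r))

/-- Letter-indexed version of `a`. -/
def av (m : ℕ) (a : Fin m → ℕ) (w : ℕ) : ℕ :=
  if h : w - 1 < m ∧ 1 ≤ w then a ⟨w - 1, h.1⟩ else 0

lemma av_succ {m : ℕ} (a : Fin m → ℕ) (i : Fin m) : av m a (i.val + 1) = a i := by
  have h : (i.val + 1) - 1 < m ∧ 1 ≤ i.val + 1 := ⟨by simpa using i.isLt, by omega⟩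
  rw [av, dif_pos h]
  have he : (⟨i.val + 1 - 1, h.1⟩ : Fin m) = i := by ext; simp
  rw [he]

lemma av_eq {m : ℕ} (a : Fin m → ℕ) {w : ℕ} (h1 : 1 ≤ w) (h2 : w ≤ m) :
    av m a w = a ⟨w - 1, by omega⟩ := by
  rw [av, dif_pos ⟨by omega, h1⟩]

lemma av_pos_bounds {m : ℕ} (a : Fin m → ℕ) {w c : ℕ} (h : c < av m a w) :
    1 ≤ w ∧ w ≤ m := by
  by_contra hc
  rw [av] at h
  rw [dif_neg (by omega)] at h
  omega

lemma finsupp_bound (f : ℕ →₀ ℕ) : ∀ r, f.support.sup id + 1 ≤ r → f r = 0 := by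
  intro r hr
  by_contra h
  have : r ∈ f.support := Finsupp.mem_support_iff.2 h
  have := Finset.le_sup (f := id) this
  simp only [id_eq] at this
  omega

lemma finsupp_sum_range (f : ℕ →₀ ℕ) {N : ℕ} (h0 : ∀ r, N ≤ r → f r = 0) :
    f.sum (fun _ v => v) = ∑ r ∈ range N, f r := by
  rw [Finsupp.sum]
  apply Finset.sum_subset
  · intro r hr
    rw [Finsupp.mem_support_iff] at hr
    rw [mem_range]
    by_contra hge
    exact hr (h0 r (by omega))
  · intro x _ hx
    exact Finsupp.notMem_support_iff.1 hx

/-- The number of cells equals the sum of the letter counts. -/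
lemma cells_card_eq_sum_counts {m : ℕ} {out inn : ℕ → ℕ} {N : ℕ} {T : ℕ → ℕ → ℕ}
    (h0 : ∀ r, N ≤ r → out r = 0)
    (hT : ∀ r c, IsCell out inn r c → 1 ≤ T r c ∧ T r c ≤ m)
    (cnt : Fin m → ℕ)
    (hcnt : ∀ i : Fin m,
      {p : ℕ × ℕ | IsCell out inn p.1 p.2 ∧ T p.1 p.2 = i.val + 1}.ncard = cnt i) :
    ∑ r ∈ range N, (out r - inn r) = ∑ i : Fin m, cnt i := by
  rw [← card_cellsF (out := out) (inn := inn) (N := N), card_cellsF_fiber h0 hT,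
    Icc_one_eq_map m, Finset.sum_map]
  simp only [Function.Embedding.coeFn_mk]
  rw [← Fin.sum_univ_eq_sum_range
    (fun j => ((cellsF out inn N).filter fun p => T p.1 p.2 = j + 1).card) m]
  apply Finset.sum_congr rfl
  intro i _
  have := hcnt i
  rw [occ_set_eq h0 (i.val + 1), Set.ncard_coe_finset] at this
  exact this

end SAux
namespace SAux
open Finset

lemma set_fiber_eq {g : ℕ → ℕ} {N : ℕ} (h0 : ∀ r, N ≤ r → g r = 0) {v : ℕ} (hv : 1 ≤ v) :
    {k : ℕ | g k = v} = ↑((range N).filter fun k => g k = v) := by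
  ext k
  simp only [Set.mem_setOf_eq, coe_filter, mem_range, Set.mem_setOf_eq]
  constructor
  · intro h
    refine ⟨?_, h⟩
    by_contra hge
    push_neg at hge
    rw [h0 k (by omega)] at h
    omega
  · exact fun h => h.2

lemma set_fiber_fin_eq {m : ℕ} (a : Fin m → ℕ) (v : ℕ) :
    {i : Fin m | a i = v} = ↑(univ.filter fun i => a i = v) := by
  ext i; simp

lemma cardA_bridge {m : ℕ} (a : Fin m → ℕ) (c : ℕ) :
    ((Finset.Icc 1 m).filter fun w => c < av m a w).card
      = ((univ : Finset (Fin m)).filter fun i => c < a i).card := by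
  apply Finset.card_bij (i := fun w hw => (⟨w - 1, by
      have hb := av_pos_bounds a (mem_filter.1 hw).2
      omega⟩ : Fin m))
  · intro w hw
    have hm := mem_filter.1 hw
    have hb := av_pos_bounds a hm.2
    rw [mem_filter]
    refine ⟨mem_univ _, ?_⟩
    have h2 := hm.2
    rw [av_eq a hb.1 hb.2] at h2
    exact h2
  · intro w hw w' hw' heq
    have h1 := av_pos_bounds a (mem_filter.1 hw).2
    have h2 := av_pos_bounds a (mem_filter.1 hw').2
    have := congrArg Fin.val heq
    simp only at this
    omega
  · intro i hi
    refine ⟨i.val + 1, ?_, ?_⟩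
    · rw [mem_filter, mem_Icc, av_succ]
      exact ⟨⟨by omega, by have := i.isLt; omega⟩, (mem_filter.1 hi).2⟩
    · ext
      simp

lemma conj_nu_eq {m : ℕ} {a : Fin m → ℕ} {lam nu : ℕ → ℕ} {N V : ℕ}
    (hl0 : ∀ r, N ≤ r → lam r = 0) (hn0 : ∀ r, N ≤ r → nu r = 0)
    (hVn : ∀ r ∈ range N, nu r ≤ V) (hVl : ∀ r ∈ range N, lam r ≤ V)
    (hVa : ∀ i : Fin m, a i ≤ V)
    (hmult : ∀ v : ℕ, 0 < v →
      {k : ℕ | nu k = v}.ncard = {i : Fin m | a i = v}.ncard + {k : ℕ | lam k = v}.ncard)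
    (c : ℕ) :
    conjF nu N c = ((univ : Finset (Fin m)).filter fun i => c < a i).card + conjF lam N c := by
  rw [conjF, conjF, card_filter_lt_eq_sum_fibers _ nu V c hVn,
      card_filter_lt_eq_sum_fibers _ lam V c hVl,
      card_filter_lt_eq_sum_fibers univ a V c (fun i _ => hVa i),
      ← Finset.sum_add_distrib]
  apply Finset.sum_congr rfl
  intro v hv
  rw [mem_Ioc] at hv
  have h1 := hmult v (by omega)
  rw [set_fiber_eq hn0 (by omega), set_fiber_eq hl0 (by omega), set_fiber_fin_eq,
      Set.ncard_coe_finset, Set.ncard_coe_finset, Set.ncard_coe_finset] at h1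
  exact h1

lemma sum_nu_eq {m : ℕ} {a : Fin m → ℕ} {lam nu : ℕ → ℕ} {N V : ℕ}
    (hl0 : ∀ r, N ≤ r → lam r = 0) (hn0 : ∀ r, N ≤ r → nu r = 0)
    (hVn : ∀ r ∈ range N, nu r ≤ V) (hVl : ∀ r ∈ range N, lam r ≤ V)
    (hVa : ∀ i : Fin m, a i ≤ V)
    (hmult : ∀ v : ℕ, 0 < v →
      {k : ℕ | nu k = v}.ncard = {i : Fin m | a i = v}.ncard + {k : ℕ | lam k = v}.ncard) :
    ∑ r ∈ range N, nu r = (∑ i, a i) + ∑ r ∈ range N, lam r := by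
  rw [← sum_card_filter_lt (range N) nu V hVn, ← sum_card_filter_lt (range N) lam V hVl,
      ← sum_card_filter_lt univ a V (fun i _ => hVa i), ← Finset.sum_add_distrib]
  exact Finset.sum_congr rfl fun c _ => conj_nu_eq hl0 hn0 hVn hVl hVa hmult c

lemma pointwise_le_of_counts {f g : ℕ → ℕ} {N : ℕ} (h0f : ∀ r, N ≤ r → f r = 0)
    (hsum : ∑ r ∈ range N, (g r - f r) + ∑ r ∈ range N, f r = ∑ r ∈ range N, g r) :
    ∀ r, f r ≤ g r := by
  have h : ∑ r ∈ range N, g r = ∑ r ∈ range N, ((g r - f r) + f r) := by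
    rw [Finset.sum_add_distrib]
    exact hsum.symm
  have hle : ∀ r ∈ range N, g r ≤ (g r - f r) + f r := fun r _ => by omega
  have hpt := (Finset.sum_eq_sum_iff_of_le hle).1 h
  intro r
  rcases Nat.lt_or_ge r N with hr | hr
  · have := hpt r (mem_range.2 hr)
    omega
  · rw [h0f r hr]
    omega

end SAux
namespace SAux
open Finset

/-- letters appearing in column `c`, rows `[conjF inn N c, conjF out N c)`. -/
def colImg (T : ℕ → ℕ → ℕ) (inn out : ℕ → ℕ) (N c : ℕ) : Finset ℕ :=
  (Finset.Ico (conjF inn N c) (conjF out N c)).image fun r => T r c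

/-- the letters to be placed in column `c` of the partner tableau. -/
def SFgen (m : ℕ) (a : Fin m → ℕ) (excl : Finset ℕ) (c : ℕ) : Finset ℕ :=
  (Finset.Icc 1 m).filter fun w => c < av m a w ∧ w ∉ excl

lemma mem_SFgen {m : ℕ} {a : Fin m → ℕ} {excl : Finset ℕ} {c w : ℕ} :
    w ∈ SFgen m a excl c ↔ c < av m a w ∧ w ∉ excl := by
  rw [SFgen, mem_filter, mem_Icc]
  constructor
  · exact fun h => h.2
  · intro h
    have := av_pos_bounds a h.1
    exact ⟨⟨this.1, this.2⟩, h⟩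

end SAux
namespace SAux
open Finset

lemma mem_colImg {T : ℕ → ℕ → ℕ} {inn out : ℕ → ℕ} {N c w : ℕ} :
    w ∈ colImg T inn out N c
      ↔ ∃ r, (conjF inn N c ≤ r ∧ r < conjF out N c) ∧ T r c = w := by
  rw [colImg, mem_image]
  constructor
  · rintro ⟨r, hr, rfl⟩
    rw [mem_Ico] at hr
    exact ⟨r, hr, rfl⟩
  · rintro ⟨r, hr, rfl⟩
    exact ⟨r, mem_Ico.2 hr, rfl⟩

lemma colImg_card {T : ℕ → ℕ → ℕ} {inn out : ℕ → ℕ} {N c : ℕ}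
    (hio : conjF inn N c ≤ conjF out N c)
    (hne : ∀ r r', r ∈ Finset.Ico (conjF inn N c) (conjF out N c) →
      r' ∈ Finset.Ico (conjF inn N c) (conjF out N c) → r < r' → T r c ≠ T r' c) :
    (colImg T inn out N c).card + conjF inn N c = conjF out N c := by
  rw [colImg, card_image_Ico hne]
  omega

lemma colImg_filter_card {T : ℕ → ℕ → ℕ} {inn out : ℕ → ℕ} {N c : ℕ}
    (hne : ∀ r r', r ∈ Finset.Ico (conjF inn N c) (conjF out N c) →
      r' ∈ Finset.Ico (conjF inn N c) (conjF out N c) → r < r' → T r c ≠ T r' c)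
    (P : ℕ → Prop) [DecidablePred P] :
    ((colImg T inn out N c).filter P).card
      = ((Finset.Ico (conjF inn N c) (conjF out N c)).filter fun r => P (T r c)).card :=
  card_image_filter_Ico P hne

end SAux
namespace SAux
open Finset

lemma dir1 {m : ℕ} (a b : Fin m → ℕ) (lam mu : ℕ →₀ ℕ)
    (hlam : Antitone ⇑lam) (hmu : Antitone ⇑mu)
    (hdeg : (∑ i, a i) + lam.sum (fun _ v => v) = (∑ i, b i) + mu.sum (fun _ v => v))
    (nu : ℕ → ℕ) (hnu : IsSortedUnion a ⇑lam nu)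
    (Tb : ℕ → ℕ → ℕ) (hTb : Tb ∈ SBar m a b ⇑mu ⇑lam) :
    ∃! T : ℕ → ℕ → ℕ, T ∈ STabSet m a b nu ⇑mu ∧ Compat m a nu ⇑mu ⇑lam Tb T := by
  classical
  obtain ⟨hnua, hnuz, hmult⟩ := hnu
  obtain ⟨Nn, hNn⟩ := hnuz
  obtain ⟨hTbTab, hTbCnt⟩ := hTb
  set N := max (max (lam.support.sup id + 1) (mu.support.sup id + 1)) Nn with hNdef
  have hl0 : ∀ r, N ≤ r → (lam : ℕ → ℕ) r = 0 := fun r hr => finsupp_bound lam r (by omega)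
  have hm0 : ∀ r, N ≤ r → (mu : ℕ → ℕ) r = 0 := fun r hr => finsupp_bound mu r (by omega)
  have hn0 : ∀ r, N ≤ r → nu r = 0 := fun r hr => hNn r (by omega)
  set V := nu 0 + (∑ i, a i) + lam 0 + 1 with hVdef
  have hVn : ∀ r ∈ Finset.range N, nu r ≤ V := fun r _ => by
    have := hnua (Nat.zero_le r); omega
  have hVl : ∀ r ∈ Finset.range N, (lam : ℕ → ℕ) r ≤ V := fun r _ => by
    have := hlam (Nat.zero_le r); omega
  have hVa : ∀ i, a i ≤ V := fun i => by
    have : a i ≤ ∑ j, a j := Finset.single_le_sum (fun j _ => Nat.zero_le _) (Finset.mem_univ i)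
    omega
  have cellML : ∀ r c, IsCell ⇑mu ⇑lam r c ↔ conjF ⇑lam N c ≤ r ∧ r < conjF ⇑mu N c :=
    fun r c => cell_iff hm0 hmu hl0 hlam r c
  have cellNM : ∀ r c, IsCell nu ⇑mu r c ↔ conjF ⇑mu N c ≤ r ∧ r < conjF nu N c :=
    fun r c => cell_iff hn0 hnua hm0 hmu r c
  have hconjnu : ∀ c, conjF nu N c
      = ((univ : Finset (Fin m)).filter fun i => c < a i).card + conjF ⇑lam N c :=
    conj_nu_eq hl0 hn0 hVn hVl hVa hmult
  -- pointwise λ ≤ μ from the counts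
  have hcnt1 : ∀ i : Fin m,
      {p : ℕ × ℕ | IsCell ⇑mu ⇑lam p.1 p.2 ∧ Tb p.1 p.2 = i.val + 1}.ncard = a i - b i :=
    fun i => by have := (hTbCnt i).1; omega
  have hsumcells : ∑ r ∈ range N, ((mu : ℕ → ℕ) r - lam r) = ∑ i, (a i - b i) :=
    cells_card_eq_sum_counts hm0 hTbTab.2.1 _ hcnt1
  have hba : ∀ i, b i ≤ a i := fun i => by have := (hTbCnt i).1; omega
  have hsum_ab : ∑ i, (a i - b i) + ∑ i, b i = ∑ i, a i := by
    rw [← Finset.sum_add_distrib]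
    exact Finset.sum_congr rfl fun i _ => by have := hba i; omega
  have hdeg' : (∑ i, a i) + ∑ r ∈ range N, (lam : ℕ → ℕ) r
      = (∑ i, b i) + ∑ r ∈ range N, (mu : ℕ → ℕ) r := by
    rw [← finsupp_sum_range lam hl0, ← finsupp_sum_range mu hm0]; exact hdeg
  have hG1 : ∀ r, (lam : ℕ → ℕ) r ≤ mu r := by
    apply pointwise_le_of_counts hl0
    omega
  have hconj_lm : ∀ c, conjF ⇑lam N c ≤ conjF ⇑mu N c :=
    fun c => conjF_mono_fun hl0 hlam hm0 hmu hG1 c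
  have hconj_anti_m : ∀ c, conjF ⇑mu N (c + 1) ≤ conjF ⇑mu N c :=
    fun c => conjF_anti hm0 hmu (by omega)
  have hconj_anti_l : ∀ c, conjF ⇑lam N (c + 1) ≤ conjF ⇑lam N c :=
    fun c => conjF_anti hl0 hlam (by omega)
  -- the column letters of Tb
  have hTbne : ∀ c r r', r ∈ Finset.Ico (conjF ⇑lam N c) (conjF ⇑mu N c) →
      r' ∈ Finset.Ico (conjF ⇑lam N c) (conjF ⇑mu N c) → r < r' → Tb r c ≠ Tb r' c := by
    intro c r r' hr hr' hlt
    rw [mem_Ico] at hr hr'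
    exact (barTab_col_strict hTbTab hlam hmu ((cellML r c).2 hr) ((cellML r' c).2 hr') hlt).ne'
  have memBb : ∀ c w, w ∈ colImg Tb ⇑lam ⇑mu N c ↔ ∃ r, IsCell ⇑mu ⇑lam r c ∧ Tb r c = w := by
    intro c w
    rw [mem_colImg]
    constructor
    · rintro ⟨r, hr, rfl⟩; exact ⟨r, (cellML r c).2 hr, rfl⟩
    · rintro ⟨r, hr, rfl⟩; exact ⟨r, (cellML r c).1 hr, rfl⟩
  have hBbA : ∀ c w, w ∈ colImg Tb ⇑lam ⇑mu N c → c < av m a w := by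
    intro c w hw
    obtain ⟨r, hcell, rfl⟩ := (memBb c w).1 hw
    have hb := hTbTab.2.1 r c hcell
    have hi : c < a ⟨Tb r c - 1, by omega⟩ :=
      (hTbCnt ⟨Tb r c - 1, by omega⟩).2 r c hcell (by show Tb r c = Tb r c - 1 + 1; omega)
    rw [av_eq a hb.1 hb.2]
    exact hi
  have cardBb : ∀ c, (colImg Tb ⇑lam ⇑mu N c).card + conjF ⇑lam N c = conjF ⇑mu N c :=
    fun c => colImg_card (hconj_lm c) (hTbne c)
  -- the column letter sets for T
  set S : ℕ → Finset ℕ := fun c => SFgen m a (colImg Tb ⇑lam ⇑mu N c) c with hSdef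
  have memS : ∀ c w, w ∈ S c ↔ c < av m a w ∧ w ∉ colImg Tb ⇑lam ⇑mu N c := by
    intro c w; rw [hSdef]; exact mem_SFgen
  have cardS : ∀ c, (S c).card + conjF ⇑mu N c = conjF nu N c := by
    intro c
    have hsub : colImg Tb ⇑lam ⇑mu N c ⊆ (Finset.Icc 1 m).filter fun w => c < av m a w := by
      intro w hw
      have h1 := hBbA c w hw
      have h2 := av_pos_bounds a h1
      rw [mem_filter, mem_Icc]
      exact ⟨⟨h2.1, h2.2⟩, h1⟩
    have hsd : S c = ((Finset.Icc 1 m).filter fun w => c < av m a w) \ colImg Tb ⇑lam ⇑mu N c := by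
      ext w
      rw [memS, mem_sdiff, mem_filter, mem_Icc]
      constructor
      · intro h
        have h2 := av_pos_bounds a h.1
        exact ⟨⟨⟨h2.1, h2.2⟩, h.1⟩, h.2⟩
      · intro h; exact ⟨h.1.2, h.2⟩
    have h1 : (((Finset.Icc 1 m).filter fun w => c < av m a w) \ colImg Tb ⇑lam ⇑mu N c).card
        = (((Finset.Icc 1 m).filter fun w => c < av m a w)).card
          - (colImg Tb ⇑lam ⇑mu N c).card := card_sdiff_of_subset hsub
    have h2 := card_le_card hsub
    have h3 := cardBb c
    have h4 := hconjnu c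
    have h5 := cardA_bridge a c
    rw [hsd, h1]
    omega
  -- the tableau T
  set T : ℕ → ℕ → ℕ := fun r c =>
    if IsCell nu ⇑mu r c then ((S c).sort (· ≤ ·)).getD (r - conjF ⇑mu N c) 0 else 0 with hTdef
  have hTcell : ∀ r c, IsCell nu ⇑mu r c →
      T r c = ((S c).sort (· ≤ ·)).getD (r - conjF ⇑mu N c) 0 := by
    intro r c h; rw [hTdef]; simp only [if_pos h]
  have hTzero : ∀ r c, ¬ IsCell nu ⇑mu r c → T r c = 0 := by
    intro r c h; rw [hTdef]; simp only [if_neg h]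
  have hidx : ∀ r c, IsCell nu ⇑mu r c → r - conjF ⇑mu N c < (S c).card := by
    intro r c h
    have h1 := (cellNM r c).1 h
    have h2 := cardS c
    omega
  have hTmem : ∀ r c, IsCell nu ⇑mu r c → T r c ∈ S c := by
    intro r c h; rw [hTcell r c h]; exact sort_getD_mem (hidx r c h)
  have hTexists : ∀ c w, w ∈ S c → ∃ r, IsCell nu ⇑mu r c ∧ T r c = w := by
    intro c w hw
    obtain ⟨j, hj, hjw⟩ := sort_exists_getD hw
    have h2 := cardS c
    have hcell : IsCell nu ⇑mu (conjF ⇑mu N c + j) c :=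
      (cellNM _ c).2 ⟨Nat.le_add_right _ _, by omega⟩
    refine ⟨conjF ⇑mu N c + j, hcell, ?_⟩
    rw [hTcell _ _ hcell]
    have he : conjF ⇑mu N c + j - conjF ⇑mu N c = j := by omega
    rw [he, hjw]
  have hScrange : ∀ c w, w ∈ S c → (1 ≤ w ∧ w ≤ m) ∧ c < av m a w := by
    intro c w hw
    have h1 := ((memS c w).1 hw).1
    exact ⟨av_pos_bounds a h1, h1⟩
  -- column strictness for T
  have hcol : ∀ r c, IsCell nu ⇑mu r c → IsCell nu ⇑mu (r + 1) c → T r c < T (r + 1) c := by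
    intro r c h1 h2
    rw [hTcell r c h1, hTcell (r + 1) c h2]
    have hi1 := (cellNM r c).1 h1
    have he : r + 1 - conjF ⇑mu N c = (r - conjF ⇑mu N c) + 1 := by omega
    rw [he]
    exact sort_getD_lt (by omega) (by have := hidx (r + 1) c h2; omega)
  -- the key counting inequality
  have hkey : ∀ c v, ((S (c + 1)).filter (· ≤ v)).card
      ≤ ((S c).filter (· ≤ v)).card + (conjF ⇑mu N c - conjF ⇑mu N (c + 1)) := by
    intro c v
    have hsplit : ∀ c', ((S c').filter (· ≤ v)).card
        + ((colImg Tb ⇑lam ⇑mu N c').filter (· ≤ v)).card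
        = (((Finset.Icc 1 m).filter fun w => c' < av m a w).filter (· ≤ v)).card := by
      intro c'
      rw [← card_union_of_disjoint (by
        rw [Finset.disjoint_left]
        intro w hw hw'
        exact ((memS c' w).1 (mem_filter.1 hw).1).2 (mem_filter.1 hw').1)]
      congr 1
      ext w
      constructor
      · intro h
        rcases mem_union.1 h with h' | h'
        · have h1 := (mem_filter.1 h').1
          have h4 := (mem_filter.1 h').2
          have h3 := ((memS c' w).1 h1).1
          have h2 := av_pos_bounds a h3
          exact mem_filter.2 ⟨mem_filter.2 ⟨mem_Icc.2 ⟨h2.1, h2.2⟩, h3⟩, h4⟩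
        · have h1 := (mem_filter.1 h').1
          have h4 := (mem_filter.1 h').2
          have h3 := hBbA c' w h1
          have h2 := av_pos_bounds a h3
          exact mem_filter.2 ⟨mem_filter.2 ⟨mem_Icc.2 ⟨h2.1, h2.2⟩, h3⟩, h4⟩
      · intro h
        have h1 := (mem_filter.1 h).1
        have h4 := (mem_filter.1 h).2
        have h3 := (mem_filter.1 h1).2
        by_cases hc : w ∈ colImg Tb ⇑lam ⇑mu N c'
        · exact mem_union_right _ (mem_filter.2 ⟨hc, h4⟩)
        · exact mem_union_left _ (mem_filter.2 ⟨(memS c' w).2 ⟨h3, hc⟩, h4⟩)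
    have hmono : ((((Finset.Icc 1 m).filter fun w => (c + 1) < av m a w).filter (· ≤ v))).card
        ≤ ((((Finset.Icc 1 m).filter fun w => c < av m a w).filter (· ≤ v))).card := by
      apply card_le_card
      intro w hw
      simp only [mem_filter, mem_Icc] at hw ⊢
      exact ⟨⟨hw.1.1, by omega⟩, hw.2⟩
    have hinjcard : ((colImg Tb ⇑lam ⇑mu N c).filter (· ≤ v)).card + conjF ⇑mu N (c + 1)
        ≤ ((colImg Tb ⇑lam ⇑mu N (c + 1)).filter (· ≤ v)).card + conjF ⇑mu N c := by
      rw [colImg_filter_card (hTbne c), colImg_filter_card (hTbne (c + 1))]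
      have hsub : (Finset.Ico (conjF ⇑lam N c) (conjF ⇑mu N c)).filter (fun r => Tb r c ≤ v)
          ⊆ ((Finset.Ico (conjF ⇑lam N (c + 1)) (conjF ⇑mu N (c + 1))).filter
              (fun r => Tb r (c + 1) ≤ v))
            ∪ Finset.Ico (conjF ⇑mu N (c + 1)) (conjF ⇑mu N c) := by
        intro r hr
        rw [mem_filter, mem_Ico] at hr
        rcases Nat.lt_or_ge r (conjF ⇑mu N (c + 1)) with h | h
        · apply mem_union_left
          rw [mem_filter, mem_Ico]
          have hc1 : IsCell ⇑mu ⇑lam r c := (cellML r c).2 ⟨hr.1.1, hr.1.2⟩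
          have hc2 : IsCell ⇑mu ⇑lam r (c + 1) :=
            (cellML r (c + 1)).2 ⟨le_trans (hconj_anti_l c) hr.1.1, h⟩
          have hrow := barTab_row_mono hTbTab hc1 hc2 (by omega)
          exact ⟨⟨le_trans (hconj_anti_l c) hr.1.1, h⟩, by omega⟩
        · exact mem_union_right _ (mem_Ico.2 ⟨h, hr.1.2⟩)
      have h1 := card_le_card hsub
      have h2 := Finset.card_union_le
        ((Finset.Ico (conjF ⇑lam N (c + 1)) (conjF ⇑mu N (c + 1))).filter
          (fun r => Tb r (c + 1) ≤ v))
        (Finset.Ico (conjF ⇑mu N (c + 1)) (conjF ⇑mu N c))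
      have h3 : (Finset.Ico (conjF ⇑mu N (c + 1)) (conjF ⇑mu N c)).card
          = conjF ⇑mu N c - conjF ⇑mu N (c + 1) := Nat.card_Ico _ _
      have h4 := hconj_anti_m c
      omega
    have e1 := hsplit c
    have e2 := hsplit (c + 1)
    omega
  -- row weak increase
  have hrow : ∀ r c, IsCell nu ⇑mu r c → IsCell nu ⇑mu r (c + 1) → T r c ≤ T r (c + 1) := by
    intro r c h1 h2
    rw [hTcell r c h1, hTcell r (c + 1) h2]
    have hi1 := (cellNM r c).1 h1
    have hi2 := (cellNM r (c + 1)).1 h2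
    have hma := hconj_anti_m c
    have hd : r - conjF ⇑mu N (c + 1)
        = (r - conjF ⇑mu N c) + (conjF ⇑mu N c - conjF ⇑mu N (c + 1)) := by omega
    rw [hd]
    exact sorted_le_of_counts _ _ _ _ (hidx r c h1) (by rw [← hd]; exact hidx r (c + 1) h2)
      (hkey c)
  have hTtab : IsLetTab m nu ⇑mu T :=
    ⟨hTzero, fun r c h => ⟨(hScrange _ _ (hTmem r c h)).1.1, (hScrange _ _ (hTmem r c h)).1.2⟩,
      hrow, fun r c h1 h2 => hcol r c h1 h2⟩
  -- occurrences of each letter in T, counted by columns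
  have hoccT : ∀ i : Fin m,
      ((cellsF nu ⇑mu N).filter fun p => T p.1 p.2 = i.val + 1).card
        = ((range (a i)).filter fun c => (i.val + 1) ∈ S c).card := by
    intro i
    apply Finset.card_bij (i := fun p _ => p.2)
    · intro p hp
      rw [mem_filter, mem_cellsF hn0] at hp
      have hm' := hTmem p.1 p.2 hp.1
      rw [hp.2] at hm'
      have h3 := (hScrange _ _ hm').2
      rw [av_succ] at h3
      rw [mem_filter, mem_range]
      exact ⟨h3, hm'⟩
    · intro p hp q hq heq
      rw [mem_filter, mem_cellsF hn0] at hp hq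
      have hpq : p.2 = q.2 := heq
      have h1 : p.1 = q.1 := by
        by_contra hne
        have hcell2 : IsCell nu ⇑mu q.1 p.2 := by rw [hpq]; exact hq.1
        have h2 : T q.1 p.2 = i.val + 1 := by rw [hpq]; exact hq.2
        rcases Nat.lt_or_ge p.1 q.1 with h | h
        · have := letTab_col_strict hTtab hmu hnua hp.1 hcell2 h
          have h4 := hp.2
          omega
        · have := letTab_col_strict hTtab hmu hnua hcell2 hp.1 (by omega)
          have h4 := hp.2
          omega
      exact Prod.ext h1 hpq
    · intro c hc
      rw [mem_filter, mem_range] at hc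
      obtain ⟨r, hr, hrw⟩ := hTexists c _ hc.2
      exact ⟨(r, c), by rw [mem_filter, mem_cellsF hn0]; exact ⟨hr, hrw⟩, rfl⟩
  have hoccTb : ∀ i : Fin m,
      ((cellsF ⇑mu ⇑lam N).filter fun p => Tb p.1 p.2 = i.val + 1).card
        = ((range (a i)).filter fun c => (i.val + 1) ∈ colImg Tb ⇑lam ⇑mu N c).card := by
    intro i
    apply Finset.card_bij (i := fun p _ => p.2)
    · intro p hp
      rw [mem_filter, mem_cellsF hm0] at hp
      rw [mem_filter, mem_range]
      exact ⟨(hTbCnt i).2 p.1 p.2 hp.1 hp.2, (memBb p.2 _).2 ⟨p.1, hp.1, hp.2⟩⟩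
    · intro p hp q hq heq
      rw [mem_filter, mem_cellsF hm0] at hp hq
      have hpq : p.2 = q.2 := heq
      have h1 : p.1 = q.1 := by
        by_contra hne
        have hcell2 : IsCell ⇑mu ⇑lam q.1 p.2 := by rw [hpq]; exact hq.1
        have h2 : Tb q.1 p.2 = i.val + 1 := by rw [hpq]; exact hq.2
        have h4 := hp.2
        rcases Nat.lt_or_ge p.1 q.1 with h | h
        · have := barTab_col_strict hTbTab hlam hmu hp.1 hcell2 h
          omega
        · have := barTab_col_strict hTbTab hlam hmu hcell2 hp.1 (by omega)
          omega
      exact Prod.ext h1 hpq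
    · intro c hc
      rw [mem_filter, mem_range] at hc
      obtain ⟨r, hr, hrw⟩ := (memBb c _).1 hc.2
      exact ⟨(r, c), by rw [mem_filter, mem_cellsF hm0]; exact ⟨hr, hrw⟩, rfl⟩
  have hcount : ∀ i : Fin m,
      {p : ℕ × ℕ | IsCell nu ⇑mu p.1 p.2 ∧ T p.1 p.2 = i.val + 1}.ncard = b i := by
    intro i
    rw [occ_set_eq hn0, Set.ncard_coe_finset, hoccT i]
    have hsplitc := Finset.card_filter_add_card_filter_not
      (s := range (a i)) (p := fun c => (i.val + 1) ∈ colImg Tb ⇑lam ⇑mu N c)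
    have hS_eq : (range (a i)).filter (fun c => (i.val + 1) ∈ S c)
        = (range (a i)).filter (fun c => ¬ (i.val + 1) ∈ colImg Tb ⇑lam ⇑mu N c) := by
      apply Finset.filter_congr
      intro c hc
      rw [mem_range] at hc
      constructor
      · exact fun h => ((memS c _).1 h).2
      · intro h
        refine (memS c _).2 ⟨?_, h⟩
        rw [av_succ]
        exact hc
    have hTbcount := (hTbCnt i).1
    rw [occ_set_eq hm0, Set.ncard_coe_finset, hoccTb i] at hTbcount
    rw [hS_eq]
    have hcr := card_range (a i)
    omega
  have hconstraint : ∀ i : Fin m, ∀ r c, IsCell nu ⇑mu r c → T r c = i.val + 1 → c < a i := by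
    intro i r c hcell heq
    have hm' := hTmem r c hcell
    rw [heq] at hm'
    have h3 := (hScrange c _ hm').2
    rw [av_succ] at h3
    exact h3
  have hcompat : Compat m a nu ⇑mu ⇑lam Tb T := by
    intro i c hc
    constructor
    · rintro ⟨r, hcell, heq⟩
      have hm' := hTmem r c hcell
      rw [heq] at hm'
      have hS2 := ((memS c _).1 hm').2
      intro hex
      obtain ⟨r', hcell', heq'⟩ := hex
      exact hS2 ((memBb c _).2 ⟨r', hcell', heq'⟩)
    · intro hnex
      have hmem : (i.val + 1) ∈ S c := by
        refine (memS c _).2 ⟨by rw [av_succ]; exact hc, ?_⟩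
        intro hin
        obtain ⟨r, hr, hrw⟩ := (memBb c _).1 hin
        exact hnex ⟨r, hr, hrw⟩
      obtain ⟨r, hr, hrw⟩ := hTexists c _ hmem
      exact ⟨r, hr, hrw⟩
  refine ⟨T, ⟨⟨hTtab, fun i => ⟨hcount i, hconstraint i⟩⟩, hcompat⟩, ?_⟩
  rintro T' ⟨⟨hT'tab, hT'cnt⟩, hT'compat⟩
  funext r c
  by_cases hcell : IsCell nu ⇑mu r c
  · set k := conjF nu N c - conjF ⇑mu N c with hkdef
    have hkcard : (S c).card = k := by have := cardS c; omega
    have hmemf : ∀ T₀ : ℕ → ℕ → ℕ, IsLetTab m nu ⇑mu T₀ →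
        (∀ i : Fin m, ∀ r' c', IsCell nu ⇑mu r' c' → T₀ r' c' = i.val + 1 → c' < a i) →
        Compat m a nu ⇑mu ⇑lam Tb T₀ →
        ∀ j : Fin k, T₀ (conjF ⇑mu N c + j.val) c ∈ S c := by
      intro T₀ htab hcnt hcompat' j
      have hcellj : IsCell nu ⇑mu (conjF ⇑mu N c + j.val) c :=
        (cellNM _ c).2 ⟨Nat.le_add_right _ _, by have := j.isLt; omega⟩
      have hb' := htab.2.1 _ c hcellj
      have hiw : c < a ⟨T₀ (conjF ⇑mu N c + j.val) c - 1, by omega⟩ :=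
        hcnt ⟨T₀ (conjF ⇑mu N c + j.val) c - 1, by omega⟩ _ c hcellj
          (by show _ = _ - 1 + 1; omega)
      refine (memS c _).2 ⟨by rw [av_eq a hb'.1 hb'.2]; exact hiw, ?_⟩
      intro hin
      obtain ⟨r', h1', h2'⟩ := (memBb c _).1 hin
      have hex : ∃ r'', IsCell nu ⇑mu r'' c ∧
          T₀ r'' c = (⟨T₀ (conjF ⇑mu N c + j.val) c - 1, by omega⟩ : Fin m).val + 1 :=
        ⟨conjF ⇑mu N c + j.val, hcellj, by show _ = _ - 1 + 1; omega⟩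
      exact (hcompat' ⟨T₀ (conjF ⇑mu N c + j.val) c - 1, by omega⟩ c hiw).1 hex
        ⟨r', h1', by show Tb r' c = _ - 1 + 1; omega⟩
    have hsm : ∀ T₀ : ℕ → ℕ → ℕ, IsLetTab m nu ⇑mu T₀ →
        StrictMono (fun j : Fin k => T₀ (conjF ⇑mu N c + j.val) c) := by
      intro T₀ htab j j' hjj
      have hc1 : IsCell nu ⇑mu (conjF ⇑mu N c + j.val) c :=
        (cellNM _ c).2 ⟨Nat.le_add_right _ _, by have := j.isLt; omega⟩
      have hc2 : IsCell nu ⇑mu (conjF ⇑mu N c + j'.val) c :=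
        (cellNM _ c).2 ⟨Nat.le_add_right _ _, by have := j'.isLt; omega⟩
      exact letTab_col_strict htab hmu hnua hc1 hc2 (by have := Fin.lt_iff_val_lt_val.1 hjj; omega)
    have e1 := Finset.orderEmbOfFin_unique hkcard
      (fun j => hmemf T' hT'tab (fun i => (hT'cnt i).2) hT'compat j) (hsm T' hT'tab)
    have e2 := Finset.orderEmbOfFin_unique hkcard
      (fun j => hmemf T hTtab hconstraint hcompat j) (hsm T hTtab)
    have hj : r - conjF ⇑mu N c < k := by
      have h1 := (cellNM r c).1 hcell
      have h2 := cardS c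
      omega
    have he1 := congrFun e1 ⟨r - conjF ⇑mu N c, hj⟩
    have he2 := congrFun e2 ⟨r - conjF ⇑mu N c, hj⟩
    simp only at he1 he2
    have hr' : conjF ⇑mu N c + (r - conjF ⇑mu N c) = r := by
      have := (cellNM r c).1 hcell
      omega
    rw [hr'] at he1 he2
    exact he1.trans he2.symm
  · rw [hT'tab.1 r c hcell, hTzero r c hcell]

end SAux
namespace SAux
open Finset

lemma dir2 {m : ℕ} (a b : Fin m → ℕ) (lam mu : ℕ →₀ ℕ)
    (hlam : Antitone ⇑lam) (hmu : Antitone ⇑mu)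
    (hadom : ∀ k l : Fin m, k ≤ l → a l ≤ a k)
    (hdeg : (∑ i, a i) + lam.sum (fun _ v => v) = (∑ i, b i) + mu.sum (fun _ v => v))
    (nu : ℕ → ℕ) (hnu : IsSortedUnion a ⇑lam nu)
    (T : ℕ → ℕ → ℕ) (hT : T ∈ STabSet m a b nu ⇑mu) :
    ∃! Tb : ℕ → ℕ → ℕ, Tb ∈ SBar m a b ⇑mu ⇑lam ∧ Compat m a nu ⇑mu ⇑lam Tb T := by
  classical
  obtain ⟨hnua, hnuz, hmult⟩ := hnu
  obtain ⟨Nn, hNn⟩ := hnuz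
  obtain ⟨hTtab, hTCnt⟩ := hT
  set N := max (max (lam.support.sup id + 1) (mu.support.sup id + 1)) Nn with hNdef
  have hl0 : ∀ r, N ≤ r → (lam : ℕ → ℕ) r = 0 := fun r hr => finsupp_bound lam r (by omega)
  have hm0 : ∀ r, N ≤ r → (mu : ℕ → ℕ) r = 0 := fun r hr => finsupp_bound mu r (by omega)
  have hn0 : ∀ r, N ≤ r → nu r = 0 := fun r hr => hNn r (by omega)
  set V := nu 0 + (∑ i, a i) + lam 0 + 1 with hVdef
  have hVn : ∀ r ∈ Finset.range N, nu r ≤ V := fun r _ => by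
    have := hnua (Nat.zero_le r); omega
  have hVl : ∀ r ∈ Finset.range N, (lam : ℕ → ℕ) r ≤ V := fun r _ => by
    have := hlam (Nat.zero_le r); omega
  have hVa : ∀ i, a i ≤ V := fun i => by
    have : a i ≤ ∑ j, a j := Finset.single_le_sum (fun j _ => Nat.zero_le _) (Finset.mem_univ i)
    omega
  have cellML : ∀ r c, IsCell ⇑mu ⇑lam r c ↔ conjF ⇑lam N c ≤ r ∧ r < conjF ⇑mu N c :=
    fun r c => cell_iff hm0 hmu hl0 hlam r c
  have cellNM : ∀ r c, IsCell nu ⇑mu r c ↔ conjF ⇑mu N c ≤ r ∧ r < conjF nu N c :=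
    fun r c => cell_iff hn0 hnua hm0 hmu r c
  have hconjnu : ∀ c, conjF nu N c
      = ((univ : Finset (Fin m)).filter fun i => c < a i).card + conjF ⇑lam N c :=
    conj_nu_eq hl0 hn0 hVn hVl hVa hmult
  -- pointwise μ ≤ ν from the counts
  have hsumcells : ∑ r ∈ range N, (nu r - mu r) = ∑ i, b i :=
    cells_card_eq_sum_counts hn0 hTtab.2.1 _ (fun i => (hTCnt i).1)
  have hsumnu : ∑ r ∈ range N, nu r = (∑ i, a i) + ∑ r ∈ range N, (lam : ℕ → ℕ) r :=
    sum_nu_eq hl0 hn0 hVn hVl hVa hmult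
  have hdeg' : (∑ i, a i) + ∑ r ∈ range N, (lam : ℕ → ℕ) r
      = (∑ i, b i) + ∑ r ∈ range N, (mu : ℕ → ℕ) r := by
    rw [← finsupp_sum_range lam hl0, ← finsupp_sum_range mu hm0]; exact hdeg
  have hG2 : ∀ r, (mu : ℕ → ℕ) r ≤ nu r := by
    apply pointwise_le_of_counts hm0
    omega
  have hconj_mn : ∀ c, conjF ⇑mu N c ≤ conjF nu N c :=
    fun c => conjF_mono_fun hm0 hmu hn0 hnua hG2 c
  have hconj_anti_m : ∀ c, conjF ⇑mu N (c + 1) ≤ conjF ⇑mu N c :=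
    fun c => conjF_anti hm0 hmu (by omega)
  have hconj_anti_l : ∀ c, conjF ⇑lam N (c + 1) ≤ conjF ⇑lam N c :=
    fun c => conjF_anti hl0 hlam (by omega)
  have hconj_anti_n : ∀ c, conjF nu N (c + 1) ≤ conjF nu N c :=
    fun c => conjF_anti hn0 hnua (by omega)
  -- the column letters of T
  have hTne : ∀ c r r', r ∈ Finset.Ico (conjF ⇑mu N c) (conjF nu N c) →
      r' ∈ Finset.Ico (conjF ⇑mu N c) (conjF nu N c) → r < r' → T r c ≠ T r' c := by
    intro c r r' hr hr' hlt
    rw [mem_Ico] at hr hr'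
    exact (letTab_col_strict hTtab hmu hnua ((cellNM r c).2 hr) ((cellNM r' c).2 hr') hlt).ne
  have memLT : ∀ c w, w ∈ colImg T ⇑mu nu N c ↔ ∃ r, IsCell nu ⇑mu r c ∧ T r c = w := by
    intro c w
    rw [mem_colImg]
    constructor
    · rintro ⟨r, hr, rfl⟩; exact ⟨r, (cellNM r c).2 hr, rfl⟩
    · rintro ⟨r, hr, rfl⟩; exact ⟨r, (cellNM r c).1 hr, rfl⟩
  have hLTA : ∀ c w, w ∈ colImg T ⇑mu nu N c → c < av m a w := by
    intro c w hw
    obtain ⟨r, hcell, rfl⟩ := (memLT c w).1 hw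
    have hb := hTtab.2.1 r c hcell
    have hi : c < a ⟨T r c - 1, by omega⟩ :=
      (hTCnt ⟨T r c - 1, by omega⟩).2 r c hcell (by show T r c = T r c - 1 + 1; omega)
    rw [av_eq a hb.1 hb.2]
    exact hi
  have cardLT : ∀ c, (colImg T ⇑mu nu N c).card + conjF ⇑mu N c = conjF nu N c :=
    fun c => colImg_card (hconj_mn c) (hTne c)
  -- dominance: the letters with long rows form an initial segment
  have havmono : ∀ c w w', 1 ≤ w' → w' ≤ w → c < av m a w → c < av m a w' := by
    intro c w w' h1 h2 h3
    have hb := av_pos_bounds a h3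
    have hle : av m a w ≤ av m a w' := by
      rw [av_eq a hb.1 hb.2, av_eq a h1 (le_trans h2 hb.2)]
      exact hadom ⟨w' - 1, by omega⟩ ⟨w - 1, by omega⟩ (by
        rw [Fin.mk_le_mk]; omega)
    omega
  have memA_iff : ∀ c w, w ∈ (Finset.Icc 1 m).filter (fun w => c < av m a w)
      ↔ 1 ≤ w ∧ w ≤ ((Finset.Icc 1 m).filter (fun w => c < av m a w)).card := by
    intro c
    apply lower_Icc
    · intro w hw
      exact (mem_Icc.1 (mem_filter.1 hw).1).1
    · intro w hw w' h1 h2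
      rw [mem_filter, mem_Icc] at hw ⊢
      exact ⟨⟨h1, le_trans h2 hw.1.2⟩, havmono c w w' h1 h2 hw.2⟩
  -- λ' ≤ μ'
  have hLTsub : ∀ c, colImg T ⇑mu nu N c ⊆ (Finset.Icc 1 m).filter fun w => c < av m a w := by
    intro c w hw
    have h1 := hLTA c w hw
    have h2 := av_pos_bounds a h1
    rw [mem_filter, mem_Icc]
    exact ⟨⟨h2.1, h2.2⟩, h1⟩
  have hconj_lm : ∀ c, conjF ⇑lam N c ≤ conjF ⇑mu N c := by
    intro c
    have h1 := cardLT c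
    have h2 := card_le_card (hLTsub c)
    have h3 := hconjnu c
    have h4 := cardA_bridge a c
    omega
  -- the column letter sets for Tb
  set Sb : ℕ → Finset ℕ := fun c => SFgen m a (colImg T ⇑mu nu N c) c with hSbdef
  have memSb : ∀ c w, w ∈ Sb c ↔ c < av m a w ∧ w ∉ colImg T ⇑mu nu N c := by
    intro c w; rw [hSbdef]; exact mem_SFgen
  have cardSb : ∀ c, (Sb c).card + conjF ⇑lam N c = conjF ⇑mu N c := by
    intro c
    have hsd : Sb c = ((Finset.Icc 1 m).filter fun w => c < av m a w) \ colImg T ⇑mu nu N c := by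
      ext w
      rw [memSb, mem_sdiff, mem_filter, mem_Icc]
      constructor
      · intro h
        have h2 := av_pos_bounds a h.1
        exact ⟨⟨⟨h2.1, h2.2⟩, h.1⟩, h.2⟩
      · intro h; exact ⟨h.1.2, h.2⟩
    have h1 : (((Finset.Icc 1 m).filter fun w => c < av m a w) \ colImg T ⇑mu nu N c).card
        = (((Finset.Icc 1 m).filter fun w => c < av m a w)).card
          - (colImg T ⇑mu nu N c).card := card_sdiff_of_subset (hLTsub c)
    have h2 := card_le_card (hLTsub c)
    have h3 := cardLT c
    have h4 := hconjnu c
    have h5 := cardA_bridge a c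
    rw [hsd, h1]
    omega
  -- the tableau Tb
  set Tb : ℕ → ℕ → ℕ := fun r c =>
    if IsCell ⇑mu ⇑lam r c then ((Sb c).sort (· ≤ ·)).getD (conjF ⇑mu N c - 1 - r) 0
    else 0 with hTbdef
  have hTbcell : ∀ r c, IsCell ⇑mu ⇑lam r c →
      Tb r c = ((Sb c).sort (· ≤ ·)).getD (conjF ⇑mu N c - 1 - r) 0 := by
    intro r c h; rw [hTbdef]; simp only [if_pos h]
  have hTbzero : ∀ r c, ¬ IsCell ⇑mu ⇑lam r c → Tb r c = 0 := by
    intro r c h; rw [hTbdef]; simp only [if_neg h]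
  have hidx : ∀ r c, IsCell ⇑mu ⇑lam r c → conjF ⇑mu N c - 1 - r < (Sb c).card := by
    intro r c h
    have h1 := (cellML r c).1 h
    have h2 := cardSb c
    omega
  have hTbmem : ∀ r c, IsCell ⇑mu ⇑lam r c → Tb r c ∈ Sb c := by
    intro r c h; rw [hTbcell r c h]; exact sort_getD_mem (hidx r c h)
  have hTbexists : ∀ c w, w ∈ Sb c → ∃ r, IsCell ⇑mu ⇑lam r c ∧ Tb r c = w := by
    intro c w hw
    obtain ⟨j, hj, hjw⟩ := sort_exists_getD hw
    have h2 := cardSb c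
    have hcell : IsCell ⇑mu ⇑lam (conjF ⇑mu N c - 1 - j) c :=
      (cellML _ c).2 ⟨by omega, by omega⟩
    refine ⟨conjF ⇑mu N c - 1 - j, hcell, ?_⟩
    rw [hTbcell _ _ hcell]
    have he : conjF ⇑mu N c - 1 - (conjF ⇑mu N c - 1 - j) = j := by omega
    rw [he, hjw]
  have hSbrange : ∀ c w, w ∈ Sb c → (1 ≤ w ∧ w ≤ m) ∧ c < av m a w := by
    intro c w hw
    have h1 := ((memSb c w).1 hw).1
    exact ⟨av_pos_bounds a h1, h1⟩
  -- column strict decrease for Tb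
  have hcol : ∀ r c, IsCell ⇑mu ⇑lam r c → IsCell ⇑mu ⇑lam (r + 1) c →
      Tb (r + 1) c < Tb r c := by
    intro r c h1 h2
    rw [hTbcell r c h1, hTbcell (r + 1) c h2]
    have hi1 := (cellML (r + 1) c).1 h2
    exact sort_getD_lt (by omega) (by have := hidx r c h1; omega)
  -- Acard facts
  have hAcard_anti : ∀ c, (((Finset.Icc 1 m).filter fun w => (c + 1) < av m a w)).card
      ≤ (((Finset.Icc 1 m).filter fun w => c < av m a w)).card := by
    intro c
    apply card_le_card
    intro w hw
    rw [mem_filter] at hw ⊢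
    exact ⟨hw.1, by omega⟩
  have hAfcard : ∀ c v, ((((Finset.Icc 1 m).filter fun w => c < av m a w)).filter (· ≤ v)).card
      = min (((Finset.Icc 1 m).filter fun w => c < av m a w)).card v := by
    intro c v
    have he : (((Finset.Icc 1 m).filter fun w => c < av m a w)).filter (· ≤ v)
        = Finset.Icc 1 (min (((Finset.Icc 1 m).filter fun w => c < av m a w)).card v) := by
      ext w
      rw [mem_filter, memA_iff, mem_Icc]
      omega
    rw [he, Nat.card_Icc]
    omega
  -- the key counting inequality, using dominance
  have hkey : ∀ c v, ((Sb c).filter (· ≤ v)).card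
      ≤ ((Sb (c + 1)).filter (· ≤ v)).card + (conjF ⇑mu N c - conjF ⇑mu N (c + 1)) := by
    intro c v
    have hsplit : ∀ c', ((Sb c').filter (· ≤ v)).card
        + ((colImg T ⇑mu nu N c').filter (· ≤ v)).card
        = (((Finset.Icc 1 m).filter fun w => c' < av m a w).filter (· ≤ v)).card := by
      intro c'
      rw [← card_union_of_disjoint (by
        rw [Finset.disjoint_left]
        intro w hw hw'
        exact ((memSb c' w).1 (mem_filter.1 hw).1).2 (mem_filter.1 hw').1)]
      congr 1
      ext w
      constructor
      · intro h
        rcases mem_union.1 h with h' | h'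
        · have h1 := (mem_filter.1 h').1
          have h4 := (mem_filter.1 h').2
          have h3 := ((memSb c' w).1 h1).1
          have h2 := av_pos_bounds a h3
          exact mem_filter.2 ⟨mem_filter.2 ⟨mem_Icc.2 ⟨h2.1, h2.2⟩, h3⟩, h4⟩
        · have h1 := (mem_filter.1 h').1
          have h4 := (mem_filter.1 h').2
          have h3 := hLTA c' w h1
          have h2 := av_pos_bounds a h3
          exact mem_filter.2 ⟨mem_filter.2 ⟨mem_Icc.2 ⟨h2.1, h2.2⟩, h3⟩, h4⟩
      · intro h
        have h1 := (mem_filter.1 h).1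
        have h4 := (mem_filter.1 h).2
        have h3 := (mem_filter.1 h1).2
        by_cases hc : w ∈ colImg T ⇑mu nu N c'
        · exact mem_union_right _ (mem_filter.2 ⟨hc, h4⟩)
        · exact mem_union_left _ (mem_filter.2 ⟨(memSb c' w).2 ⟨h3, hc⟩, h4⟩)
    have hinjcard : ((colImg T ⇑mu nu N (c + 1)).filter (· ≤ v)).card + conjF ⇑mu N (c + 1)
        ≤ ((colImg T ⇑mu nu N c).filter (· ≤ v)).card + conjF ⇑mu N c := by
      rw [colImg_filter_card (hTne c), colImg_filter_card (hTne (c + 1))]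
      have hsub : (Finset.Ico (conjF ⇑mu N (c + 1)) (conjF nu N (c + 1))).filter
            (fun r => T r (c + 1) ≤ v)
          ⊆ ((Finset.Ico (conjF ⇑mu N c) (conjF nu N c)).filter (fun r => T r c ≤ v))
            ∪ Finset.Ico (conjF ⇑mu N (c + 1)) (conjF ⇑mu N c) := by
        intro r hr
        rw [mem_filter, mem_Ico] at hr
        rcases Nat.lt_or_ge r (conjF ⇑mu N c) with h | h
        · exact mem_union_right _ (mem_Ico.2 ⟨hr.1.1, h⟩)
        · apply mem_union_left
          rw [mem_filter, mem_Ico]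
          have hc2 : IsCell nu ⇑mu r (c + 1) := (cellNM r (c + 1)).2 ⟨hr.1.1, hr.1.2⟩
          have hc1 : IsCell nu ⇑mu r c :=
            (cellNM r c).2 ⟨h, lt_of_lt_of_le hr.1.2 (hconj_anti_n c)⟩
          have hrow := letTab_row_mono hTtab hc1 hc2 (by omega)
          exact ⟨⟨h, lt_of_lt_of_le hr.1.2 (hconj_anti_n c)⟩, by omega⟩
      have h1 := card_le_card hsub
      have h2 := Finset.card_union_le
        ((Finset.Ico (conjF ⇑mu N c) (conjF nu N c)).filter (fun r => T r c ≤ v))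
        (Finset.Ico (conjF ⇑mu N (c + 1)) (conjF ⇑mu N c))
      have h3 : (Finset.Ico (conjF ⇑mu N (c + 1)) (conjF ⇑mu N c)).card
          = conjF ⇑mu N c - conjF ⇑mu N (c + 1) := Nat.card_Ico _ _
      have h4 := hconj_anti_m c
      omega
    have e1 := hsplit c
    have e2 := hsplit (c + 1)
    have hAf1 := hAfcard c v
    have hAf2 := hAfcard (c + 1) v
    have hAanti := hAcard_anti c
    rcases le_total v ((((Finset.Icc 1 m).filter fun w => (c + 1) < av m a w)).card) with hv | hv
    · omega
    · have hfull : (Sb (c + 1)).filter (· ≤ v) = Sb (c + 1) := by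
        apply Finset.filter_true_of_mem
        intro w hw
        have h1 := ((memSb (c + 1) w).1 hw).1
        have h2 := av_pos_bounds a h1
        have h3 : w ∈ (Finset.Icc 1 m).filter (fun w => (c + 1) < av m a w) :=
          mem_filter.2 ⟨mem_Icc.2 ⟨h2.1, h2.2⟩, h1⟩
        rw [memA_iff] at h3
        omega
      have hc1 := cardSb c
      have hc2 := cardSb (c + 1)
      have hc3 := hconj_anti_l c
      have hc4 := hconj_anti_m c
      have hc5 : ((Sb c).filter (· ≤ v)).card ≤ (Sb c).card := card_filter_le _ _
      rw [hfull]
      omega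
  -- row weak decrease for Tb
  have hrowb : ∀ r c, IsCell ⇑mu ⇑lam r c → IsCell ⇑mu ⇑lam r (c + 1) →
      Tb r (c + 1) ≤ Tb r c := by
    intro r c h1 h2
    rw [hTbcell r c h1, hTbcell r (c + 1) h2]
    have hi1 := (cellML r c).1 h1
    have hi2 := (cellML r (c + 1)).1 h2
    have hma := hconj_anti_m c
    have hd : conjF ⇑mu N c - 1 - r
        = (conjF ⇑mu N (c + 1) - 1 - r) + (conjF ⇑mu N c - conjF ⇑mu N (c + 1)) := by omega
    rw [hd]
    exact sorted_le_of_counts _ _ _ _ (by have := hidx r (c + 1) h2; omega)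
      (by rw [← hd]; have := hidx r c h1; omega) (hkey c)
  have hTbtab : IsBarTab m ⇑mu ⇑lam Tb :=
    ⟨hTbzero, fun r c h => ⟨(hSbrange _ _ (hTbmem r c h)).1.1, (hSbrange _ _ (hTbmem r c h)).1.2⟩,
      hrowb, fun r c h1 h2 => hcol r c h1 h2⟩
  -- occurrence counts
  have hoccTb : ∀ i : Fin m,
      ((cellsF ⇑mu ⇑lam N).filter fun p => Tb p.1 p.2 = i.val + 1).card
        = ((range (a i)).filter fun c => (i.val + 1) ∈ Sb c).card := by
    intro i
    apply Finset.card_bij (i := fun p _ => p.2)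
    · intro p hp
      rw [mem_filter, mem_cellsF hm0] at hp
      have hm' := hTbmem p.1 p.2 hp.1
      rw [hp.2] at hm'
      have h3 := (hSbrange _ _ hm').2
      rw [av_succ] at h3
      rw [mem_filter, mem_range]
      exact ⟨h3, hm'⟩
    · intro p hp q hq heq
      rw [mem_filter, mem_cellsF hm0] at hp hq
      have hpq : p.2 = q.2 := heq
      have h1 : p.1 = q.1 := by
        by_contra hne
        have hcell2 : IsCell ⇑mu ⇑lam q.1 p.2 := by rw [hpq]; exact hq.1
        have h2 : Tb q.1 p.2 = i.val + 1 := by rw [hpq]; exact hq.2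
        have h4 := hp.2
        rcases Nat.lt_or_ge p.1 q.1 with h | h
        · have := barTab_col_strict hTbtab hlam hmu hp.1 hcell2 h
          omega
        · have := barTab_col_strict hTbtab hlam hmu hcell2 hp.1 (by omega)
          omega
      exact Prod.ext h1 hpq
    · intro c hc
      rw [mem_filter, mem_range] at hc
      obtain ⟨r, hr, hrw⟩ := hTbexists c _ hc.2
      exact ⟨(r, c), by rw [mem_filter, mem_cellsF hm0]; exact ⟨hr, hrw⟩, rfl⟩
  have hoccT : ∀ i : Fin m,
      ((cellsF nu ⇑mu N).filter fun p => T p.1 p.2 = i.val + 1).card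
        = ((range (a i)).filter fun c => (i.val + 1) ∈ colImg T ⇑mu nu N c).card := by
    intro i
    apply Finset.card_bij (i := fun p _ => p.2)
    · intro p hp
      rw [mem_filter, mem_cellsF hn0] at hp
      rw [mem_filter, mem_range]
      exact ⟨(hTCnt i).2 p.1 p.2 hp.1 hp.2, (memLT p.2 _).2 ⟨p.1, hp.1, hp.2⟩⟩
    · intro p hp q hq heq
      rw [mem_filter, mem_cellsF hn0] at hp hq
      have hpq : p.2 = q.2 := heq
      have h1 : p.1 = q.1 := by
        by_contra hne
        have hcell2 : IsCell nu ⇑mu q.1 p.2 := by rw [hpq]; exact hq.1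
        have h2 : T q.1 p.2 = i.val + 1 := by rw [hpq]; exact hq.2
        have h4 := hp.2
        rcases Nat.lt_or_ge p.1 q.1 with h | h
        · have := letTab_col_strict hTtab hmu hnua hp.1 hcell2 h
          omega
        · have := letTab_col_strict hTtab hmu hnua hcell2 hp.1 (by omega)
          omega
      exact Prod.ext h1 hpq
    · intro c hc
      rw [mem_filter, mem_range] at hc
      obtain ⟨r, hr, hrw⟩ := (memLT c _).1 hc.2
      exact ⟨(r, c), by rw [mem_filter, mem_cellsF hn0]; exact ⟨hr, hrw⟩, rfl⟩
  have hcount : ∀ i : Fin m,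
      {p : ℕ × ℕ | IsCell ⇑mu ⇑lam p.1 p.2 ∧ Tb p.1 p.2 = i.val + 1}.ncard + b i = a i := by
    intro i
    rw [occ_set_eq hm0, Set.ncard_coe_finset, hoccTb i]
    have hsplitc := Finset.card_filter_add_card_filter_not
      (s := range (a i)) (p := fun c => (i.val + 1) ∈ colImg T ⇑mu nu N c)
    have hS_eq : (range (a i)).filter (fun c => (i.val + 1) ∈ Sb c)
        = (range (a i)).filter (fun c => ¬ (i.val + 1) ∈ colImg T ⇑mu nu N c) := by
      apply Finset.filter_congr
      intro c hc
      rw [mem_range] at hc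
      constructor
      · exact fun h => ((memSb c _).1 h).2
      · intro h
        refine (memSb c _).2 ⟨?_, h⟩
        rw [av_succ]
        exact hc
    have hTcount := (hTCnt i).1
    rw [occ_set_eq hn0, Set.ncard_coe_finset, hoccT i] at hTcount
    rw [hS_eq]
    have hcr := card_range (a i)
    omega
  have hconstraint : ∀ i : Fin m, ∀ r c, IsCell ⇑mu ⇑lam r c → Tb r c = i.val + 1 → c < a i := by
    intro i r c hcell heq
    have hm' := hTbmem r c hcell
    rw [heq] at hm'
    have h3 := (hSbrange c _ hm').2
    rw [av_succ] at h3
    exact h3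
  have hcompat : Compat m a nu ⇑mu ⇑lam Tb T := by
    intro i c hc
    constructor
    · rintro ⟨r, hcell, heq⟩
      have hin : (i.val + 1) ∈ colImg T ⇑mu nu N c := (memLT c _).2 ⟨r, hcell, heq⟩
      intro hex
      obtain ⟨r', hcell', heq'⟩ := hex
      have hm' := hTbmem r' c hcell'
      rw [heq'] at hm'
      exact ((memSb c _).1 hm').2 hin
    · intro hnex
      by_contra hnex2
      have hmem : (i.val + 1) ∈ Sb c := by
        refine (memSb c _).2 ⟨by rw [av_succ]; exact hc, ?_⟩
        intro hin
        exact hnex2 ((memLT c _).1 hin)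
      obtain ⟨r, hr, hrw⟩ := hTbexists c _ hmem
      exact hnex ⟨r, hr, hrw⟩
  refine ⟨Tb, ⟨⟨hTbtab, fun i => ⟨hcount i, hconstraint i⟩⟩, hcompat⟩, ?_⟩
  rintro Tb' ⟨⟨hTb'tab, hTb'cnt⟩, hTb'compat⟩
  funext r c
  by_cases hcell : IsCell ⇑mu ⇑lam r c
  · set k := conjF ⇑mu N c - conjF ⇑lam N c with hkdef
    have hkcard : (Sb c).card = k := by have := cardSb c; omega
    have hrowmem : ∀ j : Fin k, IsCell ⇑mu ⇑lam (conjF ⇑mu N c - 1 - j.val) c := by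
      intro j
      have hj := j.isLt
      have h1 := (cellML r c).1 hcell
      exact (cellML _ c).2 ⟨by omega, by omega⟩
    have hmemf : ∀ T₀ : ℕ → ℕ → ℕ, IsBarTab m ⇑mu ⇑lam T₀ →
        (∀ i : Fin m, ∀ r' c', IsCell ⇑mu ⇑lam r' c' → T₀ r' c' = i.val + 1 → c' < a i) →
        Compat m a nu ⇑mu ⇑lam T₀ T →
        ∀ j : Fin k, T₀ (conjF ⇑mu N c - 1 - j.val) c ∈ Sb c := by
      intro T₀ htab hcnt hcompat' j
      have hcellj := hrowmem j
      have hb' := htab.2.1 _ c hcellj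
      have hiw : c < a ⟨T₀ (conjF ⇑mu N c - 1 - j.val) c - 1, by omega⟩ :=
        hcnt ⟨T₀ (conjF ⇑mu N c - 1 - j.val) c - 1, by omega⟩ _ c hcellj
          (by show _ = _ - 1 + 1; omega)
      refine (memSb c _).2 ⟨by rw [av_eq a hb'.1 hb'.2]; exact hiw, ?_⟩
      intro hin
      obtain ⟨r', h1', h2'⟩ := (memLT c _).1 hin
      have hex : ∃ r'', IsCell nu ⇑mu r'' c ∧
          T r'' c = (⟨T₀ (conjF ⇑mu N c - 1 - j.val) c - 1, by omega⟩ : Fin m).val + 1 :=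
        ⟨r', h1', by show T r' c = _ - 1 + 1; omega⟩
      exact (hcompat' ⟨T₀ (conjF ⇑mu N c - 1 - j.val) c - 1, by omega⟩ c hiw).1 hex
        ⟨conjF ⇑mu N c - 1 - j.val, hcellj, by show _ = _ - 1 + 1; omega⟩
    have hsm : ∀ T₀ : ℕ → ℕ → ℕ, IsBarTab m ⇑mu ⇑lam T₀ →
        StrictMono (fun j : Fin k => T₀ (conjF ⇑mu N c - 1 - j.val) c) := by
      intro T₀ htab j j' hjj
      have hc1 := hrowmem j
      have hc2 := hrowmem j'
      have hj' := j'.isLt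
      have hjlt : j.val < j'.val := Fin.lt_iff_val_lt_val.1 hjj
      have h1 := (cellML r c).1 hcell
      exact barTab_col_strict htab hlam hmu hc2 hc1 (by omega)
    have e1 := Finset.orderEmbOfFin_unique hkcard
      (fun j => hmemf Tb' hTb'tab (fun i => (hTb'cnt i).2) hTb'compat j) (hsm Tb' hTb'tab)
    have e2 := Finset.orderEmbOfFin_unique hkcard
      (fun j => hmemf Tb hTbtab hconstraint hcompat j) (hsm Tb hTbtab)
    have h1 := (cellML r c).1 hcell
    have hj : conjF ⇑mu N c - 1 - r < k := by omega
    have he1 := congrFun e1 ⟨conjF ⇑mu N c - 1 - r, hj⟩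
    have he2 := congrFun e2 ⟨conjF ⇑mu N c - 1 - r, hj⟩
    simp only at he1 he2
    have hr' : conjF ⇑mu N c - 1 - (conjF ⇑mu N c - 1 - r) = r := by omega
    rw [hr'] at he1 he2
    exact he1.trans he2.symm
  · rw [hTb'tab.1 r c hcell, hTbzero r c hcell]

end SAux

theorem stmt9 {m : ℕ} (a b : Fin m → ℕ) (lam mu : ℕ →₀ ℕ)
    (hlam : Antitone ⇑lam) (hmu : Antitone ⇑mu)
    (hadom : ∀ k l : Fin m, k ≤ l → a l ≤ a k)
    (hdeg : (∑ i, a i) + lam.sum (fun _ v => v) = (∑ i, b i) + mu.sum (fun _ v => v))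
    (nu : ℕ → ℕ) (hnu : IsSortedUnion a ⇑lam nu) :
    (∀ Tb ∈ SBar m a b ⇑mu ⇑lam,
      ∃! T : ℕ → ℕ → ℕ, T ∈ STabSet m a b nu ⇑mu ∧ Compat m a nu ⇑mu ⇑lam Tb T) ∧
    (∀ T ∈ STabSet m a b nu ⇑mu,
      ∃! Tb : ℕ → ℕ → ℕ, Tb ∈ SBar m a b ⇑mu ⇑lam ∧ Compat m a nu ⇑mu ⇑lam Tb T) := by
  constructor
  · intro Tb hTb
    exact SAux.dir1 a b lam mu hlam hmu hdeg nu hnu Tb hTb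
  · intro T hT
    exact SAux.dir2 a b lam mu hlam hmu hadom hdeg nu hnu T hT
end

section
/- If a_i < a_{i+1} then the coefficients D_{ΛΩ}(t) of the dual m-symmetric Schur functions satisfy the recursion: D_{ΛΩ} = t^{-1} D_{s_iΛ, s_iΩ} if b_i > b_{i+1}; D_{ΛΩ} = D_{s_iΛ, s_iΩ} + (1 − t^{-1}) D_{s_iΛ, Ω} if b_i < b_{i+1}; and D_{ΛΩ} = D_{s_iΛ, Ω} if b_i = b_{i+1}. -/
open Finsupp

/-- An `m`-partition `Λ = (a; λ)`. -/
abbrev MPart (m : ℕ) := (Fin m → ℕ) × {l : ℕ →₀ ℕ // Antitone ⇑l}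

/-- `s_i Λ`: exchange the non-symmetric entries `a_i` and `a_{i+1}`. -/
def swapM {m : ℕ} (i : ℕ) (h : i + 1 < m) (Λ : MPart m) : MPart m :=
  (Λ.1 ∘ Equiv.swap ⟨i, Nat.lt_of_succ_lt h⟩ ⟨i + 1, h⟩, Λ.2)

lemma swapM_swapM {m : ℕ} (i : ℕ) (h : i + 1 < m) (Ω : MPart m) :
    swapM i h (swapM i h Ω) = Ω := by
  refine Prod.ext ?_ rfl
  funext x
  simp [swapM, Equiv.swap_apply_self]

lemma swapM_fst_left {m : ℕ} (i : ℕ) (h : i + 1 < m) (Ω : MPart m) :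
    (swapM i h Ω).1 ⟨i, Nat.lt_of_succ_lt h⟩ = Ω.1 ⟨i + 1, h⟩ := by
  simp [swapM, Equiv.swap_apply_left]

lemma swapM_fst_right {m : ℕ} (i : ℕ) (h : i + 1 < m) (Ω : MPart m) :
    (swapM i h Ω).1 ⟨i + 1, h⟩ = Ω.1 ⟨i, Nat.lt_of_succ_lt h⟩ := by
  simp [swapM, Equiv.swap_apply_right]

lemma swapM_eq_iff {m : ℕ} (i : ℕ) (h : i + 1 < m) (Ψ Ω : MPart m) :
    swapM i h Ψ = Ω ↔ Ψ = swapM i h Ω := by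
  constructor <;> rintro rfl <;> rw [swapM_swapM]

lemma swapM_eq_self {m : ℕ} (i : ℕ) (h : i + 1 < m) (Ω : MPart m)
    (heq : Ω.1 ⟨i, Nat.lt_of_succ_lt h⟩ = Ω.1 ⟨i + 1, h⟩) : swapM i h Ω = Ω := by
  refine Prod.ext ?_ rfl
  funext x
  simp only [swapM, Function.comp_apply, Equiv.swap_apply_def]
  split_ifs with h1 h2 <;> simp_all

lemma key {F : Type*} [Field F] {m : ℕ} (t : F)
    (Tstar : ℕ → (MPart m →₀ F) →ₗ[F] (MPart m →₀ F))
    (hTstar : ∀ (i : ℕ) (h : i + 1 < m) (Ω : MPart m),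
      Tstar i (single Ω 1) =
        if Ω.1 ⟨i + 1, h⟩ < Ω.1 ⟨i, Nat.lt_of_succ_lt h⟩ then
          t • single (swapM i h Ω) 1
        else if Ω.1 ⟨i, Nat.lt_of_succ_lt h⟩ < Ω.1 ⟨i + 1, h⟩ then
          (t - 1) • single Ω 1 + single (swapM i h Ω) 1
        else t • single Ω 1)
    (i : ℕ) (h : i + 1 < m) (Ω : MPart m) (f : MPart m →₀ F) :
    (Tstar i f) Ω =
      if Ω.1 ⟨i + 1, h⟩ < Ω.1 ⟨i, Nat.lt_of_succ_lt h⟩ then f (swapM i h Ω)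
      else if Ω.1 ⟨i, Nat.lt_of_succ_lt h⟩ < Ω.1 ⟨i + 1, h⟩ then
        (t - 1) * f Ω + t * f (swapM i h Ω)
      else t * f Ω := by
  induction f using Finsupp.induction_linear with
  | zero => split_ifs <;> simp
  | add f g hf hg =>
      rw [map_add, Finsupp.add_apply, hf, hg]
      split_ifs <;> simp [Finsupp.add_apply] <;> ring
  | single Ψ c =>
      have hc : (single Ψ c : MPart m →₀ F) = c • single Ψ 1 := by
        rw [Finsupp.smul_single, smul_eq_mul, mul_one]
      rw [hc, map_smul, hTstar i h Ψ]
      by_cases hPO : Ψ = Ω <;> by_cases hPS : Ψ = swapM i h Ω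
      all_goals {
        first
        | (have e1Ω : (single Ψ (1:F)) Ω = 1 := by rw [hPO]; exact Finsupp.single_eq_same)
        | (have e1Ω : (single Ψ (1:F)) Ω = 0 := Finsupp.single_eq_of_ne (Ne.symm hPO))
        first
        | (have e1X : (single Ψ (1:F)) (swapM i h Ω) = 1 := by
            rw [hPS]; exact Finsupp.single_eq_same)
        | (have e1X : (single Ψ (1:F)) (swapM i h Ω) = 0 := Finsupp.single_eq_of_ne (Ne.symm hPS))
        first
        | (have e1S : (single (swapM i h Ψ) (1:F)) Ω = 1 := by
            rw [(swapM_eq_iff i h Ψ Ω).mpr hPS]; exact Finsupp.single_eq_same)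
        | (have e1S : (single (swapM i h Ψ) (1:F)) Ω = 0 :=
            Finsupp.single_eq_of_ne (by rw [Ne, eq_comm, swapM_eq_iff]; exact hPS))
        try (have b1 : Ψ.1 ⟨i, Nat.lt_of_succ_lt h⟩ = Ω.1 ⟨i, Nat.lt_of_succ_lt h⟩ := by
              rw [hPO])
        try (have b2 : Ψ.1 ⟨i + 1, h⟩ = Ω.1 ⟨i + 1, h⟩ := by rw [hPO])
        try (have b3 : Ψ.1 ⟨i, Nat.lt_of_succ_lt h⟩ = Ω.1 ⟨i + 1, h⟩ := by
              rw [hPS, swapM_fst_left])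
        try (have b4 : Ψ.1 ⟨i + 1, h⟩ = Ω.1 ⟨i, Nat.lt_of_succ_lt h⟩ := by
              rw [hPS, swapM_fst_right])
        split_ifs
        all_goals simp only [Finsupp.smul_apply, Finsupp.add_apply, smul_eq_mul, e1X, e1Ω, e1S]
        all_goals try ring
        all_goals exfalso
        all_goals omega
      }

/- STATEMENT 18: If a_i < a_{i+1}, the coefficients D_{ΛΩ}(t), defined by
s*_Λ = Σ_Ω D_{ΛΩ}(t) k_Ω with s*_Λ = t⁻¹ T_i^* s*_{s_iΛ} (when a_i < a_{i+1})
and T_i^* acting on the k-basis as prescribed, satisfy the recursion: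
D_{ΛΩ} = t⁻¹ D_{s_iΛ,s_iΩ} if b_i > b_{i+1};
D_{ΛΩ} = D_{s_iΛ,s_iΩ} + (1 − t⁻¹) D_{s_iΛ,Ω} if b_i < b_{i+1};
D_{ΛΩ} = D_{s_iΛ,Ω} if b_i = b_{i+1}.
Here R_m is modeled in k-coordinates (the free module on m-partitions), so that
D_{ΛΩ} is the Ω-coordinate of s*_Λ. -/
theorem stmt18 {F : Type*} [Field F] {m : ℕ} (t : F) (ht : t ≠ 0)
    (Tstar : ℕ → (MPart m →₀ F) →ₗ[F] (MPart m →₀ F))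
    (hTstar : ∀ (i : ℕ) (h : i + 1 < m) (Ω : MPart m),
      Tstar i (single Ω 1) =
        if Ω.1 ⟨i + 1, h⟩ < Ω.1 ⟨i, Nat.lt_of_succ_lt h⟩ then
          t • single (swapM i h Ω) 1
        else if Ω.1 ⟨i, Nat.lt_of_succ_lt h⟩ < Ω.1 ⟨i + 1, h⟩ then
          (t - 1) • single Ω 1 + single (swapM i h Ω) 1
        else t • single Ω 1)
    (sstar : MPart m → (MPart m →₀ F))
    (hrec : ∀ (Λ : MPart m) (i : ℕ) (h : i + 1 < m),
      Λ.1 ⟨i, Nat.lt_of_succ_lt h⟩ < Λ.1 ⟨i + 1, h⟩ →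
      sstar Λ = t⁻¹ • Tstar i (sstar (swapM i h Λ)))
    (Λ Ω : MPart m) (i : ℕ) (h : i + 1 < m)
    (ha : Λ.1 ⟨i, Nat.lt_of_succ_lt h⟩ < Λ.1 ⟨i + 1, h⟩) :
    (Ω.1 ⟨i + 1, h⟩ < Ω.1 ⟨i, Nat.lt_of_succ_lt h⟩ →
      sstar Λ Ω = t⁻¹ * sstar (swapM i h Λ) (swapM i h Ω)) ∧
    (Ω.1 ⟨i, Nat.lt_of_succ_lt h⟩ < Ω.1 ⟨i + 1, h⟩ →
      sstar Λ Ω = sstar (swapM i h Λ) (swapM i h Ω)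
        + (1 - t⁻¹) * sstar (swapM i h Λ) Ω) ∧
    (Ω.1 ⟨i, Nat.lt_of_succ_lt h⟩ = Ω.1 ⟨i + 1, h⟩ →
      sstar Λ Ω = sstar (swapM i h Λ) Ω) := by
  have hval : sstar Λ Ω = t⁻¹ * (Tstar i (sstar (swapM i h Λ))) Ω := by
    rw [hrec Λ i h ha, Finsupp.smul_apply, smul_eq_mul]
  rw [key t Tstar hTstar i h Ω] at hval
  refine ⟨fun h1 => ?_, fun h2 => ?_, fun h3 => ?_⟩
  · rw [hval, if_pos h1]
  · rw [hval, if_neg (by omega), if_pos h2]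
    field_simp
    ring
  · rw [hval, if_neg (by omega), if_neg (by omega)]
    field_simp
end
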